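/- arXiv:2404.06293 — 9 statements merged into one kernel-verified Lean document; each statement's English description precedes it below -/
import Mathlib

section
/- Let n ≥ 1, let U be a random variable uniformly distributed on [0,1], and for each i ∈ {1,…,n} define V_i = 2^i · 1[U ≥ 1 − 2^{−i}]. Then (a) E[max_{i∈[n]} V_i] = (n+1)/2, and (b) for every stopping time T with values in {1,…,n} ∪ {∞} with respect to the filtration (F_t)_{t=1}^n in which F_t is the trivial σ-algebra for t < n and F_n = σ(U), one has E[1[T ≤ n] · V_T] ≤ 1. In particular, every such stopping rule achieves at most a 2/(n+1) fraction of the expected maximum on this instance. -/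
open MeasureTheory

lemma ind_int {Ω : Type*} [MeasurableSpace Ω] (μ : Measure Ω) [IsProbabilityMeasure μ]
    (U : Ω → ℝ) (hUmeas : Measurable U)
    (hUdist : Measure.map U μ = volume.restrict (Set.Icc (0 : ℝ) 1))
    (a : ℝ) (ha0 : 0 ≤ a) (ha1 : a ≤ 1) :
    ∫ ω, (if a ≤ U ω then (1:ℝ) else 0) ∂μ = 1 - a := by
  have hs : MeasurableSet {ω | a ≤ U ω} := hUmeas measurableSet_Ici
  have heq : (fun ω => if a ≤ U ω then (1:ℝ) else 0)
      = Set.indicator {ω | a ≤ U ω} (fun _ => (1:ℝ)) := by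
    funext ω; by_cases h : a ≤ U ω <;> simp [Set.indicator_apply, h]
  rw [heq, integral_indicator_const (1:ℝ) hs]
  have hμ : μ {ω | a ≤ U ω} = ENNReal.ofReal (1 - a) := by
    have h1 : {ω | a ≤ U ω} = U ⁻¹' (Set.Ici a) := rfl
    rw [h1, ← Measure.map_apply hUmeas measurableSet_Ici, hUdist,
        Measure.restrict_apply measurableSet_Ici]
    have h2 : Set.Ici a ∩ Set.Icc 0 1 = Set.Icc a 1 := by
      ext x
      simp only [Set.mem_inter_iff, Set.mem_Ici, Set.mem_Icc]
      constructor
      · rintro ⟨h, _, h1'⟩; exact ⟨h, h1'⟩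
      · rintro ⟨h, h1'⟩; exact ⟨h, le_trans ha0 h, h1'⟩
    rw [h2, Real.volume_Icc]
  rw [measureReal_def, hμ, ENNReal.toReal_ofReal (by linarith)]
  simp

/-- hard instance for farsighted prophets: `U` is uniform on `[0,1]` and
`V i = 2^i · 1[U ≥ 1 - 2^{-i}]`.  (a) `E[max_{1 ≤ i ≤ n} V i] = (n+1)/2`.  (b) For every
stopping time `T` with values in `{1,…,n} ∪ {∞}` adapted to the filtration that is trivial
before time `n` and equals `σ(U)` at time `n` (i.e. `{T = t}` is `∅` or everything for
`t < n`, and `{T = n}` is `σ(U)`-measurable), `E[1[T ≤ n] · V_T] ≤ 1`. -/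
theorem stmt_0 {Ω : Type*} [MeasurableSpace Ω] (μ : Measure Ω) [IsProbabilityMeasure μ]
    (n : ℕ) (hn : 1 ≤ n)
    (U : Ω → ℝ) (hUmeas : Measurable U)
    (hUdist : Measure.map U μ = volume.restrict (Set.Icc (0 : ℝ) 1))
    (V : ℕ → Ω → ℝ)
    (hV : ∀ i ω, V i ω = 2 ^ i * (if 1 - 1 / 2 ^ i ≤ U ω then 1 else 0))
    (T : Ω → ℕ∞)
    (hTrange : ∀ ω, T ω ∈ Set.Icc (1 : ℕ∞) (n : ℕ∞) ∪ {⊤})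
    (hTtriv : ∀ t : ℕ, t < n → ({ω | T ω = (t : ℕ∞)} = ∅ ∨ {ω | T ω = (t : ℕ∞)} = Set.univ))
    (hTmeas : MeasurableSet[MeasurableSpace.comap U inferInstance] {ω | T ω = (n : ℕ∞)}) :
    (∫ ω, (Finset.Icc 1 n).sup' (Finset.nonempty_Icc.mpr hn) (fun i => V i ω) ∂μ
        = ((n : ℝ) + 1) / 2) ∧
    ∫ ω, (if T ω ≤ (n : ℕ∞) then V (T ω).toNat ω else 0) ∂μ ≤ 1 := by
  -- basic facts about the thresholds
  have ha0 : ∀ i : ℕ, (0:ℝ) ≤ 1 - 1 / 2 ^ i := by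
    intro i
    have h1 : (1:ℝ) ≤ 2 ^ i := one_le_pow₀ (by norm_num)
    have : (1:ℝ) / 2 ^ i ≤ 1 := by
      rw [div_le_one (by positivity)]; exact h1
    linarith
  have ha1 : ∀ i : ℕ, (1:ℝ) - 1 / 2 ^ i ≤ 1 := by
    intro i
    have : (0:ℝ) < 1 / 2 ^ i := by positivity
    linarith
  have hVnonneg : ∀ i ω, 0 ≤ V i ω := by
    intro i ω; rw [hV i ω]; positivity
  have hmeasS : ∀ i : ℕ, MeasurableSet {ω | 1 - 1 / 2 ^ i ≤ U ω} :=
    fun i => hUmeas measurableSet_Ici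
  have hVeq : ∀ i : ℕ, V i = fun ω => (2:ℝ) ^ i *
      Set.indicator {ω | 1 - 1 / 2 ^ i ≤ U ω} (fun _ => (1:ℝ)) ω := by
    intro i; funext ω; rw [hV i ω]
    by_cases h : 1 - 1 / 2 ^ i ≤ U ω <;> simp [Set.indicator_apply, h]
  have hVint : ∀ i : ℕ, Integrable (V i) μ := by
    intro i; rw [hVeq i]
    exact ((integrable_const (1:ℝ)).indicator (hmeasS i)).const_mul _
  have hVintegral : ∀ i : ℕ, ∫ ω, V i ω ∂μ = 1 := by
    intro i
    have h1 : (fun ω => V i ω) = fun ω => (2:ℝ) ^ i *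
        (if 1 - 1 / 2 ^ i ≤ U ω then (1:ℝ) else 0) := by
      funext ω; exact hV i ω
    rw [h1, integral_const_mul, ind_int μ U hUmeas hUdist _ (ha0 i) (ha1 i)]
    field_simp
    ring
  constructor
  · -- part (a)
    have main : ∀ m : ℕ, ∀ hm : 1 ≤ m,
        Integrable (fun ω => (Finset.Icc 1 m).sup' (Finset.nonempty_Icc.mpr hm)
          (fun i => V i ω)) μ ∧
        ∫ ω, (Finset.Icc 1 m).sup' (Finset.nonempty_Icc.mpr hm) (fun i => V i ω) ∂μ
          = ((m : ℝ) + 1) / 2 := by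
      intro m hm
      induction m, hm using Nat.le_induction with
      | base =>
        have h1 : (Finset.Icc 1 1) = {1} := Finset.Icc_self 1
        have h2 : (fun ω => (Finset.Icc 1 1).sup' (Finset.nonempty_Icc.mpr le_rfl)
            (fun i => V i ω)) = V 1 := by
          funext ω
          simp [h1]
        constructor
        · rw [show (Finset.nonempty_Icc.mpr (le_refl 1)) = (Finset.nonempty_Icc.mpr (le_refl 1)) from rfl]
          simpa [h2] using hVint 1
        · rw [show (∫ ω, (Finset.Icc 1 1).sup' (Finset.nonempty_Icc.mpr le_rfl) (fun i => V i ω) ∂μ) = ∫ ω, V 1 ω ∂μ from by rw [h2]]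
          rw [hVintegral 1]; norm_num
      | succ m hm ih =>
        set S : Ω → ℝ := fun ω => (Finset.Icc 1 m).sup' (Finset.nonempty_Icc.mpr hm)
          (fun i => V i ω) with hS
        have hins : Finset.Icc 1 (m+1) = insert (m+1) (Finset.Icc 1 m) := by
          ext x; simp only [Finset.mem_Icc, Finset.mem_insert]; omega
        have hptw : ∀ ω, (Finset.Icc 1 (m+1)).sup' (Finset.nonempty_Icc.mpr (by omega))
            (fun i => V i ω)
            = S ω + 2 ^ m * (if 1 - 1 / 2 ^ (m+1) ≤ U ω then (1:ℝ) else 0) := by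
          intro ω
          have hsup : (Finset.Icc 1 (m+1)).sup' (Finset.nonempty_Icc.mpr (by omega))
              (fun i => V i ω) = V (m+1) ω ⊔ S ω := by
            rw [hS]
            simp only [hins]
            exact Finset.sup'_insert (Finset.nonempty_Icc.mpr hm) _
          rw [hsup]
          by_cases h : 1 - 1 / 2 ^ (m+1) ≤ U ω
          · have hall : ∀ i, i ≤ m + 1 → V i ω = 2 ^ i := by
              intro i hi
              have hmono : (1:ℝ) - 1 / 2 ^ i ≤ 1 - 1 / 2 ^ (m+1) := by
                have : (1:ℝ) / 2 ^ (m+1) ≤ 1 / 2 ^ i := by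
                  apply one_div_le_one_div_of_le (by positivity)
                  exact pow_le_pow_right₀ (by norm_num) hi
                linarith
              rw [hV i ω, if_pos (le_trans hmono h)]; ring
            have hSval : S ω = 2 ^ m := by
              apply le_antisymm
              · apply Finset.sup'_le
                intro i hi
                rw [hall i (by simp only [Finset.mem_Icc] at hi; omega)]
                exact pow_le_pow_right₀ (by norm_num) (by simp only [Finset.mem_Icc] at hi; omega)
              · have := Finset.le_sup' (fun i => V i ω) (Finset.mem_Icc.mpr ⟨hm, le_rfl⟩)
                rw [hall m (by omega)] at this
                exact this
            rw [hall (m+1) le_rfl, hSval, if_pos h]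
            rw [sup_eq_left.mpr (pow_le_pow_right₀ (by norm_num : (1:ℝ) ≤ 2) (by omega : m ≤ m+1))]
            rw [pow_succ]; ring
          · have hV0 : V (m+1) ω = 0 := by rw [hV (m+1) ω, if_neg h]; ring
            have hSnn : 0 ≤ S ω := by
              have := Finset.le_sup' (fun i => V i ω) (Finset.mem_Icc.mpr ⟨hm, le_rfl⟩)
              exact le_trans (hVnonneg m ω) this
            rw [hV0, if_neg h, sup_eq_right.mpr hSnn]
            ring
        have hG : Integrable (fun ω => (2:ℝ) ^ m *
            (if 1 - 1 / 2 ^ (m+1) ≤ U ω then (1:ℝ) else 0)) μ := by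
          have : (fun ω => (2:ℝ) ^ m * (if 1 - 1 / 2 ^ (m+1) ≤ U ω then (1:ℝ) else 0))
              = fun ω => (2:ℝ) ^ m *
                Set.indicator {ω | 1 - 1 / 2 ^ (m+1) ≤ U ω} (fun _ => (1:ℝ)) ω := by
            funext ω; by_cases h : 1 - 1 / 2 ^ (m+1) ≤ U ω <;> simp [Set.indicator_apply, h]
          rw [this]
          exact ((integrable_const (1:ℝ)).indicator (hmeasS (m+1))).const_mul _
        have hfun : (fun ω => (Finset.Icc 1 (m+1)).sup'
            (Finset.nonempty_Icc.mpr (by omega : 1 ≤ m + 1)) (fun i => V i ω))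
            = fun ω => S ω + 2 ^ m * (if 1 - 1 / 2 ^ (m+1) ≤ U ω then (1:ℝ) else 0) := by
          funext ω; exact hptw ω
        constructor
        · rw [hfun]; exact ih.1.add hG
        · rw [hfun, integral_add ih.1 hG, ih.2, integral_const_mul,
            ind_int μ U hUmeas hUdist _ (ha0 (m+1)) (ha1 (m+1))]
          have h2 : (2:ℝ) ^ m * (1 - (1 - 1 / 2 ^ (m+1))) = 1 / 2 := by
            rw [pow_succ]; field_simp; ring
          rw [h2]
          push_cast
          ring
    exact (main n hn).2
  · -- part (b)
    by_cases hcase : ∃ t : ℕ, t < n ∧ {ω | T ω = (t : ℕ∞)} = Set.univ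
    · obtain ⟨t, htn, hteq⟩ := hcase
      have hTt : ∀ ω, T ω = (t : ℕ∞) := fun ω => (Set.eq_univ_iff_forall.mp hteq) ω
      have hfun : (fun ω => if T ω ≤ (n:ℕ∞) then V (T ω).toNat ω else 0) = V t := by
        funext ω
        rw [hTt ω, if_pos (by exact_mod_cast Nat.cast_le.mpr htn.le)]
        simp
      rw [hfun, hVintegral t]
    · push_neg at hcase
      have hempty : ∀ t : ℕ, t < n → {ω | T ω = (t : ℕ∞)} = ∅ := by
        intro t ht
        rcases hTtriv t ht with h | h
        · exact h
        · exact absurd h (hcase t ht)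
      have hfin : ∀ ω, T ω = (n : ℕ∞) ∨ T ω = ⊤ := by
        intro ω
        rcases hTrange ω with h | h
        · left
          obtain ⟨h1, h2⟩ := h
          have hne : T ω ≠ ⊤ := ne_top_of_le_ne_top (ENat.coe_ne_top n) h2
          set t := (T ω).toNat with htdef
          have hcoe : (t : ℕ∞) = T ω := ENat.coe_toNat hne
          have htle : t ≤ n := by
            rw [← Nat.cast_le (α := ℕ∞), hcoe]; exact h2
          rcases lt_or_eq_of_le htle with hlt | heq
          · exfalso
            have : ω ∈ {ω | T ω = (t : ℕ∞)} := by simp [Set.mem_setOf_eq, hcoe.symm]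
            rw [hempty t hlt] at this
            exact this
          · rw [← hcoe, heq]
        · right; exact h
      have hA : MeasurableSet {ω | T ω = (n : ℕ∞)} := by
        obtain ⟨s, hs, hsA⟩ := hTmeas
        rw [← hsA]
        exact hUmeas hs
      have hfun : (fun ω => if T ω ≤ (n:ℕ∞) then V (T ω).toNat ω else 0)
          = Set.indicator {ω | T ω = (n : ℕ∞)} (V n) := by
        funext ω
        rcases hfin ω with h | h
        · rw [h, if_pos le_rfl]
          have : ω ∈ {ω | T ω = (n : ℕ∞)} := h
          rw [Set.indicator_of_mem this]
          simp
        · rw [h, if_neg (by simp [ENat.coe_ne_top n] : ¬ (⊤ : ℕ∞) ≤ (n:ℕ∞))]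
          have : ω ∉ {ω | T ω = (n : ℕ∞)} := by
            simp only [Set.mem_setOf_eq, h]
            exact fun hc => (ENat.coe_ne_top n) hc.symm
          rw [Set.indicator_of_notMem this]
      rw [hfun]
      calc ∫ ω, Set.indicator {ω | T ω = (n : ℕ∞)} (V n) ω ∂μ
          ≤ ∫ ω, V n ω ∂μ := by
            apply integral_mono ((hVint n).indicator hA) (hVint n)
            exact Set.indicator_le_self' (fun x _ => hVnonneg n x)
        _ = 1 := hVintegral n
end

section
/- Let n ≥ 1 and let s_1, …, s_n be i.i.d. random variables, each uniform on the two-point set {0, 2}. For t ∈ {1,…,n} define M_t = ∏_{j=1}^t s_j, and let (F_t) be the natural filtration F_t = σ(s_1,…,s_t). Then (a) E[max_{t∈[n]} M_t] = (n+1)/2, and (b) for every stopping time T with respect to (F_t) taking values in {1,…,n} ∪ {∞}, one has E[1[T ≤ n] · M_T] ≤ 1. In particular, every such stopping rule achieves at most a 2/(n+1) fraction of the expected maximum on this instance. -/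
open MeasureTheory ProbabilityTheory

lemma geom_aux (n : ℕ) : ∑ t ∈ Finset.Icc 1 n, (2:ℝ)^(t-1) = 2^n - 1 := by
  induction n with
  | zero => simp
  | succ n ih =>
    rw [← Finset.insert_Icc_right_eq_Icc_add_one (by omega), Finset.sum_insert (by simp), ih]
    simp only [Nat.add_sub_cancel]
    ring

lemma sup_aux (n : ℕ) (hn : 1 ≤ n) (c : ℕ → Bool) (hmono : ∀ t, c (t+1) = true → c t = true) :
    (Finset.Icc 1 n).sup' (Finset.nonempty_Icc.mpr hn) (fun t => if c t then (2:ℝ)^t else 0)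
    = (if c 1 then 1 else 0) + ∑ t ∈ Finset.Icc 1 n, (if c t then (2:ℝ)^(t-1) else 0) := by
  induction n, hn using Nat.le_induction with
  | base => by_cases h : c 1 = true <;> simp [h] <;> norm_num
  | succ n hn ih =>
    have hmono' : ∀ t₁ t₂, t₁ ≤ t₂ → c t₂ = true → c t₁ = true := by
      intro t₁ t₂ h
      induction t₂, h using Nat.le_induction with
      | base => exact id
      | succ m hm ih2 => exact fun h => ih2 (hmono m h)
    have hins : insert (n+1) (Finset.Icc 1 n) = Finset.Icc 1 (n+1) :=
      Finset.insert_Icc_right_eq_Icc_add_one (by omega)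
    simp only [← hins, Finset.sum_insert (by simp : (n+1) ∉ Finset.Icc 1 n)]
    rw [Finset.sup'_insert (H := Finset.nonempty_Icc.mpr hn)]
    rw [ih]
    by_cases h1 : c (n+1) = true
    · have hall : ∀ t ∈ Finset.Icc 1 n, c t = true := fun t ht =>
        hmono' t (n+1) (by simp at ht; omega) h1
      have hsum : ∑ t ∈ Finset.Icc 1 n, (if c t then (2:ℝ)^(t-1) else 0) = 2^n - 1 := by
        rw [Finset.sum_congr rfl (fun t ht => by rw [if_pos (hall t ht)]), geom_aux]
      have hc1 : c 1 = true := hmono' 1 (n+1) (by omega) h1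
      rw [hsum, if_pos h1, if_pos h1, if_pos hc1]
      have h2 : (1:ℝ) + (2^n - 1) ≤ 2^(n+1) := by
        nlinarith [pow_pos (by norm_num : (0:ℝ) < 2) n, pow_succ (2:ℝ) n]
      rw [sup_eq_left.mpr h2]
      simp only [Nat.add_sub_cancel]
      ring
    · rw [if_neg h1, if_neg h1]
      have hnn : (0:ℝ) ≤ (if c 1 = true then (1:ℝ) else 0) +
          ∑ t ∈ Finset.Icc 1 n, (if c t = true then (2:ℝ)^(t-1) else 0) := by
        refine add_nonneg (by split <;> norm_num) (Finset.sum_nonneg fun t _ => ?_)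
        split <;> positivity
      rw [sup_eq_right.mpr hnn]
      ring

/-- hard instance for myopic prophets with general valuations:
`s_1, …, s_n` are i.i.d. uniform on `{0,2}` and `M_t = ∏_{j=1}^t s_j`.
(a) `E[max_{1 ≤ t ≤ n} M_t] = (n+1)/2`.  (b) For every stopping time `T` with values in
`{1,…,n} ∪ {∞}` with respect to the natural filtration (`{T = t}` is measurable with
respect to `σ(s_1,…,s_t)`), `E[1[T ≤ n] · M_T] ≤ 1`. -/
theorem stmt_1 {Ω : Type*} [MeasurableSpace Ω] (μ : Measure Ω) [IsProbabilityMeasure μ]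
    (n : ℕ) (hn : 1 ≤ n)
    (s : ℕ → Ω → ℝ) (hmeas : ∀ i, Measurable (s i))
    (hindep : iIndepFun s μ)
    (hdist : ∀ i, 1 ≤ i → i ≤ n → Measure.map (s i) μ =
      (1 / 2 : ENNReal) • Measure.dirac (0 : ℝ) + (1 / 2 : ENNReal) • Measure.dirac (2 : ℝ))
    (M : ℕ → Ω → ℝ) (hM : ∀ t ω, M t ω = ∏ j ∈ Finset.Icc 1 t, s j ω)
    (T : Ω → ℕ∞)
    (hTrange : ∀ ω, T ω ∈ Set.Icc (1 : ℕ∞) (n : ℕ∞) ∪ {⊤})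
    (hTstop : ∀ t : ℕ, 1 ≤ t → t ≤ n →
      MeasurableSet[⨆ j ∈ Finset.Icc 1 t, MeasurableSpace.comap (s j) inferInstance]
        {ω | T ω = (t : ℕ∞)}) :
    (∫ ω, (Finset.Icc 1 n).sup' (Finset.nonempty_Icc.mpr hn) (fun t => M t ω) ∂μ
        = ((n : ℝ) + 1) / 2) ∧
    ∫ ω, (if T ω ≤ (n : ℕ∞) then M (T ω).toNat ω else 0) ∂μ ≤ 1 := by
  classical
  set A : ℕ → Set Ω := fun t => ⋂ j ∈ Finset.Icc 1 t, s j ⁻¹' {2} with hA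
  have hAmeas : ∀ t, MeasurableSet (A t) := fun t =>
    MeasurableSet.biInter (Finset.Icc 1 t).countable_toSet
      (fun j _ => hmeas j (measurableSet_singleton 2))
  have hEprob : ∀ j, 1 ≤ j → j ≤ n → μ (s j ⁻¹' {2}) = 1/2 := by
    intro j h1 h2
    rw [← Measure.map_apply (hmeas j) (measurableSet_singleton 2), hdist j h1 h2]
    simp [Measure.dirac_apply]
  have hG : ∀ᵐ ω ∂μ, ∀ j ∈ Finset.Icc 1 n, s j ω ∈ ({0,2} : Set ℝ) := by
    refine (ae_ball_iff (Finset.Icc 1 n).countable_toSet).mpr (fun j hj => ?_)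
    have hms : MeasurableSet ({0,2} : Set ℝ) :=
      (measurableSet_singleton 0).union (measurableSet_singleton 2)
    rw [ae_iff]
    have : {ω | ¬ s j ω ∈ ({0,2}:Set ℝ)} = s j ⁻¹' ({0,2}ᶜ) := rfl
    rw [this, ← Measure.map_apply (hmeas j) hms.compl,
      hdist j (Finset.mem_Icc.mp hj).1 (Finset.mem_Icc.mp hj).2]
    simp [Measure.dirac_apply]
  have hAmem : ∀ ω t, ω ∈ A t ↔ ∀ j ∈ Finset.Icc 1 t, s j ω = 2 := by
    intro ω t
    simp [hA, Set.mem_iInter]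
  have hMval : ∀ ω, (∀ j ∈ Finset.Icc 1 n, s j ω ∈ ({0,2} : Set ℝ)) → ∀ t, 1 ≤ t → t ≤ n →
      M t ω = if (∀ j ∈ Finset.Icc 1 t, s j ω = 2) then (2:ℝ)^t else 0 := by
    intro ω hω t h1 h2
    rw [hM]
    split
    next h =>
      rw [Finset.prod_congr rfl h, Finset.prod_const, Nat.card_Icc]
      norm_num
    next h =>
      push_neg at h
      obtain ⟨j, hj, hne⟩ := h
      refine Finset.prod_eq_zero hj ?_
      have hj' : j ∈ Finset.Icc 1 n := by
        simp only [Finset.mem_Icc] at hj ⊢; omega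
      rcases hω j hj' with h0 | h2'
      · exact h0
      · exact absurd h2' hne
  have hApr : ∀ t, 1 ≤ t → t ≤ n → μ (A t) = (1/2:ENNReal)^t := by
    intro t h1 h2
    rw [hA]
    rw [hindep.meas_biInter (fun j _ => ⟨{2}, measurableSet_singleton 2, rfl⟩)]
    rw [Finset.prod_congr rfl (fun j hj => hEprob j (Finset.mem_Icc.mp hj).1
      (le_trans (Finset.mem_Icc.mp hj).2 h2))]
    rw [Finset.prod_const, Nat.card_Icc]
    norm_num
  constructor
  -- a.e. identity for the sup
  have hae : (fun ω => (Finset.Icc 1 n).sup' (Finset.nonempty_Icc.mpr hn) (fun t => M t ω))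
      =ᵐ[μ] (fun ω => (A 1).indicator (fun _ => (1:ℝ)) ω
        + ∑ t ∈ Finset.Icc 1 n, (A t).indicator (fun _ => (2:ℝ)^(t-1)) ω) := by
    filter_upwards [hG] with ω hω
    set c : ℕ → Bool := fun t => decide (∀ j ∈ Finset.Icc 1 t, s j ω = 2) with hc
    have hcmono : ∀ t, c (t+1) = true → c t = true := by
      intro t ht
      simp only [hc, decide_eq_true_eq] at ht ⊢
      intro j hj
      exact ht j (by simp only [Finset.mem_Icc] at hj ⊢; omega)
    have hsup : (Finset.Icc 1 n).sup' (Finset.nonempty_Icc.mpr hn) (fun t => M t ω)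
        = (Finset.Icc 1 n).sup' (Finset.nonempty_Icc.mpr hn)
          (fun t => if c t then (2:ℝ)^t else 0) := by
      refine Finset.sup'_congr _ rfl (fun t ht => ?_)
      rw [hMval ω hω t (Finset.mem_Icc.mp ht).1 (Finset.mem_Icc.mp ht).2]
      simp [hc]
    rw [hsup, sup_aux n hn c hcmono]
    have hind : ∀ t (x : ℝ), (A t).indicator (fun _ => x) ω = if c t then x else 0 := by
      intro t x
      by_cases h : ω ∈ A t
      · rw [Set.indicator_of_mem h, if_pos (by simp only [hc, decide_eq_true_eq]; exact (hAmem ω t).mp h)]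
      · rw [Set.indicator_of_notMem h, if_neg
          (by simp only [hc, decide_eq_true_eq]; exact fun hh => h ((hAmem ω t).mpr hh))]
    rw [hind 1 1]
    congr 1
    exact Finset.sum_congr rfl (fun t _ => (hind t _).symm)
  rw [integral_congr_ae hae]
  have hint1 : Integrable ((A 1).indicator (fun _ => (1:ℝ))) μ :=
    (integrable_const (1:ℝ)).indicator (hAmeas 1)
  have hint2 : ∀ t ∈ Finset.Icc 1 n, Integrable ((A t).indicator (fun _ => (2:ℝ)^(t-1))) μ :=
    fun t _ => (integrable_const _).indicator (hAmeas t)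
  rw [integral_add hint1 (integrable_finset_sum _ hint2), integral_finset_sum _ hint2]
  have htoReal : ∀ t, 1 ≤ t → t ≤ n → (μ (A t)).toReal = (1/2:ℝ)^t := by
    intro t h1 h2
    rw [hApr t h1 h2]
    simp [ENNReal.toReal_pow]
  rw [integral_indicator_const _ (hAmeas 1)]
  rw [Finset.sum_congr rfl (fun t ht => integral_indicator_const ((2:ℝ)^(t-1)) (hAmeas t))]
  simp only [measureReal_def]
  have hterm : ∀ t ∈ Finset.Icc 1 n, (μ (A t)).toReal • (2:ℝ)^(t-1) = 1/2 := by
    intro t ht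
    obtain ⟨h1, h2⟩ := Finset.mem_Icc.mp ht
    rw [htoReal t h1 h2, smul_eq_mul]
    have h2t : (2:ℝ)^t = 2 * 2^(t-1) := by
      rw [← pow_succ']
      congr 1
      omega
    rw [div_pow, one_pow, h2t]
    have : (2:ℝ)^(t-1) ≠ 0 := by positivity
    field_simp
  rw [Finset.sum_congr rfl hterm, Finset.sum_const, Nat.card_Icc, htoReal 1 le_rfl hn]
  simp only [smul_eq_mul, nsmul_eq_mul]
  push_cast [Nat.add_sub_cancel]
  ring
  -- part (b) proper
  set B : ℕ → Set Ω := fun t => {ω | T ω = (t:ℕ∞)} ∩ A t with hB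
  set F : ℕ → MeasurableSpace Ω :=
    fun t => ⨆ j ∈ Finset.Icc 1 t, MeasurableSpace.comap (s j) inferInstance with hF
  have hFle : ∀ t, F t ≤ ‹MeasurableSpace Ω› := fun t =>
    iSup₂_le (fun j _ => (hmeas j).comap_le)
  have hAF : ∀ t, MeasurableSet[F t] (A t) := by
    intro t
    refine MeasurableSet.biInter (Finset.Icc 1 t).countable_toSet (fun j hj => ?_)
    have hle : MeasurableSpace.comap (s j) inferInstance ≤ F t := le_iSup₂ (f := fun j _ =>
      MeasurableSpace.comap (s j) inferInstance) j hj
    exact hle _ ⟨{2}, measurableSet_singleton 2, rfl⟩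
  have hBF : ∀ t, 1 ≤ t → t ≤ n → MeasurableSet[F t] (B t) := fun t h1 h2 =>
    (hTstop t h1 h2).inter (hAF t)
  have hBmeas : ∀ t, 1 ≤ t → t ≤ n → MeasurableSet (B t) := fun t h1 h2 =>
    hFle t _ (hBF t h1 h2)
  set D : ℕ → Set Ω := fun t => ⋂ j ∈ Finset.Icc (t+1) n, s j ⁻¹' {2} with hD
  have hDF : ∀ t, MeasurableSet[⨆ j ∈ (↑(Finset.Icc (t+1) n) : Set ℕ),
      MeasurableSpace.comap (s j) inferInstance] (D t) := by
    intro t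
    refine MeasurableSet.biInter (Finset.Icc (t+1) n).countable_toSet (fun j hj => ?_)
    have hle : MeasurableSpace.comap (s j) inferInstance ≤ _ := le_iSup₂ (f := fun (j : ℕ)
      (_ : j ∈ (↑(Finset.Icc (t+1) n) : Set ℕ)) =>
      MeasurableSpace.comap (s j) inferInstance) j hj
    exact hle _ ⟨{2}, measurableSet_singleton 2, rfl⟩
  have hIndep : ∀ t, Indep (F t) (⨆ j ∈ (↑(Finset.Icc (t+1) n) : Set ℕ),
      MeasurableSpace.comap (s j) inferInstance) μ := by
    intro t
    have hdisj : Disjoint (↑(Finset.Icc 1 t) : Set ℕ) (↑(Finset.Icc (t+1) n) : Set ℕ) := by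
      rw [Set.disjoint_left]
      intro a ha hb
      simp only [Finset.coe_Icc, Set.mem_Icc] at ha hb
      omega
    exact indep_iSup_of_disjoint (fun i => (hmeas i).comap_le) hindep.iIndep hdisj
  have hBD : ∀ t, 1 ≤ t → t ≤ n → μ (B t ∩ D t) = μ (B t) * μ (D t) := by
    intro t h1 h2
    exact (Indep_iff _ _ _).mp (hIndep t) _ _ (hBF t h1 h2) (hDF t)
  have hDpr : ∀ t, μ (D t) = (1/2:ENNReal)^(n-t) := by
    intro t
    rw [hD]
    rw [hindep.meas_biInter (fun j _ => ⟨{2}, measurableSet_singleton 2, rfl⟩)]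
    rw [Finset.prod_congr rfl (fun j hj => hEprob j (by simp only [Finset.mem_Icc] at hj; omega)
      (Finset.mem_Icc.mp hj).2)]
    rw [Finset.prod_const, Nat.card_Icc]
    congr 1
    omega
  have hDmem : ∀ ω t, ω ∈ D t ↔ ∀ j ∈ Finset.Icc (t+1) n, s j ω = 2 := by
    intro ω t
    simp [hD, Set.mem_iInter]
  have hDmeas : ∀ t, MeasurableSet (D t) := fun t =>
    MeasurableSet.biInter (Finset.Icc (t+1) n).countable_toSet
      (fun j _ => hmeas j (measurableSet_singleton 2))
  -- key bound in ENNReal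
  have hkey : ∑ t ∈ Finset.Icc 1 n, (2:ENNReal)^t * μ (B t) ≤ 1 := by
    have hstep : ∀ t ∈ Finset.Icc 1 n, (2:ENNReal)^t * μ (B t) = 2^n * μ (B t ∩ D t) := by
      intro t ht
      obtain ⟨h1, h2⟩ := Finset.mem_Icc.mp ht
      rw [hBD t h1 h2, hDpr t]
      have hp : (2:ENNReal)^n = 2^t * 2^(n-t) := by rw [← pow_add]; congr 1; omega
      have hhalf : ((1:ENNReal)/2)^(n-t) = ((2:ENNReal)^(n-t))⁻¹ := by
        rw [one_div, ← ENNReal.inv_pow]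
      rw [hhalf, hp, mul_mul_mul_comm, ENNReal.mul_inv_cancel
        (pow_ne_zero _ (by norm_num)) (ENNReal.pow_ne_top (by norm_num)), mul_one]
    have hdisj : Set.PairwiseDisjoint (↑(Finset.Icc 1 n) : Set ℕ) (fun t => B t ∩ D t) := by
      intro a ha b hb hab
      refine Set.disjoint_left.mpr (fun ω hωa hωb => hab ?_)
      have h1 : T ω = (a : ℕ∞) := hωa.1.1
      have h2 : T ω = (b : ℕ∞) := hωb.1.1
      have : (a : ℕ∞) = (b : ℕ∞) := h1 ▸ h2
      exact_mod_cast this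
    have hmeas' : ∀ t ∈ Finset.Icc 1 n, MeasurableSet (B t ∩ D t) := fun t ht =>
      (hBmeas t (Finset.mem_Icc.mp ht).1 (Finset.mem_Icc.mp ht).2).inter (hDmeas t)
    have hsub : (⋃ t ∈ Finset.Icc 1 n, (B t ∩ D t)) ⊆ A n := by
      refine Set.iUnion₂_subset (fun t ht ω hω => ?_)
      obtain ⟨h1, h2⟩ := Finset.mem_Icc.mp ht
      obtain ⟨⟨_, hAt⟩, hDt⟩ := hω
      rw [hAmem]
      intro j hj
      obtain ⟨hj1, hj2⟩ := Finset.mem_Icc.mp hj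
      by_cases hjt : j ≤ t
      · exact (hAmem ω t).mp hAt j (Finset.mem_Icc.mpr ⟨hj1, hjt⟩)
      · exact (hDmem ω t).mp hDt j (Finset.mem_Icc.mpr ⟨by omega, hj2⟩)
    calc ∑ t ∈ Finset.Icc 1 n, (2:ENNReal)^t * μ (B t)
        = ∑ t ∈ Finset.Icc 1 n, 2^n * μ (B t ∩ D t) := Finset.sum_congr rfl hstep
      _ = 2^n * ∑ t ∈ Finset.Icc 1 n, μ (B t ∩ D t) := (Finset.mul_sum _ _ _).symm
      _ = 2^n * μ (⋃ t ∈ Finset.Icc 1 n, (B t ∩ D t)) := by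
          rw [measure_biUnion_finset hdisj hmeas']
      _ ≤ 2^n * μ (A n) := mul_le_mul_right (measure_mono hsub) _
      _ = 1 := by
          rw [hApr n hn le_rfl, one_div, ← ENNReal.inv_pow]
          exact ENNReal.mul_inv_cancel (pow_ne_zero _ (by norm_num))
            (ENNReal.pow_ne_top (by norm_num))
  -- a.e. identity for the stopped value
  have hae2 : (fun ω => if T ω ≤ (n:ℕ∞) then M (T ω).toNat ω else 0) =ᵐ[μ]
      (fun ω => ∑ t ∈ Finset.Icc 1 n, (B t).indicator (fun _ => (2:ℝ)^t) ω) := by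
    filter_upwards [hG] with ω hω
    rcases hTrange ω with hmem | htop
    · obtain ⟨h1, h2⟩ := hmem
      have hne : T ω ≠ ⊤ := by
        intro h
        rw [h, top_le_iff] at h2
        simp at h2
      have hT0 : T ω = ((T ω).toNat : ℕ∞) := (ENat.coe_toNat hne).symm
      set t₀ := (T ω).toNat with ht₀
      have h1' : 1 ≤ t₀ := by
        rw [hT0] at h1
        exact_mod_cast h1
      have h2' : t₀ ≤ n := by
        rw [hT0] at h2
        exact_mod_cast h2
      rw [if_pos h2]
      rw [Finset.sum_eq_single_of_mem t₀ (Finset.mem_Icc.mpr ⟨h1', h2'⟩) (fun t ht htne => ?_)]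
      · rw [hMval ω hω t₀ h1' h2']
        by_cases hAt : ω ∈ A t₀
        · have hBmem : ω ∈ B t₀ := Set.mem_inter hT0 hAt
          rw [Set.indicator_of_mem hBmem, if_pos ((hAmem ω t₀).mp hAt)]
        · rw [Set.indicator_of_notMem (fun hmem' => hAt hmem'.2),
            if_neg (fun hh => hAt ((hAmem ω t₀).mpr hh))]
      · refine Set.indicator_of_notMem (fun hmem' => htne ?_) _
        have h3 : T ω = (t : ℕ∞) := hmem'.1
        rw [hT0] at h3
        exact_mod_cast h3.symm
    · rw [Set.mem_singleton_iff] at htop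
      have hnle : ¬ (T ω ≤ (n:ℕ∞)) := by
        rw [htop, top_le_iff]
        simp
      rw [if_neg hnle]
      symm
      refine Finset.sum_eq_zero (fun t ht => Set.indicator_of_notMem (fun hmem' => ?_) _)
      have h3 : T ω = (t : ℕ∞) := hmem'.1
      rw [htop] at h3
      simp at h3
  rw [integral_congr_ae hae2,
    integral_finset_sum _ (fun t ht => (integrable_const _).indicator
      (hBmeas t (Finset.mem_Icc.mp ht).1 (Finset.mem_Icc.mp ht).2))]
  rw [Finset.sum_congr rfl (fun t ht => integral_indicator_const ((2:ℝ)^t)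
    (hBmeas t (Finset.mem_Icc.mp ht).1 (Finset.mem_Icc.mp ht).2))]
  simp only [measureReal_def]
  have hconv : ∀ t ∈ Finset.Icc 1 n,
      (μ (B t)).toReal • (2:ℝ)^t = ((2:ENNReal)^t * μ (B t)).toReal := by
    intro t ht
    rw [ENNReal.toReal_mul, smul_eq_mul, mul_comm, ENNReal.toReal_pow]
    norm_num
  rw [Finset.sum_congr rfl hconv, ← ENNReal.toReal_sum (fun t ht =>
    ENNReal.mul_ne_top (ENNReal.pow_ne_top (by norm_num)) (measure_ne_top μ _))]
  calc (∑ t ∈ Finset.Icc 1 n, (2:ENNReal)^t * μ (B t)).toReal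
      ≤ (1:ENNReal).toReal := ENNReal.toReal_mono ENNReal.one_ne_top hkey
    _ = 1 := by simp
end

section
/- Let s_1, …, s_n : Ω → ℝ≥0 be independent random variables, for each i ∈ [n] let v_i : ℝ≥0ⁿ → ℝ≥0 be a measurable valuation function that is monotone and subadditive over signals, and let C be a fair coin (uniform on {0,1}) independent of (s_1,…,s_n). For t ∈ {0,…,n} let s_{[t]} denote the profile equal to s_j in coordinates j ≤ t and 0 elsewhere. Assume OPT := E[max_{i∈[n]} v_i(s_{[i]})] < ∞, set X = OPT/2, and let T be the least t ∈ [n] with v_t(s_{[t]}) ≥ X (T = ∞ if none). Define the accepted agent as follows: if T = ∞, no agent is accepted; if T < ∞ and C = 1, accept agent T; if T < ∞ and C = 0, accept the agent J = argmin of index among maximizers of v_i(s_{[T]}) over i > T (no agent is accepted if T = n and C = 0). Then the expected myopic welfare of the accepted agent satisfies E[1[some agent a is accepted] · v_a(s_{[a]})] ≥ OPT/8. -/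
open MeasureTheory ProbabilityTheory Finset

private lemma finset_sup_measurable_nnreal {δ : Type*} [MeasurableSpace δ] {ι : Type*}
    (s : Finset ι) (f : ι → δ → NNReal) (hf : ∀ i, Measurable (f i)) :
    Measurable fun x => s.sup fun i => f i x := by
  classical
  induction s using Finset.cons_induction with
  | empty => simpa using measurable_const
  | cons a s ha ih => simpa only [Finset.sup_cons] using (hf a).max ih

/-- prophet model with myopic agents, randomized EPIC mechanism,
8-approximation: signals `s_1, …, s_n` are independent, `C` is a fair coin independent of
the signals, each valuation `v_i` is measurable, monotone and subadditive over signals,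
`pfx ω t` is the profile of signals revealed up to time `t`, `OPT = E[max_i v_i(s_{[i]})]`
is finite, `X = OPT/2`, `T` is the first time `t` with `v_t(s_{[t]}) ≥ X` (set `S ω` is the
set of such times, `T` its minimum).  If `T = ∞` nobody is accepted; if `C = 1` agent `T`
is accepted; if `C = 0` the smallest-index maximizer of `v_i(s_{[T]})` over `i > T` is
accepted (nobody if no `i > T` exists).  The expected myopic welfare of the accepted agent
is at least `OPT/8`. -/
theorem stmt_3 {Ω : Type*} [MeasurableSpace Ω] (μ : Measure Ω) [IsProbabilityMeasure μ]
    (n : ℕ) (hn : 1 ≤ n)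
    (s : Fin n → Ω → NNReal) (hsmeas : ∀ i, Measurable (s i))
    (hindep : iIndepFun s μ)
    (C : Ω → Bool) (hCmeas : Measurable C)
    (hCfair : μ {ω | C ω = true} = 1 / 2)
    (hCindep : IndepFun C (fun ω => fun i => s i ω) μ)
    (v : Fin n → (Fin n → NNReal) → NNReal)
    (hvmeas : ∀ i, Measurable (v i))
    (hvmono : ∀ i, Monotone (v i))
    (hvsub : ∀ i (σ : Fin n → NNReal) (X : Finset (Fin n)),
      v i σ ≤ v i (fun j => if j ∈ X then σ j else 0) + v i (fun j => if j ∉ X then σ j else 0))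
    (pfx : Ω → Fin n → Fin n → NNReal)
    (hpfx : ∀ ω t j, pfx ω t j = if j ≤ t then s j ω else 0)
    (OPT : ℝ)
    (hOPT : OPT = ∫ ω, ((Finset.univ.sup fun i => v i (pfx ω i) : NNReal) : ℝ) ∂μ)
    (hInt : Integrable (fun ω => ((Finset.univ.sup fun i => v i (pfx ω i) : NNReal) : ℝ)) μ)
    (X : ℝ) (hX : X = OPT / 2)
    (S : Ω → Finset (Fin n))
    (hS : ∀ ω, S ω = Finset.univ.filter fun t => X ≤ ((v t (pfx ω t) : NNReal) : ℝ))
    (Mx : Ω → Fin n → Finset (Fin n))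
    (hMx : ∀ ω t, Mx ω t = Finset.univ.filter fun i =>
      t < i ∧ ∀ k, t < k → v k (pfx ω t) ≤ v i (pfx ω t))
    (ALG : Ω → ℝ)
    (hALG : ∀ ω, ALG ω =
      if h : (S ω).Nonempty then
        (if C ω = true then ((v ((S ω).min' h) (pfx ω ((S ω).min' h)) : NNReal) : ℝ)
         else if h2 : (Mx ω ((S ω).min' h)).Nonempty then
           ((v ((Mx ω ((S ω).min' h)).min' h2)
              (pfx ω ((Mx ω ((S ω).min' h)).min' h2)) : NNReal) : ℝ)
         else 0)
      else 0) :
    OPT / 8 ≤ ∫ ω, ALG ω ∂μ := by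
  classical
  have hne : Nonempty (Fin n) := ⟨⟨0, hn⟩⟩
  -- abbreviations
  set F : Fin n → Ω → ℝ := fun t ω => ((v t (pfx ω t) : NNReal) : ℝ) with hFdef
  set M : Ω → ℝ := fun ω => ((Finset.univ.sup fun i => v i (pfx ω i) : NNReal) : ℝ) with hMdef
  set G : Fin n → Ω → ℝ := fun t ω =>
    (((Finset.univ.filter fun i => t < i).sup fun i => v i (pfx ω t) : NNReal) : ℝ) with hGdef
  set H : Fin n → Ω → ℝ := fun t ω =>
    (((Finset.univ.filter fun i => t < i).sup fun i =>
      v i (fun j => if t < j ∧ j ≤ i then s j ω else 0) : NNReal) : ℝ) with hHdef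
  set E : Fin n → Set Ω := fun t => {ω | X ≤ F t ω ∧ ∀ k, k < t → ¬ X ≤ F k ω} with hEdef
  set N : Set Ω := {ω | ∀ k, ¬ X ≤ F k ω} with hNdef
  -- nonnegativity and pointwise bounds
  have hX0 : 0 ≤ X := by
    rw [hX, hOPT]
    have : 0 ≤ ∫ ω, M ω ∂μ := integral_nonneg fun ω => NNReal.coe_nonneg _
    rw [hMdef] at this
    linarith
  have hF0 : ∀ t ω, 0 ≤ F t ω := fun t ω => NNReal.coe_nonneg _
  have hG0 : ∀ t ω, 0 ≤ G t ω := fun t ω => NNReal.coe_nonneg _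
  have hH0 : ∀ t ω, 0 ≤ H t ω := fun t ω => NNReal.coe_nonneg _
  have hM0 : ∀ ω, 0 ≤ M ω := fun ω => NNReal.coe_nonneg _
  have hFleM : ∀ t ω, F t ω ≤ M ω := by
    intro t ω
    exact NNReal.coe_le_coe.mpr (Finset.le_sup (f := fun i => v i (pfx ω i)) (mem_univ t))
  have hpfxmono : ∀ ω (a b : Fin n), a ≤ b → pfx ω a ≤ pfx ω b := by
    intro ω a b hab j
    rw [hpfx, hpfx]
    by_cases hj : j ≤ a
    · rw [if_pos hj, if_pos (hj.trans hab)]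
    · rw [if_neg hj]
      exact zero_le
  have hGleM : ∀ t ω, G t ω ≤ M ω := by
    intro t ω
    rw [hGdef, hMdef]
    refine NNReal.coe_le_coe.mpr (Finset.sup_le fun i hi => ?_)
    have hti : t < i := (Finset.mem_filter.mp hi).2
    exact le_trans (hvmono i (hpfxmono ω t i hti.le))
      (Finset.le_sup (f := fun i => v i (pfx ω i)) (mem_univ i))
  have hHleM : ∀ t ω, H t ω ≤ M ω := by
    intro t ω
    rw [hHdef, hMdef]
    refine NNReal.coe_le_coe.mpr (Finset.sup_le fun i hi => ?_)
    refine le_trans (hvmono i ?_) (Finset.le_sup (f := fun i => v i (pfx ω i)) (mem_univ i))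
    intro j
    simp only [hpfx]
    by_cases hj : t < j ∧ j ≤ i
    · simp [hj, hj.2]
    · simp only [if_neg hj]
      exact zero_le
  -- measurability
  have hpfxm : ∀ t, Measurable fun ω => pfx ω t := by
    intro t
    have : (fun ω => pfx ω t) = fun ω j => if j ≤ t then s j ω else 0 := by
      funext ω j; exact hpfx ω t j
    rw [this]
    refine measurable_pi_lambda _ fun j => ?_
    by_cases hj : j ≤ t
    · simpa only [if_pos hj] using hsmeas j
    · simpa only [if_neg hj] using measurable_const
  have hFm : ∀ t, Measurable (F t) := by
    intro t
    exact measurable_coe_nnreal_real.comp ((hvmeas t).comp (hpfxm t))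
  have hGm : ∀ t, Measurable (G t) := by
    intro t
    refine measurable_coe_nnreal_real.comp ?_
    exact finset_sup_measurable_nnreal _ _ (fun i => (hvmeas i).comp (hpfxm t))
  have hHm : ∀ t, Measurable (H t) := by
    intro t
    refine measurable_coe_nnreal_real.comp ?_
    refine finset_sup_measurable_nnreal _ _ (fun i => (hvmeas i).comp ?_)
    refine measurable_pi_lambda _ fun j => ?_
    by_cases hj : t < j ∧ j ≤ i
    · simpa only [if_pos hj] using hsmeas j
    · simpa only [if_neg hj] using measurable_const
  have hEm : ∀ t, MeasurableSet (E t) := by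
    intro t
    have : E t = {ω | X ≤ F t ω} ∩ ⋂ k : Fin n, {ω | k < t → ¬ X ≤ F k ω} := by
      ext ω
      simp only [hEdef, Set.mem_setOf_eq, Set.mem_inter_iff, Set.mem_iInter]
    rw [this]
    refine (measurableSet_le measurable_const (hFm t)).inter (MeasurableSet.iInter fun k => ?_)
    by_cases hk : k < t
    · have : {ω | k < t → ¬ X ≤ F k ω} = {ω | X ≤ F k ω}ᶜ := by
        ext ω; simp [hk]
      rw [this]
      exact (measurableSet_le measurable_const (hFm k)).compl
    · have : {ω | k < t → ¬ X ≤ F k ω} = Set.univ := by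
        ext ω; simp [hk]
      rw [this]
      exact MeasurableSet.univ
  have hNm : MeasurableSet N := by
    have : N = ⋂ k : Fin n, {ω | X ≤ F k ω}ᶜ := by
      ext ω; simp [hNdef]
    rw [this]
    exact MeasurableSet.iInter fun k => (measurableSet_le measurable_const (hFm k)).compl
  -- integrability
  have hMInt : Integrable M μ := hInt
  have hIntOf : ∀ (f : Ω → ℝ), Measurable f → (∀ ω, 0 ≤ f ω) → (∀ ω, f ω ≤ M ω) →
      Integrable f μ := by
    intro f hm h0 hle
    refine Integrable.mono' hMInt hm.aestronglyMeasurable (ae_of_all _ fun ω => ?_)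
    rw [Real.norm_eq_abs, abs_of_nonneg (h0 ω)]
    exact hle ω
  have hFInt : ∀ t, Integrable (F t) μ := fun t => hIntOf _ (hFm t) (hF0 t) (hFleM t)
  have hGInt : ∀ t, Integrable (G t) μ := fun t => hIntOf _ (hGm t) (hG0 t) (hGleM t)
  have hHInt : ∀ t, Integrable (H t) μ := fun t => hIntOf _ (hHm t) (hH0 t) (hHleM t)
  -- partition facts
  have hEdisjN : ∀ t ω, ω ∈ E t → ω ∉ N := by
    intro t ω h1 h2
    exact (h2 t) h1.1
  have hEdisj : ∀ t u ω, ω ∈ E t → ω ∈ E u → t = u := by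
    intro t u ω ht hu
    rcases lt_trichotomy t u with h | h | h
    · exact absurd ht.1 (hu.2 t h)
    · exact h
    · exact absurd hu.1 (ht.2 u h)
  have hmemS : ∀ ω (t : Fin n), t ∈ S ω ↔ X ≤ F t ω := by
    intro ω t
    rw [hS ω]
    simp [hFdef]
  have hminE : ∀ ω (hs : (S ω).Nonempty), ω ∈ E ((S ω).min' hs) := by
    intro ω hs
    constructor
    · exact (hmemS ω _).mp ((S ω).min'_mem hs)
    · intro k hk hXk
      have hkS : k ∈ S ω := (hmemS ω k).mpr hXk
      exact absurd ((S ω).min'_le k hkS) (not_le.mpr hk)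
  have hexistsE : ∀ ω, ω ∉ N → ∃ t, ω ∈ E t := by
    intro ω hω
    have hω' : ¬ ∀ k, ¬ X ≤ F k ω := hω
    push_neg at hω'
    obtain ⟨k, hk⟩ := hω'
    have hSne : (S ω).Nonempty := ⟨k, (hmemS ω k).mpr hk⟩
    exact ⟨(S ω).min' hSne, hminE ω hSne⟩
  have hES : ∀ ω t, ω ∈ E t → t ∈ S ω := by
    intro ω t ht
    exact (hmemS ω t).mpr ht.1
  -- pointwise partition identity
  have hpartpt : ∀ (f : Ω → ℝ) ω,
      f ω = N.indicator f ω + ∑ t : Fin n, (E t).indicator f ω := by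
    intro f ω
    by_cases hω : ω ∈ N
    · rw [Set.indicator_of_mem hω]
      have : ∀ t : Fin n, (E t).indicator f ω = 0 := by
        intro t
        exact Set.indicator_of_notMem (fun h => hEdisjN t ω h hω) f
      rw [Finset.sum_congr rfl fun t _ => this t]
      simp
    · obtain ⟨t0, ht0⟩ := hexistsE ω hω
      rw [Set.indicator_of_notMem hω]
      rw [Finset.sum_eq_single_of_mem t0 (mem_univ t0)
        (fun u _ hu => Set.indicator_of_notMem (fun h => hu (hEdisj u t0 ω h ht0)) f)]
      rw [Set.indicator_of_mem ht0]
      ring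
  -- integral partition identity
  have hpartint : ∀ (f : Ω → ℝ), Integrable f μ →
      ∫ ω, f ω ∂μ = ∫ ω, N.indicator f ω ∂μ + ∑ t : Fin n, ∫ ω, (E t).indicator f ω ∂μ := by
    intro f hf
    have h1 : ∫ ω, f ω ∂μ
        = ∫ ω, (N.indicator f ω + ∑ t : Fin n, (E t).indicator f ω) ∂μ := by
      exact integral_congr_ae (ae_of_all _ fun ω => hpartpt f ω)
    rw [h1, integral_add (hf.indicator hNm)
      (integrable_finset_sum _ fun t _ => hf.indicator (hEm t)),
      integral_finset_sum _ fun t _ => hf.indicator (hEm t)]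
  -- measure weights
  set q : ℝ := ∫ ω, N.indicator (fun _ => (1 : ℝ)) ω ∂μ with hqdef
  set m : Fin n → ℝ := fun t => ∫ ω, (E t).indicator (fun _ => (1 : ℝ)) ω ∂μ with hmdef
  have hq_eq : q = (μ N).toReal := by
    rw [hqdef, integral_indicator_const (1 : ℝ) hNm, smul_eq_mul, mul_one, measureReal_def]
  have hm_eq : ∀ t, m t = (μ (E t)).toReal := by
    intro t
    simp only [hmdef]
    rw [integral_indicator_const (1 : ℝ) (hEm t), smul_eq_mul, mul_one, measureReal_def]
  have hq0 : 0 ≤ q := by rw [hq_eq]; exact ENNReal.toReal_nonneg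
  have hm0 : ∀ t, 0 ≤ m t := by intro t; rw [hm_eq]; exact ENNReal.toReal_nonneg
  have hqm1 : q + ∑ t : Fin n, m t = 1 := by
    have := hpartint (fun _ => (1 : ℝ)) (integrable_const 1)
    simp only [integral_const, measure_univ, probReal_univ, ENNReal.toReal_one, smul_eq_mul, one_mul] at this
    rw [hqdef, hmdef]
    linarith [this]
  -- pointwise key bounds
  have hsupM : ∀ ω, ∃ i0 : Fin n, M ω = ((v i0 (pfx ω i0) : NNReal) : ℝ) := by
    intro ω
    obtain ⟨i0, -, hi0⟩ := Finset.exists_mem_eq_sup (univ : Finset (Fin n)) univ_nonempty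
      (fun i => v i (pfx ω i))
    exact ⟨i0, by rw [hMdef]; exact_mod_cast congrArg _ hi0⟩
  have hP2 : ∀ ω, ω ∈ N → M ω ≤ X := by
    intro ω hω
    obtain ⟨i0, hi0⟩ := hsupM ω
    rw [hi0]
    exact le_of_lt (not_le.mp (hω i0))
  have hP1 : ∀ t ω, ω ∈ E t → M ω ≤ F t ω + G t ω + H t ω := by
    intro t ω hω
    obtain ⟨i0, hi0⟩ := hsupM ω
    have hXFt : X ≤ F t ω := hω.1
    have hGt0 := hG0 t ω
    have hHt0 := hH0 t ω
    rcases lt_trichotomy i0 t with hlt | heq | hgt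
    · have h1 : F i0 ω < X := not_le.mp (hω.2 i0 hlt)
      have h1' : M ω < X := by rw [hi0]; exact h1
      linarith
    · have : M ω = F t ω := by rw [hi0, heq]
      linarith
    · -- subadditivity
      have hsub := hvsub i0 (pfx ω i0) (univ.filter (fun j => j ≤ t))
      have e1 : (fun j => if j ∈ univ.filter (fun j => j ≤ t) then pfx ω i0 j else 0)
          = pfx ω t := by
        funext j
        simp only [Finset.mem_filter, Finset.mem_univ, true_and, hpfx]
        by_cases hj : j ≤ t
        · simp [hj, hj.trans hgt.le]
        · simp [hj]
      have e2 : (fun j => if j ∉ univ.filter (fun j => j ≤ t) then pfx ω i0 j else 0)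
          = fun j => if t < j ∧ j ≤ i0 then s j ω else 0 := by
        funext j
        simp only [Finset.mem_filter, Finset.mem_univ, true_and, hpfx]
        by_cases hj : j ≤ t
        · simp [hj, not_lt.mpr hj]
        · by_cases hj2 : j ≤ i0 <;> simp [hj, hj2, not_le.mp hj]
      rw [e1, e2] at hsub
      have hb1 : v i0 (pfx ω t) ≤ ((univ.filter fun i => t < i).sup fun i => v i (pfx ω t)) :=
        Finset.le_sup (f := fun i => v i (pfx ω t))
          (Finset.mem_filter.mpr ⟨mem_univ i0, hgt⟩)
      have hb2 : (v i0 fun j => if t < j ∧ j ≤ i0 then s j ω else 0)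
          ≤ ((univ.filter fun i => t < i).sup fun i =>
              v i (fun j => if t < j ∧ j ≤ i then s j ω else 0)) :=
        Finset.le_sup (f := fun i => v i (fun j => if t < j ∧ j ≤ i then s j ω else 0))
          (Finset.mem_filter.mpr ⟨mem_univ i0, hgt⟩)
      have hkey : M ω ≤ G t ω + H t ω := by
        rw [hi0, hGdef, hHdef]
        calc ((v i0 (pfx ω i0) : NNReal) : ℝ)
            ≤ (((v i0 (pfx ω t) + v i0 fun j => if t < j ∧ j ≤ i0 then s j ω else 0 : NNReal)) : ℝ) :=
              NNReal.coe_le_coe.mpr hsub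
          _ = ((v i0 (pfx ω t) : NNReal) : ℝ)
              + (((v i0 fun j => if t < j ∧ j ≤ i0 then s j ω else 0 : NNReal)) : ℝ) :=
              NNReal.coe_add _ _
          _ ≤ _ := add_le_add (NNReal.coe_le_coe.mpr hb1) (NNReal.coe_le_coe.mpr hb2)
      linarith
  -- integral bounds on the prophet value
  set AQ : ℝ := ∑ t : Fin n, ∫ ω, (E t).indicator (F t) ω ∂μ with hAQdef
  set BQ : ℝ := ∑ t : Fin n, ∫ ω, (E t).indicator (G t) ω ∂μ with hBQdef
  have hNind : ∫ ω, N.indicator M ω ∂μ ≤ X * q := by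
    have hpt : ∀ ω, N.indicator M ω ≤ N.indicator (fun _ => X) ω := by
      intro ω
      by_cases hω : ω ∈ N
      · rw [Set.indicator_of_mem hω, Set.indicator_of_mem hω]
        exact hP2 ω hω
      · rw [Set.indicator_of_notMem hω, Set.indicator_of_notMem hω]
    calc ∫ ω, N.indicator M ω ∂μ ≤ ∫ ω, N.indicator (fun _ => X) ω ∂μ :=
          integral_mono (hMInt.indicator hNm) ((integrable_const X).indicator hNm) hpt
      _ = X * q := by
          rw [integral_indicator_const X hNm, hq_eq, smul_eq_mul, mul_comm, measureReal_def]
  have hAt_lb : ∀ t : Fin n, X * m t ≤ ∫ ω, (E t).indicator (F t) ω ∂μ := by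
    intro t
    have hpt : ∀ ω, (E t).indicator (fun _ => X) ω ≤ (E t).indicator (F t) ω := by
      intro ω
      by_cases hω : ω ∈ E t
      · rw [Set.indicator_of_mem hω, Set.indicator_of_mem hω]
        exact hω.1
      · rw [Set.indicator_of_notMem hω, Set.indicator_of_notMem hω]
    calc X * m t = ∫ ω, (E t).indicator (fun _ => X) ω ∂μ := by
          rw [integral_indicator_const X (hEm t), hm_eq t, smul_eq_mul, mul_comm, measureReal_def]
      _ ≤ _ := integral_mono ((integrable_const X).indicator (hEm t))
          ((hFInt t).indicator (hEm t)) hpt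
  have hEind_le : ∀ t : Fin n, ∫ ω, (E t).indicator M ω ∂μ ≤
      (∫ ω, (E t).indicator (F t) ω ∂μ) + (∫ ω, (E t).indicator (G t) ω ∂μ)
        + ∫ ω, (E t).indicator (H t) ω ∂μ := by
    intro t
    have hfun : (fun ω => (E t).indicator (F t) ω + (E t).indicator (G t) ω
        + (E t).indicator (H t) ω) = (E t).indicator (fun ω => F t ω + G t ω + H t ω) := by
      funext ω
      by_cases hω : ω ∈ E t
      · simp [Set.indicator_of_mem hω]
      · simp [Set.indicator_of_notMem hω]
    have hpt : ∀ ω, (E t).indicator M ω ≤ (E t).indicator (fun ω => F t ω + G t ω + H t ω) ω := by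
      intro ω
      by_cases hω : ω ∈ E t
      · rw [Set.indicator_of_mem hω, Set.indicator_of_mem hω]
        exact hP1 t ω hω
      · rw [Set.indicator_of_notMem hω, Set.indicator_of_notMem hω]
    have hIsum : Integrable (fun ω => F t ω + G t ω + H t ω) μ :=
      ((hFInt t).add (hGInt t)).add (hHInt t)
    calc ∫ ω, (E t).indicator M ω ∂μ
        ≤ ∫ ω, (E t).indicator (fun ω => F t ω + G t ω + H t ω) ω ∂μ :=
          integral_mono (hMInt.indicator (hEm t)) (hIsum.indicator (hEm t)) hpt
      _ = ∫ ω, ((E t).indicator (F t) ω + (E t).indicator (G t) ω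
            + (E t).indicator (H t) ω) ∂μ := by rw [← hfun]
      _ = _ := by
          have h1 : Integrable (fun ω => (E t).indicator (F t) ω + (E t).indicator (G t) ω) μ :=
            ((hFInt t).indicator (hEm t)).add ((hGInt t).indicator (hEm t))
          have h2 : Integrable (fun ω => (E t).indicator (H t) ω) μ :=
            (hHInt t).indicator (hEm t)
          have h3 : Integrable (fun ω => (E t).indicator (F t) ω) μ :=
            (hFInt t).indicator (hEm t)
          have h4 : Integrable (fun ω => (E t).indicator (G t) ω) μ :=
            (hGInt t).indicator (hEm t)
          rw [integral_add h1 h2, integral_add h3 h4]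
  -- independence: the event E t depends on the prefix, H t on the suffix
  have hDt : ∀ t : Fin n, ∫ ω, (E t).indicator (H t) ω ∂μ
      = m t * ∫ ω, H t ω ∂μ := by
    intro t
    set S₁ : Finset (Fin n) := univ.filter (fun j => j ≤ t) with hS1
    set S₂ : Finset (Fin n) := univ.filter (fun j => t < j) with hS2
    have hdisj : Disjoint S₁ S₂ := by
      rw [Finset.disjoint_left]
      intro a ha hb
      rw [hS1, Finset.mem_filter] at ha
      rw [hS2, Finset.mem_filter] at hb
      exact absurd hb.2 (not_lt.mpr ha.2)
    have hbase := hindep.indepFun_finset S₁ S₂ hdisj hsmeas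
    set ext1 : (S₁ → NNReal) → (Fin n → NNReal) :=
      fun y j => if h : j ∈ S₁ then y ⟨j, h⟩ else 0 with hext1
    set ext2 : (S₂ → NNReal) → (Fin n → NNReal) :=
      fun y j => if h : j ∈ S₂ then y ⟨j, h⟩ else 0 with hext2
    have hext1m : Measurable ext1 := by
      refine measurable_pi_lambda _ fun j => ?_
      by_cases h : j ∈ S₁
      · simp only [hext1, dif_pos h]
        exact measurable_pi_apply _
      · simp only [hext1, dif_neg h]
        exact measurable_const
    have hext2m : Measurable ext2 := by
      refine measurable_pi_lambda _ fun j => ?_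
      by_cases h : j ∈ S₂
      · simp only [hext2, dif_pos h]
        exact measurable_pi_apply _
      · simp only [hext2, dif_neg h]
        exact measurable_const
    set pfP : Fin n → (Fin n → NNReal) → (Fin n → NNReal) :=
      fun k x j => if j ≤ k then x j else 0 with hpfP
    have hpfPm : ∀ k, Measurable (pfP k) := by
      intro k
      refine measurable_pi_lambda _ fun j => ?_
      by_cases h : j ≤ k
      · simp only [hpfP, if_pos h]
        exact measurable_pi_apply _
      · simp only [hpfP, if_neg h]
        exact measurable_const
    set A1 : Set (S₁ → NNReal) := {y | X ≤ ((v t (pfP t (ext1 y)) : NNReal) : ℝ) ∧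
      ∀ k, k < t → ¬ X ≤ ((v k (pfP k (ext1 y)) : NNReal) : ℝ)} with hA1
    have hgm : ∀ k : Fin n, Measurable fun y : S₁ → NNReal =>
        ((v k (pfP k (ext1 y)) : NNReal) : ℝ) :=
      fun k => measurable_coe_nnreal_real.comp ((hvmeas k).comp ((hpfPm k).comp hext1m))
    have hA1m : MeasurableSet A1 := by
      have hA1e : A1 = {y | X ≤ ((v t (pfP t (ext1 y)) : NNReal) : ℝ)} ∩
          ⋂ k : Fin n, {y | k < t → ¬ X ≤ ((v k (pfP k (ext1 y)) : NNReal) : ℝ)} := by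
        ext y
        simp only [hA1, Set.mem_setOf_eq, Set.mem_inter_iff, Set.mem_iInter]
      rw [hA1e]
      refine (measurableSet_le measurable_const (hgm t)).inter (MeasurableSet.iInter fun k => ?_)
      by_cases hk : k < t
      · have he : {y | k < t → ¬ X ≤ ((v k (pfP k (ext1 y)) : NNReal) : ℝ)}
            = {y | X ≤ ((v k (pfP k (ext1 y)) : NNReal) : ℝ)}ᶜ := by
          ext y; simp [hk]
        rw [he]
        exact (measurableSet_le measurable_const (hgm k)).compl
      · have he : {y | k < t → ¬ X ≤ ((v k (pfP k (ext1 y)) : NNReal) : ℝ)} = Set.univ := by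
          ext y; simp [hk]
        rw [he]
        exact MeasurableSet.univ
    set φ1 : (S₁ → NNReal) → ℝ := A1.indicator (fun _ => (1:ℝ)) with hφ1
    have hφ1m : Measurable φ1 := measurable_const.indicator hA1m
    set φ2 : (S₂ → NNReal) → ℝ := fun y =>
      ((S₂.sup fun i => v i (fun j => if t < j ∧ j ≤ i then ext2 y j else 0) : NNReal) : ℝ)
      with hφ2
    have hφ2m : Measurable φ2 := by
      refine measurable_coe_nnreal_real.comp ?_
      refine finset_sup_measurable_nnreal _ _ fun i => (hvmeas i).comp ?_
      refine measurable_pi_lambda _ fun j => ?_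
      by_cases h : t < j ∧ j ≤ i
      · simp only [if_pos h]
        exact (measurable_pi_apply j).comp hext2m
      · simp only [if_neg h]
        exact measurable_const
    have hrec : ∀ (ω : Ω) (k : Fin n), k ≤ t →
        pfP k (ext1 (fun i : S₁ => s i ω)) = pfx ω k := by
      intro ω k hk
      funext j
      rw [hpfx]
      simp only [hpfP, hext1]
      by_cases hj : j ≤ k
      · rw [if_pos hj, dif_pos (show j ∈ S₁ by
          rw [hS1]; exact Finset.mem_filter.mpr ⟨mem_univ j, hj.trans hk⟩), if_pos hj]
      · rw [if_neg hj, if_neg hj]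
    have key1 : (E t).indicator (fun _ => (1:ℝ)) = φ1 ∘ (fun ω (i : S₁) => s i ω) := by
      funext ω
      have hiff : ω ∈ E t ↔ (fun i : S₁ => s i ω) ∈ A1 := by
        simp only [hEdef, hA1, Set.mem_setOf_eq, hFdef]
        constructor
        · rintro ⟨h1, h2⟩
          refine ⟨?_, ?_⟩
          · rw [hrec ω t le_rfl]; exact h1
          · intro k hk; rw [hrec ω k hk.le]; exact h2 k hk
        · rintro ⟨h1, h2⟩
          refine ⟨?_, ?_⟩
          · rw [← hrec ω t le_rfl]; exact h1
          · intro k hk; rw [← hrec ω k hk.le]; exact h2 k hk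
      by_cases hω : ω ∈ E t
      · rw [Set.indicator_of_mem hω]
        simp only [Function.comp_apply, hφ1]
        rw [Set.indicator_of_mem (hiff.mp hω)]
      · rw [Set.indicator_of_notMem hω]
        simp only [Function.comp_apply, hφ1]
        rw [Set.indicator_of_notMem (fun h => hω (hiff.mpr h))]
    have key2 : H t = φ2 ∘ (fun ω (i : S₂) => s i ω) := by
      funext ω
      simp only [hHdef, Function.comp_apply, hφ2]
      have hSeq : (univ.filter fun i => t < i) = S₂ := by rw [hS2]
      rw [hSeq]
      congr 1
      refine Finset.sup_congr rfl fun i hi => ?_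
      congr 1
      funext j
      by_cases h : t < j ∧ j ≤ i
      · rw [if_pos h, if_pos h]
        simp only [hext2]
        rw [dif_pos (show j ∈ S₂ by rw [hS2]; exact Finset.mem_filter.mpr ⟨mem_univ j, h.1⟩)]
      · rw [if_neg h, if_neg h]
    have hindicator_mul : (E t).indicator (H t)
        = fun ω => ((E t).indicator (fun _ => (1:ℝ)) ω) * H t ω := by
      funext ω
      by_cases hω : ω ∈ E t
      · simp [Set.indicator_of_mem hω]
      · simp [Set.indicator_of_notMem hω]
    have hIF : IndepFun ((E t).indicator (fun _ => (1:ℝ))) (H t) μ := by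
      rw [key1, key2]
      exact hbase.comp hφ1m hφ2m
    have hind1 : Integrable ((E t).indicator (fun _ => (1:ℝ))) μ :=
      (integrable_const (1:ℝ)).indicator (hEm t)
    have hmul := hIF.integral_mul_eq_mul_integral hind1.aestronglyMeasurable (hHInt t).aestronglyMeasurable
    have hmt : ∫ ω, (E t).indicator (fun _ => (1:ℝ)) ω ∂μ = m t := by
      simp only [hmdef]
    calc ∫ ω, (E t).indicator (H t) ω ∂μ
        = ∫ ω, ((E t).indicator (fun _ => (1:ℝ)) ω) * H t ω ∂μ := by
          rw [← hindicator_mul]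
      _ = (∫ ω, (E t).indicator (fun _ => (1:ℝ)) ω ∂μ) * ∫ ω, H t ω ∂μ := by
          have := hmul
          simpa [Pi.mul_apply] using this
      _ = m t * ∫ ω, H t ω ∂μ := by rw [hmt]
  have hOPT2 : OPT = 2 * X := by rw [hX]; ring
  have hHle : ∀ t : Fin n, ∫ ω, H t ω ∂μ ≤ 2 * X := by
    intro t
    have h1 : ∫ ω, H t ω ∂μ ≤ ∫ ω, M ω ∂μ :=
      integral_mono (hHInt t) hMInt (fun ω => hHleM t ω)
    have h2 : ∫ ω, M ω ∂μ = OPT := hOPT.symm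
    linarith [hOPT2]
  have hsummq : ∑ t : Fin n, m t = 1 - q := by linarith [hqm1]
  have hOPTle : X * q ≤ AQ + BQ := by
    have h1 := hpartint M hMInt
    have h2 : ∑ t : Fin n, ∫ ω, (E t).indicator M ω ∂μ
        ≤ AQ + BQ + (1 - q) * (2 * X) := by
      have h3 : ∑ t : Fin n, ∫ ω, (E t).indicator M ω ∂μ
          ≤ ∑ t : Fin n, ((∫ ω, (E t).indicator (F t) ω ∂μ)
            + (∫ ω, (E t).indicator (G t) ω ∂μ) + m t * (2 * X)) := by
        refine Finset.sum_le_sum fun t _ => ?_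
        have h4 := hEind_le t
        have h5 := hDt t
        have h6 : m t * ∫ ω, H t ω ∂μ ≤ m t * (2*X) :=
          mul_le_mul_of_nonneg_left (hHle t) (hm0 t)
        linarith
      have h7 : ∑ t : Fin n, ((∫ ω, (E t).indicator (F t) ω ∂μ)
            + (∫ ω, (E t).indicator (G t) ω ∂μ) + m t * (2 * X))
          = AQ + BQ + (1 - q) * (2 * X) := by
        rw [Finset.sum_add_distrib, Finset.sum_add_distrib, hAQdef, hBQdef,
          ← Finset.sum_mul, hsummq]
      linarith
    have h8 : 2 * X ≤ X * q + (AQ + BQ + (1 - q) * (2 * X)) := by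
      calc 2 * X = OPT := hOPT2.symm
        _ = ∫ ω, M ω ∂μ := hOPT
        _ = (∫ ω, N.indicator M ω ∂μ) + ∑ t : Fin n, ∫ ω, (E t).indicator M ω ∂μ := h1
        _ ≤ X * q + (AQ + BQ + (1 - q) * (2 * X)) := add_le_add hNind h2
    nlinarith [h8]
  have hAlb : X * (1 - q) ≤ AQ := by
    have h1 : ∑ t : Fin n, X * m t ≤ AQ := by
      rw [hAQdef]
      exact Finset.sum_le_sum fun t _ => hAt_lb t
    rw [← Finset.mul_sum, hsummq] at h1
    exact h1
  have hBQ0 : 0 ≤ BQ := by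
    rw [hBQdef]
    refine Finset.sum_nonneg fun t _ => integral_nonneg fun ω => ?_
    exact Set.indicator_nonneg (fun ω _ => hG0 t ω) ω
  -- coin independence machinery
  set σf : Ω → (Fin n → NNReal) := fun ω i => s i ω with hσf
  have hσm : Measurable σf := measurable_pi_lambda _ fun i => hsmeas i
  set pfP : Fin n → (Fin n → NNReal) → (Fin n → NNReal) :=
    fun k x j => if j ≤ k then x j else 0 with hpfP
  have hpfPm : ∀ k, Measurable (pfP k) := by
    intro k
    refine measurable_pi_lambda _ fun j => ?_
    by_cases h : j ≤ k
    · simp only [hpfP, if_pos h]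
      exact measurable_pi_apply j
    · simp only [hpfP, if_neg h]
      exact measurable_const
  have hrecσ : ∀ (ω : Ω) (k : Fin n), pfP k (σf ω) = pfx ω k := by
    intro ω k
    funext j
    rw [hpfx]
  have hCsetm : ∀ b : Bool, MeasurableSet {ω | C ω = b} :=
    fun b => hCmeas (measurableSet_singleton b)
  have hChalf : ∀ b : Bool, (μ {ω | C ω = b}).toReal = 1/2 := by
    intro b
    cases b
    · have he : {ω | C ω = false} = {ω | C ω = true}ᶜ := by
        ext ω
        simp [Bool.not_eq_true]
      have : μ {ω | C ω = false} = 1/2 := by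
        rw [he, measure_compl (hCsetm true) (measure_ne_top μ _), measure_univ, hCfair]
        exact ENNReal.sub_half ENNReal.one_ne_top
      rw [this]
      simp [ENNReal.toReal_div]
    · rw [hCfair]
      simp [ENNReal.toReal_div]
  have hcoin : ∀ (ψ : (Fin n → NNReal) → ℝ) (b : Bool), Measurable ψ →
      Integrable (fun ω => ψ (σf ω)) μ →
      ∫ ω, (if C ω = b then ψ (σf ω) else 0) ∂μ = (1/2) * ∫ ω, ψ (σf ω) ∂μ := by
    intro ψ b hψm hψint
    set φC : Bool → ℝ := fun c => if c = b then 1 else 0 with hφC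
    have hφCm : Measurable φC := measurable_from_top
    have hIF : IndepFun (φC ∘ C) (ψ ∘ σf) μ := hCindep.comp hφCm hψm
    have hint1 : Integrable (φC ∘ C) μ := by
      have heq1 : (φC ∘ C) = Set.indicator {ω | C ω = b} (fun _ => (1:ℝ)) := by
        funext ω
        by_cases h : C ω = b
        · have h' : ω ∈ {ω | C ω = b} := h
          rw [Set.indicator_of_mem h']
          simp [hφC, h]
        · have h' : ω ∉ {ω | C ω = b} := h
          rw [Set.indicator_of_notMem h']
          simp [hφC, h]
      rw [heq1]
      exact (integrable_const (1:ℝ)).indicator (hCsetm b)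
    have hmul := hIF.integral_mul_eq_mul_integral hint1.aestronglyMeasurable hψint.aestronglyMeasurable
    have heq2 : (fun ω => if C ω = b then ψ (σf ω) else 0)
        = fun ω => (φC ∘ C) ω * (ψ ∘ σf) ω := by
      funext ω
      by_cases h : C ω = b <;> simp [hφC, h]
    have hval : ∫ ω, (φC ∘ C) ω ∂μ = 1/2 := by
      have heq1 : (φC ∘ C) = Set.indicator {ω | C ω = b} (fun _ => (1:ℝ)) := by
        funext ω
        by_cases h : C ω = b
        · have h' : ω ∈ {ω | C ω = b} := h
          rw [Set.indicator_of_mem h']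
          simp [hφC, h]
        · have h' : ω ∉ {ω | C ω = b} := h
          rw [Set.indicator_of_notMem h']
          simp [hφC, h]
      rw [heq1, integral_indicator_const (1:ℝ) (hCsetm b), measureReal_def, hChalf b, smul_eq_mul, mul_one]
    calc ∫ ω, (if C ω = b then ψ (σf ω) else 0) ∂μ
        = ∫ ω, (φC ∘ C) ω * (ψ ∘ σf) ω ∂μ := by rw [← heq2]
      _ = (∫ ω, (φC ∘ C) ω ∂μ) * ∫ ω, (ψ ∘ σf) ω ∂μ := by
          simpa [Pi.mul_apply] using hmul
      _ = (1/2) * ∫ ω, ψ (σf ω) ∂μ := by rw [hval]; rfl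
  -- profile-space versions of the events and payoffs
  set A1' : Fin n → Set (Fin n → NNReal) := fun t =>
    {x | X ≤ ((v t (pfP t x) : NNReal) : ℝ) ∧
      ∀ k, k < t → ¬ X ≤ ((v k (pfP k x) : NNReal) : ℝ)} with hA1'
  have hgm' : ∀ k : Fin n, Measurable fun x : Fin n → NNReal =>
      ((v k (pfP k x) : NNReal) : ℝ) :=
    fun k => measurable_coe_nnreal_real.comp ((hvmeas k).comp (hpfPm k))
  have hA1'm : ∀ t, MeasurableSet (A1' t) := by
    intro t
    have hA1e : A1' t = {x | X ≤ ((v t (pfP t x) : NNReal) : ℝ)} ∩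
        ⋂ k : Fin n, {x | k < t → ¬ X ≤ ((v k (pfP k x) : NNReal) : ℝ)} := by
      ext x
      simp only [hA1', Set.mem_setOf_eq, Set.mem_inter_iff, Set.mem_iInter]
    rw [hA1e]
    refine (measurableSet_le measurable_const (hgm' t)).inter (MeasurableSet.iInter fun k => ?_)
    by_cases hk : k < t
    · have he : {x | k < t → ¬ X ≤ ((v k (pfP k x) : NNReal) : ℝ)}
          = {x | X ≤ ((v k (pfP k x) : NNReal) : ℝ)}ᶜ := by
        ext x; simp [hk]
      rw [he]
      exact (measurableSet_le measurable_const (hgm' k)).compl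
    · have he : {x | k < t → ¬ X ≤ ((v k (pfP k x) : NNReal) : ℝ)} = Set.univ := by
        ext x; simp [hk]
      rw [he]
      exact MeasurableSet.univ
  have hEpre : ∀ t, ∀ ω, ω ∈ E t ↔ σf ω ∈ A1' t := by
    intro t ω
    simp only [hEdef, hA1', Set.mem_setOf_eq, hFdef, hrecσ]
  -- the two coin identities
  have hCF : ∀ t : Fin n, ∫ ω, (if C ω = true then (E t).indicator (F t) ω else 0) ∂μ
      = (1/2) * ∫ ω, (E t).indicator (F t) ω ∂μ := by
    intro t
    set ψ : (Fin n → NNReal) → ℝ :=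
      (A1' t).indicator (fun x => ((v t (pfP t x) : NNReal) : ℝ)) with hψ
    have hψm : Measurable ψ := (hgm' t).indicator (hA1'm t)
    have heq : (fun ω => ψ (σf ω)) = (E t).indicator (F t) := by
      funext ω
      by_cases hω : ω ∈ E t
      · rw [Set.indicator_of_mem hω]
        simp only [hψ]
        rw [Set.indicator_of_mem ((hEpre t ω).mp hω)]
        simp only [hFdef, hrecσ]
      · rw [Set.indicator_of_notMem hω]
        simp only [hψ]
        rw [Set.indicator_of_notMem (fun h => hω ((hEpre t ω).mpr h))]
    have hψint : Integrable (fun ω => ψ (σf ω)) μ := by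
      rw [heq]
      exact (hFInt t).indicator (hEm t)
    calc ∫ ω, (if C ω = true then (E t).indicator (F t) ω else 0) ∂μ
        = ∫ ω, (if C ω = true then ψ (σf ω) else 0) ∂μ := by
          refine integral_congr_ae (ae_of_all _ fun ω => ?_)
          simp only [← heq]
      _ = (1/2) * ∫ ω, ψ (σf ω) ∂μ := hcoin ψ true hψm hψint
      _ = (1/2) * ∫ ω, (E t).indicator (F t) ω ∂μ := by rw [heq]
  have hCG : ∀ t : Fin n, ∫ ω, (if C ω = false then (E t).indicator (G t) ω else 0) ∂μ
      = (1/2) * ∫ ω, (E t).indicator (G t) ω ∂μ := by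
    intro t
    set ψ : (Fin n → NNReal) → ℝ :=
      (A1' t).indicator (fun x =>
        (((univ.filter fun i => t < i).sup fun i => v i (pfP t x) : NNReal) : ℝ)) with hψ
    have hψm : Measurable ψ := by
      refine Measurable.indicator ?_ (hA1'm t)
      refine measurable_coe_nnreal_real.comp ?_
      exact finset_sup_measurable_nnreal _ _ fun i => (hvmeas i).comp (hpfPm t)
    have heq : (fun ω => ψ (σf ω)) = (E t).indicator (G t) := by
      funext ω
      by_cases hω : ω ∈ E t
      · rw [Set.indicator_of_mem hω]
        simp only [hψ]
        rw [Set.indicator_of_mem ((hEpre t ω).mp hω)]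
        simp only [hGdef, hrecσ]
      · rw [Set.indicator_of_notMem hω]
        simp only [hψ]
        rw [Set.indicator_of_notMem (fun h => hω ((hEpre t ω).mpr h))]
    have hψint : Integrable (fun ω => ψ (σf ω)) μ := by
      rw [heq]
      exact (hGInt t).indicator (hEm t)
    calc ∫ ω, (if C ω = false then (E t).indicator (G t) ω else 0) ∂μ
        = ∫ ω, (if C ω = false then ψ (σf ω) else 0) ∂μ := by
          refine integral_congr_ae (ae_of_all _ fun ω => ?_)
          simp only [← heq]
      _ = (1/2) * ∫ ω, ψ (σf ω) ∂μ := hcoin ψ false hψm hψint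
      _ = (1/2) * ∫ ω, (E t).indicator (G t) ω ∂μ := by rw [heq]
  -- membership in Mx, spelled out
  have hMxmem : ∀ (ω : Ω) (t j : Fin n), j ∈ Mx ω t ↔
      (t < j ∧ ∀ k, t < k → v k (pfx ω t) ≤ v j (pfx ω t)) := by
    intro ω t j
    rw [hMx]
    simp [Finset.mem_filter]
  -- the function W that lower-bounds ALG
  set W : Ω → ℝ := fun ω => ∑ t : Fin n,
    ((if C ω = true then (E t).indicator (F t) ω else 0)
      + (if C ω = false then (E t).indicator (G t) ω else 0)) with hW
  have hpieceF : ∀ t : Fin n,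
      Integrable (fun ω => if C ω = true then (E t).indicator (F t) ω else 0) μ := by
    intro t
    have heq : (fun ω => if C ω = true then (E t).indicator (F t) ω else 0)
        = Set.indicator {ω | C ω = true} ((E t).indicator (F t)) := by
      funext ω
      by_cases h : C ω = true
      · have h' : ω ∈ {ω | C ω = true} := h
        rw [Set.indicator_of_mem h', if_pos h]
      · have h' : ω ∉ {ω | C ω = true} := h
        rw [Set.indicator_of_notMem h', if_neg h]
    rw [heq]
    exact ((hFInt t).indicator (hEm t)).indicator (hCsetm true)
  have hpieceG : ∀ t : Fin n,
      Integrable (fun ω => if C ω = false then (E t).indicator (G t) ω else 0) μ := by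
    intro t
    have heq : (fun ω => if C ω = false then (E t).indicator (G t) ω else 0)
        = Set.indicator {ω | C ω = false} ((E t).indicator (G t)) := by
      funext ω
      by_cases h : C ω = false
      · have h' : ω ∈ {ω | C ω = false} := h
        rw [Set.indicator_of_mem h', if_pos h]
      · have h' : ω ∉ {ω | C ω = false} := h
        rw [Set.indicator_of_notMem h', if_neg h]
    rw [heq]
    exact ((hGInt t).indicator (hEm t)).indicator (hCsetm false)
  have hWint : Integrable W μ := by
    rw [hW]
    exact integrable_finset_sum _ fun t _ => (hpieceF t).add (hpieceG t)
  have hWval : ∫ ω, W ω ∂μ = (1/2) * (AQ + BQ) := by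
    calc ∫ ω, W ω ∂μ
        = ∑ t : Fin n, ∫ ω, ((if C ω = true then (E t).indicator (F t) ω else 0)
            + (if C ω = false then (E t).indicator (G t) ω else 0)) ∂μ := by
          simp only [hW]
          exact integral_finset_sum _ fun t _ => (hpieceF t).add (hpieceG t)
      _ = ∑ t : Fin n, ((1/2) * ∫ ω, (E t).indicator (F t) ω ∂μ
            + (1/2) * ∫ ω, (E t).indicator (G t) ω ∂μ) := by
          refine Finset.sum_congr rfl fun t _ => ?_
          rw [integral_add (hpieceF t) (hpieceG t), hCF t, hCG t]
      _ = (1/2) * (AQ + BQ) := by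
          rw [hAQdef, hBQdef, Finset.sum_add_distrib, ← Finset.mul_sum, ← Finset.mul_sum]
          ring
  -- pointwise:  W ≤ ALG
  have hWle : ∀ ω, W ω ≤ ALG ω := by
    intro ω
    by_cases hNe : (S ω).Nonempty
    · have hE0 : ω ∈ E ((S ω).min' hNe) := hminE ω hNe
      have hcollapse : ∀ g : Fin n → Ω → ℝ,
          ∑ t : Fin n, (E t).indicator (g t) ω = g ((S ω).min' hNe) ω := by
        intro g
        rw [Finset.sum_eq_single_of_mem ((S ω).min' hNe) (mem_univ _)
          (fun u _ hu => Set.indicator_of_notMem (fun h => hu (hEdisj u _ ω h hE0)) _),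
          Set.indicator_of_mem hE0]
      rw [hALG ω, dif_pos hNe]
      by_cases hC : C ω = true
      · have hWeq : W ω = ∑ t : Fin n, (E t).indicator (F t) ω := by
          simp [hW, hC]
        rw [if_pos hC, hWeq, hcollapse F]
      · have hCf : C ω = false := by
          cases hc : C ω
          · rfl
          · exact absurd hc hC
        have hWeq : W ω = ∑ t : Fin n, (E t).indicator (G t) ω := by
          simp [hW, hCf]
        rw [if_neg hC, hWeq, hcollapse G]
        by_cases h2 : (Mx ω ((S ω).min' hNe)).Nonempty
        · rw [dif_pos h2]
          obtain ⟨hJ1, hJ2⟩ := (hMxmem ω _ _).mp (Finset.min'_mem _ h2)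
          have hGle : G ((S ω).min' hNe) ω
              ≤ ((v ((Mx ω ((S ω).min' hNe)).min' h2) (pfx ω ((S ω).min' hNe)) : NNReal) : ℝ) := by
            simp only [hGdef]
            exact NNReal.coe_le_coe.mpr
              (Finset.sup_le fun k hk => hJ2 k (Finset.mem_filter.mp hk).2)
          have hmono2 : ((v ((Mx ω ((S ω).min' hNe)).min' h2) (pfx ω ((S ω).min' hNe)) : NNReal) : ℝ)
              ≤ ((v ((Mx ω ((S ω).min' hNe)).min' h2)
                  (pfx ω ((Mx ω ((S ω).min' hNe)).min' h2)) : NNReal) : ℝ) :=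
            NNReal.coe_le_coe.mpr (hvmono _ (hpfxmono ω _ _ hJ1.le))
          exact le_trans hGle hmono2
        · rw [dif_neg h2]
          have hfe : (univ.filter fun i => ((S ω).min' hNe) < i) = (∅ : Finset (Fin n)) := by
            rcases Finset.eq_empty_or_nonempty
              (univ.filter fun i => ((S ω).min' hNe) < i) with he | hne2
            · exact he
            · exfalso
              obtain ⟨b, hb, hbmax⟩ := Finset.exists_max_image _
                (fun i => v i (pfx ω ((S ω).min' hNe))) hne2
              exact h2 ⟨b, (hMxmem ω _ b).mpr ⟨(Finset.mem_filter.mp hb).2,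
                fun k hk => hbmax k (Finset.mem_filter.mpr ⟨mem_univ k, hk⟩)⟩⟩
          have hzero : G ((S ω).min' hNe) ω = 0 := by
            simp only [hGdef, hfe]
            simp
          exact hzero.le
    · have hnotE : ∀ t : Fin n, ω ∉ E t := fun t ht => hNe ⟨t, hES ω t ht⟩
      have hWeq : W ω = 0 := by
        simp only [hW]
        refine Finset.sum_eq_zero fun t _ => ?_
        rw [Set.indicator_of_notMem (hnotE t), Set.indicator_of_notMem (hnotE t)]
        cases C ω <;> simp
      rw [hWeq, hALG ω, dif_neg hNe]
  -- measurability and integrability of ALG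
  have hMxsetm : ∀ (t j : Fin n), MeasurableSet {ω | j ∈ Mx ω t} := by
    intro t j
    by_cases htj : t < j
    · have he : {ω | j ∈ Mx ω t}
          = ⋂ k : Fin n, {ω | t < k → v k (pfx ω t) ≤ v j (pfx ω t)} := by
        ext ω
        simp only [Set.mem_setOf_eq, Set.mem_iInter, hMxmem, htj, true_and]
      rw [he]
      refine MeasurableSet.iInter fun k => ?_
      by_cases hk : t < k
      · have he2 : {ω | t < k → v k (pfx ω t) ≤ v j (pfx ω t)}
            = {ω | v k (pfx ω t) ≤ v j (pfx ω t)} := by ext ω; simp [hk]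
        rw [he2]
        exact measurableSet_le ((hvmeas k).comp (hpfxm t)) ((hvmeas j).comp (hpfxm t))
      · have he2 : {ω | t < k → v k (pfx ω t) ≤ v j (pfx ω t)} = Set.univ := by
          ext ω; simp [hk]
        rw [he2]
        exact MeasurableSet.univ
    · have he : {ω | j ∈ Mx ω t} = ∅ := by
        ext ω
        simp [hMxmem, htj]
      rw [he]
      exact MeasurableSet.empty
  set EJ : Fin n → Fin n → Set Ω :=
    fun t j => {ω | j ∈ Mx ω t ∧ ∀ k, k < j → k ∉ Mx ω t} with hEJ
  have hEJm : ∀ t j, MeasurableSet (EJ t j) := by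
    intro t j
    have he : EJ t j = {ω | j ∈ Mx ω t} ∩ ⋂ k : Fin n, {ω | k < j → k ∉ Mx ω t} := by
      ext ω
      simp only [hEJ, Set.mem_setOf_eq, Set.mem_inter_iff, Set.mem_iInter]
    rw [he]
    refine (hMxsetm t j).inter (MeasurableSet.iInter fun k => ?_)
    by_cases hk : k < j
    · have he2 : {ω | k < j → k ∉ Mx ω t} = {ω | k ∈ Mx ω t}ᶜ := by
        ext ω; simp [hk]
      rw [he2]
      exact (hMxsetm t k).compl
    · have he2 : {ω | k < j → k ∉ Mx ω t} = Set.univ := by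
        ext ω; simp [hk]
      rw [he2]
      exact MeasurableSet.univ
  set R : Fin n → Ω → ℝ := fun t ω => ∑ j : Fin n, (EJ t j).indicator (F j) ω with hR
  have hRm : ∀ t, Measurable (R t) := by
    intro t
    simp only [hR]
    exact Finset.measurable_sum _ fun j _ => (hFm j).indicator (hEJm t j)
  set ALGe : Ω → ℝ := fun ω => ∑ t : Fin n, (E t).indicator
      (fun ω => if C ω = true then F t ω else R t ω) ω with hALGe
  have hALGem : Measurable ALGe := by
    simp only [hALGe]
    refine Finset.measurable_sum _ fun t _ => ?_
    refine Measurable.indicator ?_ (hEm t)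
    exact Measurable.ite (hCsetm true) (hFm t) (hRm t)
  have hALGeq : ALG = ALGe := by
    funext ω
    by_cases hNe : (S ω).Nonempty
    · have hE0 : ω ∈ E ((S ω).min' hNe) := hminE ω hNe
      have hcollapse2 : ALGe ω
          = (if C ω = true then F ((S ω).min' hNe) ω else R ((S ω).min' hNe) ω) := by
        simp only [hALGe]
        rw [Finset.sum_eq_single_of_mem ((S ω).min' hNe) (mem_univ _)
          (fun u _ hu => Set.indicator_of_notMem (fun h => hu (hEdisj u _ ω h hE0)) _),
          Set.indicator_of_mem hE0]
      rw [hALG ω, dif_pos hNe, hcollapse2]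
      by_cases hC : C ω = true
      · rw [if_pos hC, if_pos hC]
      · rw [if_neg hC, if_neg hC]
        by_cases h2 : (Mx ω ((S ω).min' hNe)).Nonempty
        · rw [dif_pos h2]
          have hJmem : (Mx ω ((S ω).min' hNe)).min' h2 ∈ Mx ω ((S ω).min' hNe) :=
            Finset.min'_mem _ h2
          have hJleast : ∀ k, k < (Mx ω ((S ω).min' hNe)).min' h2
              → k ∉ Mx ω ((S ω).min' hNe) := by
            intro k hk hkmem
            exact absurd (Finset.min'_le _ k hkmem) (not_le.mpr hk)
          have hEJmem : ω ∈ EJ ((S ω).min' hNe) ((Mx ω ((S ω).min' hNe)).min' h2) :=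
            ⟨hJmem, hJleast⟩
          have hRval : R ((S ω).min' hNe) ω = F ((Mx ω ((S ω).min' hNe)).min' h2) ω := by
            simp only [hR]
            rw [Finset.sum_eq_single_of_mem ((Mx ω ((S ω).min' hNe)).min' h2) (mem_univ _)
              (fun u _ hu => Set.indicator_of_notMem ?_ _), Set.indicator_of_mem hEJmem]
            intro h
            obtain ⟨hu1, hu2⟩ := h
            rcases lt_trichotomy u ((Mx ω ((S ω).min' hNe)).min' h2) with hlt | heq' | hgt
            · exact absurd hu1 (hJleast u hlt)
            · exact hu heq'
            · exact absurd hJmem (hu2 _ hgt)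
          rw [hRval]
        · rw [dif_neg h2]
          have hRval : R ((S ω).min' hNe) ω = 0 := by
            simp only [hR]
            exact Finset.sum_eq_zero fun j _ =>
              Set.indicator_of_notMem (fun h => h2 ⟨j, h.1⟩) _
          rw [hRval]
    · rw [hALG ω, dif_neg hNe]
      have hnotE : ∀ t : Fin n, ω ∉ E t := fun t ht => hNe ⟨t, hES ω t ht⟩
      simp only [hALGe]
      exact (Finset.sum_eq_zero fun t _ => Set.indicator_of_notMem (hnotE t) _).symm
  have hALGle : ∀ ω, ALG ω ≤ M ω := by
    intro ω
    rw [hALG ω]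
    split_ifs with h h1 h2
    · exact hFleM _ ω
    · exact hFleM _ ω
    · exact hM0 ω
    · exact hM0 ω
  have hALG0 : ∀ ω, 0 ≤ ALG ω := by
    intro ω
    rw [hALG ω]
    split_ifs
    · exact NNReal.coe_nonneg _
    · exact NNReal.coe_nonneg _
    · exact le_refl 0
    · exact le_refl 0
  have hALGint : Integrable ALG μ := by
    refine Integrable.mono' hMInt ?_ (ae_of_all _ fun ω => ?_)
    · rw [hALGeq]
      exact hALGem.aestronglyMeasurable
    · rw [Real.norm_eq_abs, abs_of_nonneg (hALG0 ω)]
      exact hALGle ω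
  -- conclusion
  have hintALG : (1/2) * (AQ + BQ) ≤ ∫ ω, ALG ω ∂μ := by
    rw [← hWval]
    exact integral_mono hWint hALGint hWle
  have hq1 : q ≤ 1 := by
    have : 0 ≤ ∑ t : Fin n, m t := Finset.sum_nonneg fun t _ => hm0 t
    linarith
  rw [hOPT2]
  rcases le_or_gt q (1/2) with hq | hq
  · have h1 : X * (1/2) ≤ X * (1 - q) := mul_le_mul_of_nonneg_left (by linarith) hX0
    linarith [hAlb, hBQ0, hintALG]
  · have h1 : X * (1/2) ≤ X * q := mul_le_mul_of_nonneg_left hq.le hX0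
    linarith [hOPTle, hintALG]
end

section
/- Let A be a finite set with |A| = n, let best be a function assigning to each nonempty subset S ⊆ A an element best(S) ∈ S, and fix an integer k with 1 ≤ k < n. Let a_1, …, a_n be a uniformly random ordering of A, and let T be the least t ∈ {k+1, …, n} such that a_t = best({a_1, …, a_t}), with T = ∞ if no such t exists. Then for every t with k ≤ t ≤ n and every subset S ⊆ A with |S| = t, Pr[T > t | {a_1, …, a_t} = S] = k/t. -/
open Finset

attribute [local instance] Classical.propDecidable

section Aux
variable {α : Type*} [Fintype α] [DecidableEq α]

lemma pref_succ {n : ℕ} (π : Fin n ≃ α) (t : ℕ) (ht : t < n) :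
    ((univ.filter (fun i : Fin n => (i : ℕ) < t + 1)).image π)
      = insert (π ⟨t, ht⟩) ((univ.filter (fun i : Fin n => (i : ℕ) < t)).image π) := by
  rw [← Finset.image_insert]
  congr 1
  ext i
  simp only [Finset.mem_filter, Finset.mem_univ, true_and, Finset.mem_insert, Fin.ext_iff]
  omega

lemma pref_not_mem {n : ℕ} (π : Fin n ≃ α) (t : ℕ) (ht : t < n) :
    π ⟨t, ht⟩ ∉ ((univ.filter (fun i : Fin n => (i : ℕ) < t)).image π) := by
  simp only [Finset.mem_image, Finset.mem_filter, Finset.mem_univ, true_and, not_exists]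
  rintro i ⟨hi, hπ⟩
  rw [π.injective hπ] at hi
  simp at hi

lemma pref_mono {n : ℕ} (π : Fin n ≃ α) {s t : ℕ} (hst : s ≤ t) :
    ((univ.filter (fun i : Fin n => (i : ℕ) < s)).image π)
      ⊆ ((univ.filter (fun i : Fin n => (i : ℕ) < t)).image π) := by
  apply Finset.image_subset_image
  intro i hi
  simp only [Finset.mem_filter, Finset.mem_univ, true_and] at hi ⊢
  omega

lemma pref_nonempty {n : ℕ} (π : Fin n ≃ α) {s : ℕ} (hs : 1 ≤ s) (hn : 0 < n) :
    ((univ.filter (fun i : Fin n => (i : ℕ) < s)).image π).Nonempty := by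
  refine ⟨π ⟨0, hn⟩, ?_⟩
  simp only [Finset.mem_image, Finset.mem_filter, Finset.mem_univ, true_and]
  exact ⟨⟨0, hn⟩, by simp; omega, rfl⟩

lemma filter_inst {β : Type*} (p : β → Prop) (h1 h2 : DecidablePred p) (s : Finset β) :
    @Finset.filter β p h1 s = @Finset.filter β p h2 s := by
  rw [Subsingleton.elim h1 h2]

lemma fiber_card {n : ℕ} (hcard : Fintype.card α = n) (t : ℕ) (ht : t < n)
    (S : Finset α) (hS : S.card = t)
    (Q : (Fin n ≃ α) → Prop)
    (hQ : ∀ (π : Fin n ≃ α) (a b : α), a ∉ S → b ∉ S → Q π → Q (π.trans (Equiv.swap a b)))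
    (hQS : ∀ π, Q π → π ⟨t, ht⟩ ∉ S)
    (x : α) (hx : x ∉ S) :
    (n - t) * (univ.filter (fun π : Fin n ≃ α => Q π ∧ π ⟨t, ht⟩ = x)).card
      = (univ.filter Q).card := by
  have hfib : ∀ y : α, y ∉ S →
      (univ.filter (fun π : Fin n ≃ α => Q π ∧ π ⟨t, ht⟩ = x)).card
        = (univ.filter (fun π : Fin n ≃ α => Q π ∧ π ⟨t, ht⟩ = y)).card := by
    intro y hy
    refine Finset.card_bij' (fun π _ => π.trans (Equiv.swap x y))
      (fun π _ => π.trans (Equiv.swap x y)) ?_ ?_ ?_ ?_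
    · intro π hπ
      simp only [Finset.mem_filter, Finset.mem_univ, true_and] at hπ ⊢
      refine ⟨hQ π x y hx hy hπ.1, ?_⟩
      simp [Equiv.trans_apply, hπ.2]
    · intro π hπ
      simp only [Finset.mem_filter, Finset.mem_univ, true_and] at hπ ⊢
      refine ⟨hQ π x y hx hy hπ.1, ?_⟩
      simp [Equiv.trans_apply, hπ.2, Equiv.swap_apply_right]
    · intro π _
      simp [Equiv.trans_assoc]
    · intro π _
      simp [Equiv.trans_assoc]
  have hdecomp : (univ.filter Q)
      = Sᶜ.biUnion (fun y => univ.filter (fun π : Fin n ≃ α => Q π ∧ π ⟨t, ht⟩ = y)) := by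
    ext π
    simp only [Finset.mem_filter, Finset.mem_univ, true_and, Finset.mem_biUnion,
      Finset.mem_compl]
    constructor
    · intro hq
      exact ⟨π ⟨t, ht⟩, hQS π hq, hq, rfl⟩
    · rintro ⟨y, _, hq, _⟩
      exact hq
  rw [hdecomp, Finset.card_biUnion]
  · have : ∀ y ∈ Sᶜ, (univ.filter (fun π : Fin n ≃ α => Q π ∧ π ⟨t, ht⟩ = y)).card
        = (univ.filter (fun π : Fin n ≃ α => Q π ∧ π ⟨t, ht⟩ = x)).card := by
      intro y hy
      exact (hfib y (Finset.mem_compl.mp hy)).symm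
    rw [Finset.sum_congr rfl this, Finset.sum_const, smul_eq_mul, Finset.card_compl, hcard, hS]
  · intro a _ b _ hab
    simp only [Finset.disjoint_left, Finset.mem_filter, Finset.mem_univ, true_and]
    rintro π ⟨_, h1⟩ ⟨_, h2⟩
    exact hab (h1 ▸ h2 ▸ rfl)


lemma cardA {n : ℕ} (hcard : Fintype.card α = n) :
    ∀ t, t ≤ n → ∀ S : Finset α, S.card = t →
      (univ.filter (fun π : Fin n ≃ α =>
        (univ.filter (fun i : Fin n => (i : ℕ) < t)).image π = S)).card
        = t.factorial * (n - t).factorial := by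
  intro t
  induction t with
  | zero =>
    intro _ S hS
    rw [Finset.card_eq_zero] at hS
    subst hS
    have h0 : (univ.filter (fun i : Fin n => (i : ℕ) < 0)) = (∅ : Finset (Fin n)) := by
      ext i; simp
    have : (univ.filter (fun π : Fin n ≃ α =>
        (univ.filter (fun i : Fin n => (i : ℕ) < 0)).image π = (∅ : Finset α)))
        = (univ : Finset (Fin n ≃ α)) := by
      ext π; simp [h0]
    rw [this, Finset.card_univ, Fintype.card_equiv ((Fintype.equivFinOfCardEq hcard).symm)]
    simp
  | succ t ih =>
    intro hsn S hS
    have ht : t < n := hsn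
    have htn : t ≤ n := le_of_lt ht
    -- decomposition
    have hiff : ∀ π : Fin n ≃ α,
        (univ.filter (fun i : Fin n => (i : ℕ) < t + 1)).image π = S ↔
        (π ⟨t, ht⟩ ∈ S ∧
          (univ.filter (fun i : Fin n => (i : ℕ) < t)).image π = S.erase (π ⟨t, ht⟩)) := by
      intro π
      rw [pref_succ π t ht]
      constructor
      · intro h
        have hmem : π ⟨t, ht⟩ ∈ S := h ▸ Finset.mem_insert_self _ _
        refine ⟨hmem, ?_⟩
        rw [← h, Finset.erase_insert (pref_not_mem π t ht)]
      · rintro ⟨hmem, h⟩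
        rw [h, Finset.insert_erase hmem]
    have hdecomp : (univ.filter (fun π : Fin n ≃ α =>
        (univ.filter (fun i : Fin n => (i : ℕ) < t + 1)).image π = S))
        = S.biUnion (fun x => univ.filter (fun π : Fin n ≃ α =>
            (univ.filter (fun i : Fin n => (i : ℕ) < t)).image π = S.erase x ∧
            π ⟨t, ht⟩ = x)) := by
      ext π
      simp only [Finset.mem_filter, Finset.mem_univ, true_and, Finset.mem_biUnion]
      rw [hiff π]
      constructor
      · rintro ⟨hmem, h⟩
        exact ⟨π ⟨t, ht⟩, hmem, h, rfl⟩
      · rintro ⟨x, hx, h, hval⟩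
        subst hval
        exact ⟨hx, h⟩
    have hfiber : ∀ x ∈ S, (univ.filter (fun π : Fin n ≃ α =>
        (univ.filter (fun i : Fin n => (i : ℕ) < t)).image π = S.erase x ∧
        π ⟨t, ht⟩ = x)).card = t.factorial * (n - t - 1).factorial := by
      intro x hxS
      have hScard : (S.erase x).card = t := by
        rw [Finset.card_erase_of_mem hxS, hS]
        omega
      have hxnot : x ∉ S.erase x := Finset.notMem_erase x S
      have hQ : ∀ (π : Fin n ≃ α) (a b : α), a ∉ S.erase x → b ∉ S.erase x →
          (univ.filter (fun i : Fin n => (i : ℕ) < t)).image π = S.erase x →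
          (univ.filter (fun i : Fin n => (i : ℕ) < t)).image (π.trans (Equiv.swap a b))
            = S.erase x := by
        intro π a b ha hb h
        have : ⇑(π.trans (Equiv.swap a b)) = (Equiv.swap a b) ∘ ⇑π := rfl
        rw [this, ← Finset.image_image, h]
        apply Finset.image_congr (g := id) ?_ |>.trans (Finset.image_id)
        intro z hz
        exact Equiv.swap_apply_of_ne_of_ne (fun h' => ha (h' ▸ hz)) (fun h' => hb (h' ▸ hz))
      have hQS : ∀ π : Fin n ≃ α,
          (univ.filter (fun i : Fin n => (i : ℕ) < t)).image π = S.erase x →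
          π ⟨t, ht⟩ ∉ S.erase x := by
        intro π h
        rw [← h]
        exact pref_not_mem π t ht
      have hkey := fiber_card hcard t ht (S.erase x) hScard _ hQ hQS x hxnot
      have h0 : 0 < n - t := by omega
      obtain ⟨m, hm⟩ : ∃ m, n - t = m + 1 := ⟨n - t - 1, by omega⟩
      have hih : (univ.filter (fun π : Fin n ≃ α =>
              (univ.filter (fun i : Fin n => (i : ℕ) < t)).image π = S.erase x)).card
          = (n - t) * (t.factorial * (n - t - 1).factorial) := by
        rw [ih htn (S.erase x) hScard, show n - t - 1 = m from by omega, hm,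
          Nat.factorial_succ]
        ring
      have hfib := Nat.eq_of_mul_eq_mul_left h0 (hkey.trans (by
        convert hih using 2 <;> apply filter_inst))
      convert hfib using 2 <;> apply filter_inst
    rw [hdecomp, Finset.card_biUnion, Finset.sum_congr rfl hfiber, Finset.sum_const,
      smul_eq_mul, hS]
    · rw [Nat.factorial_succ]
      have : n - (t + 1) = n - t - 1 := by omega
      rw [this]
      ring
    · intro a _ b _ hab
      simp only [Finset.disjoint_left, Finset.mem_filter, Finset.mem_univ, true_and]
      rintro π ⟨_, h1⟩ ⟨_, h2⟩
      exact hab (h1 ▸ h2 ▸ rfl)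


lemma cardB {n : ℕ} (hcard : Fintype.card α = n)
    (best : Finset α → α) (hbest : ∀ S : Finset α, S.Nonempty → best S ∈ S)
    (k : ℕ) (hk1 : 1 ≤ k) :
    ∀ t, k ≤ t → t ≤ n → ∀ S : Finset α, S.card = t →
      (univ.filter (fun π : Fin n ≃ α =>
        (univ.filter (fun i : Fin n => (i : ℕ) < t)).image π = S ∧
        ∀ s, k + 1 ≤ s → s ≤ t →
          ¬ ((π.symm (best ((univ.filter (fun i : Fin n => (i : ℕ) < s)).image π)) : ℕ)
              = s - 1))).card
        = k * (t - 1).factorial * (n - t).factorial := by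
  intro t hkt
  induction t, hkt using Nat.le_induction with
  | base =>
    intro hkn S hS
    have hvac : ∀ π : Fin n ≃ α,
        ((univ.filter (fun i : Fin n => (i : ℕ) < k)).image π = S ∧
          ∀ s, k + 1 ≤ s → s ≤ k →
            ¬ ((π.symm (best ((univ.filter (fun i : Fin n => (i : ℕ) < s)).image π)) : ℕ)
                = s - 1)) ↔
        ((univ.filter (fun i : Fin n => (i : ℕ) < k)).image π = S) := by
      intro π
      constructor
      · exact fun h => h.1
      · intro h
        exact ⟨h, fun s hs1 hs2 => absurd (hs1.trans hs2) (by omega)⟩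
    rw [Finset.filter_congr (fun π _ => hvac π), cardA hcard k hkn S hS]
    obtain ⟨m, hm⟩ : ∃ m, k = m + 1 := ⟨k - 1, by omega⟩
    rw [show k - 1 = m from by omega, hm, Nat.factorial_succ]
  | succ t hkt ih =>
    intro hs S hS
    have ht : t < n := hs
    have htn : t ≤ n := le_of_lt ht
    have hn0 : 0 < n := by omega
    have hSne : S.Nonempty := Finset.card_pos.mp (by omega)
    have hbS : best S ∈ S := hbest S hSne
    -- the stopping condition at time t+1 says π ⟨t⟩ = best S
    have hfinval : ∀ (π : Fin n ≃ α) (b : α),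
        ((π.symm b : ℕ) = t) ↔ b = π ⟨t, ht⟩ := by
      intro π b
      constructor
      · intro h
        have : π.symm b = ⟨t, ht⟩ := Fin.ext h
        rw [← this, Equiv.apply_symm_apply]
      · intro h
        rw [h, Equiv.symm_apply_apply]
    -- survive invariance under swaps outside the prefix set
    have hsurv_swap : ∀ (π : Fin n ≃ α) (a b : α) (T : Finset α),
        a ∉ T → b ∉ T →
        (univ.filter (fun i : Fin n => (i : ℕ) < t)).image π = T →
        ∀ s, k + 1 ≤ s → s ≤ t →
        (((π.trans (Equiv.swap a b)).symm
            (best ((univ.filter (fun i : Fin n => (i : ℕ) < s)).image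
              (π.trans (Equiv.swap a b)))) : ℕ) = s - 1
          ↔ ((π.symm (best ((univ.filter (fun i : Fin n => (i : ℕ) < s)).image π)) : ℕ)
              = s - 1)) := by
      intro π a b T haT hbT hT s hs1 hs2
      have hsub : ((univ.filter (fun i : Fin n => (i : ℕ) < s)).image π) ⊆ T := by
        rw [← hT]; exact pref_mono π hs2
      have hfix : ∀ z ∈ ((univ.filter (fun i : Fin n => (i : ℕ) < s)).image π),
          Equiv.swap a b z = z := by
        intro z hz
        exact Equiv.swap_apply_of_ne_of_ne
          (fun h' => haT (h' ▸ hsub hz)) (fun h' => hbT (h' ▸ hsub hz))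
      have himg : (univ.filter (fun i : Fin n => (i : ℕ) < s)).image (π.trans (Equiv.swap a b))
          = (univ.filter (fun i : Fin n => (i : ℕ) < s)).image π := by
        have : ⇑(π.trans (Equiv.swap a b)) = (Equiv.swap a b) ∘ ⇑π := rfl
        rw [this, ← Finset.image_image]
        exact (Finset.image_congr (fun z hz => hfix z hz)).trans Finset.image_id
      rw [himg]
      have hbmem : best ((univ.filter (fun i : Fin n => (i : ℕ) < s)).image π)
          ∈ ((univ.filter (fun i : Fin n => (i : ℕ) < s)).image π) :=
        hbest _ (pref_nonempty π (by omega) hn0)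
      rw [Equiv.symm_trans_apply, Equiv.symm_swap, hfix _ hbmem]
    -- decomposition of the event at time t+1
    have hiff : ∀ π : Fin n ≃ α,
        ((univ.filter (fun i : Fin n => (i : ℕ) < t + 1)).image π = S ∧
          ∀ s, k + 1 ≤ s → s ≤ t + 1 →
            ¬ ((π.symm (best ((univ.filter (fun i : Fin n => (i : ℕ) < s)).image π)) : ℕ)
                = s - 1)) ↔
        (π ⟨t, ht⟩ ∈ S.erase (best S) ∧
          ((univ.filter (fun i : Fin n => (i : ℕ) < t)).image π = S.erase (π ⟨t, ht⟩) ∧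
          ∀ s, k + 1 ≤ s → s ≤ t →
            ¬ ((π.symm (best ((univ.filter (fun i : Fin n => (i : ℕ) < s)).image π)) : ℕ)
                = s - 1))) := by
      intro π
      constructor
      · rintro ⟨hP, hsurv⟩
        have hmem : π ⟨t, ht⟩ ∈ S := by
          rw [← hP, pref_succ π t ht]; exact Finset.mem_insert_self _ _
        have hprefT : (univ.filter (fun i : Fin n => (i : ℕ) < t)).image π
            = S.erase (π ⟨t, ht⟩) := by
          rw [← hP, pref_succ π t ht, Finset.erase_insert (pref_not_mem π t ht)]
        have hne : π ⟨t, ht⟩ ≠ best S := by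
          intro hbad
          apply hsurv (t + 1) (by omega) le_rfl
          rw [hP]
          simpa using (hfinval π (best S)).mpr hbad.symm
        refine ⟨Finset.mem_erase.mpr ⟨?_, hmem⟩, hprefT, fun s hs1 hs2 => hsurv s hs1 (by omega)⟩
        exact fun h => hne (by rw [h])
      · rintro ⟨hmem, hprefT, hsurv⟩
        obtain ⟨hne, hmemS⟩ := Finset.mem_erase.mp hmem
        have hP : (univ.filter (fun i : Fin n => (i : ℕ) < t + 1)).image π = S := by
          rw [pref_succ π t ht, hprefT, Finset.insert_erase hmemS]
        refine ⟨hP, fun s hs1 hs2 => ?_⟩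
        rcases Nat.lt_or_ge s (t + 1) with hlt | hge
        · exact hsurv s hs1 (by omega)
        · have hst : s = t + 1 := by omega
          subst hst
          rw [hP]
          simp only [Nat.add_sub_cancel]
          intro hbad
          exact hne (((hfinval π (best S)).mp hbad).symm ▸ rfl)
    have hdecomp : (univ.filter (fun π : Fin n ≃ α =>
        (univ.filter (fun i : Fin n => (i : ℕ) < t + 1)).image π = S ∧
        ∀ s, k + 1 ≤ s → s ≤ t + 1 →
          ¬ ((π.symm (best ((univ.filter (fun i : Fin n => (i : ℕ) < s)).image π)) : ℕ)
              = s - 1)))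
        = (S.erase (best S)).biUnion (fun x => univ.filter (fun π : Fin n ≃ α =>
            ((univ.filter (fun i : Fin n => (i : ℕ) < t)).image π = S.erase x ∧
            ∀ s, k + 1 ≤ s → s ≤ t →
              ¬ ((π.symm (best ((univ.filter (fun i : Fin n => (i : ℕ) < s)).image π)) : ℕ)
                  = s - 1)) ∧
            π ⟨t, ht⟩ = x)) := by
      ext π
      simp only [Finset.mem_filter, Finset.mem_univ, true_and, Finset.mem_biUnion]
      rw [hiff π]
      constructor
      · rintro ⟨hmem, h1, h2⟩
        exact ⟨π ⟨t, ht⟩, hmem, ⟨h1, h2⟩, rfl⟩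
      · rintro ⟨x, hx, ⟨h1, h2⟩, hval⟩
        subst hval
        exact ⟨hx, h1, h2⟩
    have hfiber : ∀ x ∈ S.erase (best S), (univ.filter (fun π : Fin n ≃ α =>
        ((univ.filter (fun i : Fin n => (i : ℕ) < t)).image π = S.erase x ∧
        ∀ s, k + 1 ≤ s → s ≤ t →
          ¬ ((π.symm (best ((univ.filter (fun i : Fin n => (i : ℕ) < s)).image π)) : ℕ)
              = s - 1)) ∧
        π ⟨t, ht⟩ = x)).card
        = k * (t - 1).factorial * (n - t - 1).factorial := by
      intro x hxE
      have hxS : x ∈ S := Finset.mem_of_mem_erase hxE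
      have hScard : (S.erase x).card = t := by
        rw [Finset.card_erase_of_mem hxS, hS]
        omega
      have hxnot : x ∉ S.erase x := Finset.notMem_erase x S
      have hQ : ∀ (π : Fin n ≃ α) (a b : α), a ∉ S.erase x → b ∉ S.erase x →
          ((univ.filter (fun i : Fin n => (i : ℕ) < t)).image π = S.erase x ∧
            ∀ s, k + 1 ≤ s → s ≤ t →
              ¬ ((π.symm (best ((univ.filter (fun i : Fin n => (i : ℕ) < s)).image π)) : ℕ)
                  = s - 1)) →
          ((univ.filter (fun i : Fin n => (i : ℕ) < t)).image (π.trans (Equiv.swap a b))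
              = S.erase x ∧
            ∀ s, k + 1 ≤ s → s ≤ t →
              ¬ (((π.trans (Equiv.swap a b)).symm
                  (best ((univ.filter (fun i : Fin n => (i : ℕ) < s)).image
                    (π.trans (Equiv.swap a b)))) : ℕ) = s - 1)) := by
        intro π a b ha hb ⟨h1, h2⟩
        constructor
        · have : ⇑(π.trans (Equiv.swap a b)) = (Equiv.swap a b) ∘ ⇑π := rfl
          rw [this, ← Finset.image_image, h1]
          apply Finset.image_congr (g := id) ?_ |>.trans (Finset.image_id)
          intro z hz
          exact Equiv.swap_apply_of_ne_of_ne (fun h' => ha (h' ▸ hz)) (fun h' => hb (h' ▸ hz))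
        · intro s hs1 hs2
          rw [hsurv_swap π a b (S.erase x) ha hb h1 s hs1 hs2]
          exact h2 s hs1 hs2
      have hQS : ∀ π : Fin n ≃ α,
          ((univ.filter (fun i : Fin n => (i : ℕ) < t)).image π = S.erase x ∧
            ∀ s, k + 1 ≤ s → s ≤ t →
              ¬ ((π.symm (best ((univ.filter (fun i : Fin n => (i : ℕ) < s)).image π)) : ℕ)
                  = s - 1)) →
          π ⟨t, ht⟩ ∉ S.erase x := by
        intro π h
        rw [← h.1]
        exact pref_not_mem π t ht
      have hkey := fiber_card hcard t ht (S.erase x) hScard _ hQ hQS x hxnot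
      have h0 : 0 < n - t := by omega
      obtain ⟨m, hm⟩ : ∃ m, n - t = m + 1 := ⟨n - t - 1, by omega⟩
      have hih : (univ.filter (fun π : Fin n ≃ α =>
          (univ.filter (fun i : Fin n => (i : ℕ) < t)).image π = S.erase x ∧
          ∀ s, k + 1 ≤ s → s ≤ t →
            ¬ ((π.symm (best ((univ.filter (fun i : Fin n => (i : ℕ) < s)).image π)) : ℕ)
                = s - 1))).card
          = (n - t) * (k * (t - 1).factorial * (n - t - 1).factorial) := by
        rw [ih htn (S.erase x) hScard, show n - t - 1 = m from by omega, hm,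
          Nat.factorial_succ]
        ring
      have hfib := Nat.eq_of_mul_eq_mul_left h0 (hkey.trans (by
        convert hih using 2 <;> apply filter_inst))
      convert hfib using 2 <;> apply filter_inst
    rw [hdecomp, Finset.card_biUnion, Finset.sum_congr rfl hfiber, Finset.sum_const,
      smul_eq_mul, Finset.card_erase_of_mem hbS, hS]
    · obtain ⟨m, hm⟩ : ∃ m, t = m + 1 ∨ t = m := ⟨t, Or.inr rfl⟩
      have h1 : t + 1 - 1 = t := by omega
      have h2 : n - (t + 1) = n - t - 1 := by omega
      rw [h1, h2]
      obtain ⟨p, hp⟩ : ∃ p, t = p + 1 := ⟨t - 1, by omega⟩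
      rw [show t - 1 = p from by omega]
      calc (t + 1 - 1) * (k * p.factorial * (n - t - 1).factorial)
          = k * ((p + 1) * p.factorial) * (n - t - 1).factorial := by
            rw [show t + 1 - 1 = t from rfl, hp]; ring
        _ = k * t.factorial * (n - t - 1).factorial := by
            rw [← Nat.factorial_succ, ← hp]
    · intro a _ b _ hab
      simp only [Finset.disjoint_left, Finset.mem_filter, Finset.mem_univ, true_and]
      rintro π ⟨_, h1⟩ ⟨_, h2⟩
      exact hab (h1 ▸ h2 ▸ rfl)

end Aux


/-- survival probability in the secretary stopping lemma: with the same
stopping rule as in the stopping lemma (skip the first `k` arrivals, then stop the first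
time the newly arrived agent is `best` of the prefix set; `stopT π = n+1` encodes `T = ∞`),
for every `k ≤ t ≤ n` and every `t`-element subset `S ⊆ A`,
`Pr[T > t ∣ {a_1,…,a_t} = S] = k/t`. -/
theorem stmt_6 {α : Type*} [Fintype α] [DecidableEq α] (n : ℕ)
    (hcard : Fintype.card α = n)
    (best : Finset α → α) (hbest : ∀ S : Finset α, S.Nonempty → best S ∈ S)
    (k : ℕ) (hk1 : 1 ≤ k) (hkn : k < n)
    (P : (Fin n ≃ α) → ℕ → Finset α)
    (hP : ∀ π t, P π t = (Finset.univ.filter (fun i : Fin n => (i : ℕ) < t)).image π)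
    (stops : (Fin n ≃ α) → ℕ → Prop)
    (hstops : ∀ π t, stops π t ↔ ((π.symm (best (P π t)) : ℕ) = t - 1))
    (stopT : (Fin n ≃ α) → ℕ)
    (hstopT : ∀ π, stopT π =
      if h : ((Finset.Icc (k + 1) n).filter (fun t => stops π t)).Nonempty
      then ((Finset.Icc (k + 1) n).filter (fun t => stops π t)).min' h
      else n + 1) :
    ∀ t, k ≤ t → t ≤ n → ∀ S : Finset α, S.card = t →
      ((Finset.univ.filter (fun π : Fin n ≃ α => P π t = S ∧ t < stopT π)).card : ℝ) /
          ((Finset.univ.filter (fun π : Fin n ≃ α => P π t = S)).card : ℝ)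
        = (k : ℝ) / (t : ℝ) := by
  intro t hkt htn S hS
  have hpred : ∀ π : Fin n ≃ α, (P π t = S ∧ t < stopT π) ↔
      ((univ.filter (fun i : Fin n => (i : ℕ) < t)).image π = S ∧
        ∀ s, k + 1 ≤ s → s ≤ t →
          ¬ ((π.symm (best ((univ.filter (fun i : Fin n => (i : ℕ) < s)).image π)) : ℕ)
              = s - 1)) := by
    intro π
    rw [hP]
    apply and_congr Iff.rfl
    rw [hstopT π]
    by_cases hne : ((Finset.Icc (k + 1) n).filter (fun u => stops π u)).Nonempty
    · rw [dif_pos hne, Finset.lt_min'_iff]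
      constructor
      · intro hall s hs1 hs2 hbad
        have hsmem : s ∈ (Finset.Icc (k + 1) n).filter (fun u => stops π u) := by
          simp only [Finset.mem_filter, Finset.mem_Icc]
          exact ⟨⟨hs1, hs2.trans htn⟩, (hstops π s).mpr (by rw [hP]; exact hbad)⟩
        exact absurd (hall s hsmem) (by omega)
      · intro hno s hsmem
        simp only [Finset.mem_filter, Finset.mem_Icc] at hsmem
        by_contra hle
        push_neg at hle
        have hb := (hstops π s).mp hsmem.2
        rw [hP] at hb
        exact hno s hsmem.1.1 hle hb
    · rw [dif_neg hne]
      constructor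
      · intro _ s hs1 hs2 hbad
        refine hne ⟨s, ?_⟩
        simp only [Finset.mem_filter, Finset.mem_Icc]
        exact ⟨⟨hs1, hs2.trans htn⟩, (hstops π s).mpr (by rw [hP]; exact hbad)⟩
      · intro _
        omega
  have hpred2 : ∀ π : Fin n ≃ α, (P π t = S) ↔
      ((univ.filter (fun i : Fin n => (i : ℕ) < t)).image π = S) := by
    intro π; rw [hP]
  rw [Finset.filter_congr (fun π _ => hpred π), Finset.filter_congr (fun π _ => hpred2 π)]
  have hnum := cardB hcard best hbest k hk1 t hkt htn S hS
  have hden := cardA hcard t htn S hS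
  rw [show (univ.filter (fun π : Fin n ≃ α =>
      (univ.filter (fun i : Fin n => (i : ℕ) < t)).image π = S ∧
        ∀ s, k + 1 ≤ s → s ≤ t →
          ¬ ((π.symm (best ((univ.filter (fun i : Fin n => (i : ℕ) < s)).image π)) : ℕ)
              = s - 1))).card = k * (t - 1).factorial * (n - t).factorial from by
    rw [← hnum]]
  rw [show (univ.filter (fun π : Fin n ≃ α =>
      (univ.filter (fun i : Fin n => (i : ℕ) < t)).image π = S)).card
      = t.factorial * (n - t).factorial from by
    rw [← hden]]
  have ht0 : 0 < t := lt_of_lt_of_le hk1 hkt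
  have h1 : ((t.factorial * (n - t).factorial : ℕ) : ℝ) ≠ 0 := by positivity
  have h2 : ((t : ℕ) : ℝ) ≠ 0 := by positivity
  rw [div_eq_div_iff h1 h2]
  have hnat : k * (t - 1).factorial * (n - t).factorial * t
      = k * (t.factorial * (n - t).factorial) := by
    obtain ⟨p, hp⟩ : ∃ p, t = p + 1 := ⟨t - 1, by omega⟩
    rw [show t - 1 = p from by omega, hp, Nat.factorial_succ]
    ring
  exact_mod_cast hnat
end

section
/- Let A be a finite set with |A| = n, let a* ∈ A, and let f : 2^A → ℝ≥0 be a set function that is monotone (f(X) ≤ f(Y) whenever X ⊆ Y) and satisfies f(A) ≤ f(X) + f(A∖X) for every X ⊆ A. For 1 ≤ m ≤ n define α_m = E[f(S)], where S is a uniformly random subset of A of size m subject to a* ∈ S. Then for every t with 1 ≤ t ≤ n, f(A) ≤ α_t + α_{n−t+1}. -/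
open Finset

/-- for a monotone, partition-subadditive set function `f` on a finite set `A`
with `n` elements and a distinguished element `a⋆`, letting `α_m` be the expected value of
`f(S)` over a uniformly random `m`-element subset `S` containing `a⋆`, one has
`f(A) ≤ α_t + α_{n-t+1}` for every `1 ≤ t ≤ n`. -/
theorem stmt_8 {α : Type*} [Fintype α] [DecidableEq α] (n : ℕ)
    (hcard : Fintype.card α = n)
    (astar : α) (f : Finset α → NNReal)
    (hmono : Monotone f)
    (hsub : ∀ X : Finset α, f Finset.univ ≤ f X + f Xᶜ)
    (alpha : ℕ → ℝ)
    (halpha : ∀ m, alpha m =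
      (∑ S ∈ (Finset.powersetCard m (Finset.univ : Finset α)).filter (fun S => astar ∈ S),
        (f S : ℝ)) /
      (((Finset.powersetCard m (Finset.univ : Finset α)).filter (fun S => astar ∈ S)).card : ℝ)) :
    ∀ t, 1 ≤ t → t ≤ n → (f Finset.univ : ℝ) ≤ alpha t + alpha (n - t + 1) := by
  intro t ht1 htn
  classical
  set D : ℕ → Finset (Finset α) :=
    fun m => (Finset.powersetCard m (Finset.univ : Finset α)).filter (fun S => astar ∈ S)
    with hD
  have hmemD : ∀ m (S : Finset α), S ∈ D m ↔ S.card = m ∧ astar ∈ S := by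
    intro m S
    simp [hD, Finset.mem_powersetCard]
  set g : Finset α → Finset α := fun S => insert astar Sᶜ with hg
  have hcc : ∀ (S : Finset α), Sᶜ.card = n - S.card := by
    intro S; rw [Finset.card_compl, hcard]
  have hgcard : ∀ S : Finset α, astar ∈ S → (g S).card = n - S.card + 1 := by
    intro S hS
    have : astar ∉ Sᶜ := by simp [hS]
    rw [hg, Finset.card_insert_of_notMem this, hcc]
  have hginv : ∀ S : Finset α, astar ∈ S → g (g S) = S := by
    intro S hS
    ext x
    by_cases hx : x = astar
    · simp [hg, hx, hS]
    · simp [hg, hx]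
  have hmapto : ∀ S ∈ D t, g S ∈ D (n - t + 1) := by
    intro S hS
    rw [hmemD] at hS ⊢
    refine ⟨?_, by simp [hg]⟩
    rw [hgcard S hS.2, hS.1]
  have hmapfrom : ∀ T ∈ D (n - t + 1), g T ∈ D t := by
    intro T hT
    rw [hmemD] at hT ⊢
    refine ⟨?_, by simp [hg]⟩
    rw [hgcard T hT.2, hT.1]
    omega
  have hNe : D t ≠ ∅ := by
    obtain ⟨S, hsub', hScard⟩ := Finset.exists_superset_card_eq
      (s := ({astar} : Finset α)) (n := t) (by simpa using ht1) (by omega)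
    intro h
    have : S ∈ D t := (hmemD t S).2 ⟨hScard, hsub' (by simp)⟩
    simp [h] at this
  have hNpos : 0 < ((D t).card : ℝ) := by
    have := Finset.card_pos.2 (Finset.nonempty_of_ne_empty hNe)
    exact_mod_cast this
  have hcardeq : (D (n - t + 1)).card = (D t).card := by
    apply Finset.card_nbij' g g hmapfrom hmapto
    · intro T hT; exact hginv T ((hmemD _ T).1 hT).2
    · intro S hS; exact hginv S ((hmemD _ S).1 hS).2
  have hsumeq : ∑ T ∈ D (n - t + 1), (f T : ℝ) = ∑ S ∈ D t, (f (g S) : ℝ) := by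
    apply Finset.sum_nbij' g g hmapfrom hmapto
    · intro T hT; exact hginv T ((hmemD _ T).1 hT).2
    · intro S hS; exact hginv S ((hmemD _ S).1 hS).2
    · intro T hT; rw [hginv T ((hmemD _ T).1 hT).2]
  have hpt : ∀ S ∈ D t, (f Finset.univ : ℝ) ≤ (f S : ℝ) + (f (g S) : ℝ) := by
    intro S hS
    have h1 := hsub S
    have h2 : f Sᶜ ≤ f (g S) := hmono (by simp [hg, Finset.subset_insert])
    have : f Finset.univ ≤ f S + f (g S) := h1.trans (add_le_add_right h2 _)
    exact_mod_cast this
  have hsumlb : ((D t).card : ℝ) * (f Finset.univ : ℝ)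
      ≤ ∑ S ∈ D t, ((f S : ℝ) + (f (g S) : ℝ)) := by
    calc ((D t).card : ℝ) * (f Finset.univ : ℝ)
        = ∑ _S ∈ D t, (f Finset.univ : ℝ) := by rw [Finset.sum_const, nsmul_eq_mul]
      _ ≤ _ := Finset.sum_le_sum hpt
  rw [halpha t, halpha (n - t + 1)]
  rw [show ((D (n - t + 1)).card : ℝ) = ((D t).card : ℝ) by exact_mod_cast hcardeq,
    hsumeq, ← add_div, le_div_iff₀ hNpos, Finset.sum_add_distrib.symm]
  linarith [hsumlb]
end

section
/- For every ε > 0 there exists N such that for all n ≥ N the following holds: if α_1 ≤ α_2 ≤ … ≤ α_n are nonnegative reals satisfying α_t + α_{n−t+1} ≥ α_n for every t ∈ {1,…,n}, then Σ_{t=⌈n/e⌉}^{n} α_t/(t−1) ≥ (1/2 − ε)·α_n. -/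
open Finset

private lemma harm_lower (a : ℕ) (ha : 1 ≤ a) : ∀ b : ℕ, a ≤ b →
    Real.log b - Real.log a ≤ ∑ t ∈ Finset.Ioc a b, 1 / ((t : ℝ) - 1) := by
  intro b
  induction b with
  | zero => intro hab; omega
  | succ b ih =>
    intro hab
    rcases eq_or_lt_of_le hab with h | h
    · rw [← h]; simp
    · have hab' : a ≤ b := by omega
      rw [Finset.sum_Ioc_succ_top hab']
      have hb1 : (1:ℝ) ≤ (b:ℝ) := by exact_mod_cast (by omega : 1 ≤ b)
      have hb0 : (0:ℝ) < (b:ℝ) := by linarith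
      have hlog : Real.log (((b:ℝ)+1)/(b:ℝ)) ≤ ((b:ℝ)+1)/(b:ℝ) - 1 :=
        Real.log_le_sub_one_of_pos (by positivity)
      rw [Real.log_div (by linarith) (by linarith)] at hlog
      have heq : ((b:ℝ)+1)/(b:ℝ) - 1 = 1/(b:ℝ) := by field_simp; ring
      have ihb := ih hab'
      push_cast
      rw [show ((b:ℝ) + 1 - 1) = (b:ℝ) from by ring]
      push_cast at ihb
      linarith

set_option maxHeartbeats 2000000 in
/-- analytic lemma behind the 2e-approximation: for every `ε > 0` there is
`N` such that for all `n ≥ N`, any nondecreasing nonnegative sequence `α_1 ≤ … ≤ α_n`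
satisfying the pairing inequality `α_t + α_{n-t+1} ≥ α_n` for all `1 ≤ t ≤ n` has
`Σ_{t=⌈n/e⌉}^{n} α_t/(t-1) ≥ (1/2 - ε) · α_n`. -/
theorem stmt_9 :
    ∀ ε : ℝ, 0 < ε → ∃ N : ℕ, ∀ n : ℕ, N ≤ n → ∀ a : ℕ → ℝ,
      (∀ i j, 1 ≤ i → i ≤ j → j ≤ n → a i ≤ a j) →
      (∀ t, 1 ≤ t → t ≤ n → 0 ≤ a t) →
      (∀ t, 1 ≤ t → t ≤ n → a n ≤ a t + a (n - t + 1)) →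
      (1 / 2 - ε) * a n ≤ ∑ t ∈ Finset.Icc ⌈(n : ℝ) / Real.exp 1⌉₊ n, a t / ((t : ℝ) - 1) := by
  intro ε hε
  refine ⟨1000 + ⌈1/ε⌉₊, fun n hn a hmono hpos hpair => ?_⟩
  have hn1000 : 1000 ≤ n := le_trans (Nat.le_add_right _ _) hn
  have hnR : (1000:ℝ) ≤ (n:ℝ) := by exact_mod_cast hn1000
  have hnpos : (0:ℝ) < (n:ℝ) := by linarith
  have hεn : 1/ε ≤ (n:ℝ) - 1 := by
    have h1 : (1:ℝ)/ε ≤ (⌈1/ε⌉₊ : ℝ) := Nat.le_ceil _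
    have h2 : ((1000 + ⌈1/ε⌉₊ : ℕ) : ℝ) ≤ (n:ℝ) := by exact_mod_cast hn
    push_cast at h2
    linarith
  have hE1 : (2.7182818283:ℝ) < Real.exp 1 := Real.exp_one_gt_d9
  have hE2 : Real.exp 1 < 2.7182818286 := Real.exp_one_lt_d9
  have hEpos : (0:ℝ) < Real.exp 1 := by linarith
  set m := ⌈(n : ℝ) / Real.exp 1⌉₊ with hmdef
  have hmlb : (n:ℝ)/Real.exp 1 ≤ (m:ℝ) := Nat.le_ceil _
  have hmub : (m:ℝ) < (n:ℝ)/Real.exp 1 + 1 := Nat.ceil_lt_add_one (by positivity)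
  have hdivlb : 0.3678 * (n:ℝ) ≤ (n:ℝ)/Real.exp 1 := by
    rw [le_div_iff₀ hEpos]; nlinarith
  have hdivub : (n:ℝ)/Real.exp 1 ≤ 0.368 * (n:ℝ) := by
    rw [div_le_iff₀ hEpos]; nlinarith
  have hm2 : 2 ≤ m := by
    have h : (2:ℝ) ≤ (m:ℝ) := by nlinarith
    exact_mod_cast h
  have h2m : 2 * m ≤ n := by
    have h : (2:ℝ) * (m:ℝ) ≤ (n:ℝ) := by nlinarith
    exact_mod_cast h
  set q := m - 1 with hqdef
  set h2 := (n+1)/2 with hh2def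
  set t2 := n - m + 1 with ht2def
  have hq1 : 1 ≤ q := by omega
  have hqm : q + 1 = m := by omega
  have ho1 : q ≤ n - h2 := by omega
  have ho2 : n - h2 ≤ h2 := by omega
  have ho3 : h2 ≤ t2 := by omega
  have ho4 : t2 ≤ n := by omega
  have hqcast : (q:ℝ) = (m:ℝ) - 1 := by
    rw [hqdef, Nat.cast_sub (by omega : 1 ≤ m)]; simp
  -- basic value facts
  have hA0 : 0 ≤ a n := hpos n (by omega) le_rfl
  have hBA : a t2 ≤ a n := hmono t2 n (by omega) ho4 le_rfl
  have hAB2 : a n ≤ 2 * a t2 := by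
    have hp := hpair t2 (by omega) ho4
    have heq : n - t2 + 1 = m := by omega
    rw [heq] at hp
    have hm : a m ≤ a t2 := hmono m t2 (by omega) (by omega) ho4
    linarith
  -- sum splittings
  have hsplit1 : (∑ t ∈ Finset.Ioc q (n - h2), a t / ((t:ℝ)-1))
      + (∑ t ∈ Finset.Ioc (n - h2) n, a t / ((t:ℝ)-1))
      = ∑ t ∈ Finset.Ioc q n, a t / ((t:ℝ)-1) :=
    Finset.sum_Ioc_consecutive _ ho1 (by omega)
  have hsplit2 : (∑ t ∈ Finset.Ioc (n - h2) h2, a t / ((t:ℝ)-1))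
      + (∑ t ∈ Finset.Ioc h2 n, a t / ((t:ℝ)-1))
      = ∑ t ∈ Finset.Ioc (n - h2) n, a t / ((t:ℝ)-1) :=
    Finset.sum_Ioc_consecutive _ ho2 (by omega)
  have hsplit3 : (∑ t ∈ Finset.Ioc h2 t2, a t / ((t:ℝ)-1))
      + (∑ t ∈ Finset.Ioc t2 n, a t / ((t:ℝ)-1))
      = ∑ t ∈ Finset.Ioc h2 n, a t / ((t:ℝ)-1) :=
    Finset.sum_Ioc_consecutive _ ho3 ho4
  have hsplitW : (∑ t ∈ Finset.Ioc h2 t2, 1 / ((t:ℝ)-1))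
      + (∑ t ∈ Finset.Ioc t2 n, 1 / ((t:ℝ)-1))
      = ∑ t ∈ Finset.Ioc h2 n, 1 / ((t:ℝ)-1) :=
    Finset.sum_Ioc_consecutive _ ho3 ho4
  -- nonnegativity of weight sums
  have hQ0 : (0:ℝ) ≤ ∑ t ∈ Finset.Ioc q (n - h2), 1 / ((t:ℝ)-1) := by
    apply Finset.sum_nonneg
    intro t ht
    rw [Finset.mem_Ioc] at ht
    have : (2:ℝ) ≤ (t:ℝ) := by exact_mod_cast (by omega : 2 ≤ t)
    have h0 : (0:ℝ) < (t:ℝ) - 1 := by linarith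
    exact le_of_lt (by positivity)
  have hW0 : (0:ℝ) ≤ ∑ t ∈ Finset.Ioc h2 t2, 1 / ((t:ℝ)-1) := by
    apply Finset.sum_nonneg
    intro t ht
    rw [Finset.mem_Ioc] at ht
    have : (2:ℝ) ≤ (t:ℝ) := by exact_mod_cast (by omega : 2 ≤ t)
    have h0 : (0:ℝ) < (t:ℝ) - 1 := by linarith
    exact le_of_lt (by positivity)
  have hV0 : (0:ℝ) ≤ ∑ t ∈ Finset.Ioc t2 n, 1 / ((t:ℝ)-1) := by
    apply Finset.sum_nonneg
    intro t ht
    rw [Finset.mem_Ioc] at ht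
    have : (2:ℝ) ≤ (t:ℝ) := by exact_mod_cast (by omega : 2 ≤ t)
    have h0 : (0:ℝ) < (t:ℝ) - 1 := by linarith
    exact le_of_lt (by positivity)
  -- lower bounds on the three used blocks
  have hS1 : (a n - a t2) * (∑ t ∈ Finset.Ioc q (n - h2), 1 / ((t:ℝ)-1))
      ≤ ∑ t ∈ Finset.Ioc q (n - h2), a t / ((t:ℝ)-1) := by
    rw [Finset.mul_sum]
    apply Finset.sum_le_sum
    intro t ht
    rw [Finset.mem_Ioc] at ht
    have h2R : (2:ℝ) ≤ (t:ℝ) := by exact_mod_cast (by omega : 2 ≤ t)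
    have hx : (0:ℝ) < (t:ℝ) - 1 := by linarith
    have hp := hpair t (by omega) (by omega)
    have hmn : a (n - t + 1) ≤ a t2 := hmono _ _ (by omega) (by omega) ho4
    have hval : a n - a t2 ≤ a t := by linarith
    calc (a n - a t2) * (1 / ((t:ℝ)-1))
        ≤ a t * (1 / ((t:ℝ)-1)) :=
          mul_le_mul_of_nonneg_right hval (one_div_nonneg.mpr hx.le)
      _ = a t / ((t:ℝ)-1) := by rw [mul_one_div]
  have hS2 : (0:ℝ) ≤ ∑ t ∈ Finset.Ioc (n - h2) h2, a t / ((t:ℝ)-1) := by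
    apply Finset.sum_nonneg
    intro t ht
    rw [Finset.mem_Ioc] at ht
    have h2R : (2:ℝ) ≤ (t:ℝ) := by exact_mod_cast (by omega : 2 ≤ t)
    exact div_nonneg (hpos t (by omega) (by omega)) (by linarith)
  have hS3 : (a n / 2) * (∑ t ∈ Finset.Ioc h2 t2, 1 / ((t:ℝ)-1))
      ≤ ∑ t ∈ Finset.Ioc h2 t2, a t / ((t:ℝ)-1) := by
    rw [Finset.mul_sum]
    apply Finset.sum_le_sum
    intro t ht
    rw [Finset.mem_Ioc] at ht
    have h2R : (2:ℝ) ≤ (t:ℝ) := by exact_mod_cast (by omega : 2 ≤ t)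
    have hx : (0:ℝ) < (t:ℝ) - 1 := by linarith
    have hp := hpair t (by omega) (by omega)
    have hmn : a (n - t + 1) ≤ a t := hmono _ _ (by omega) (by omega) (by omega)
    have hval : a n / 2 ≤ a t := by linarith
    calc (a n / 2) * (1 / ((t:ℝ)-1))
        ≤ a t * (1 / ((t:ℝ)-1)) :=
          mul_le_mul_of_nonneg_right hval (one_div_nonneg.mpr hx.le)
      _ = a t / ((t:ℝ)-1) := by rw [mul_one_div]
  have hS4 : a t2 * (∑ t ∈ Finset.Ioc t2 n, 1 / ((t:ℝ)-1))
      ≤ ∑ t ∈ Finset.Ioc t2 n, a t / ((t:ℝ)-1) := by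
    rw [Finset.mul_sum]
    apply Finset.sum_le_sum
    intro t ht
    rw [Finset.mem_Ioc] at ht
    have h2R : (2:ℝ) ≤ (t:ℝ) := by exact_mod_cast (by omega : 2 ≤ t)
    have hx : (0:ℝ) < (t:ℝ) - 1 := by linarith
    have hval : a t2 ≤ a t := hmono t2 t (by omega) (by omega) ht.2
    calc a t2 * (1 / ((t:ℝ)-1))
        ≤ a t * (1 / ((t:ℝ)-1)) :=
          mul_le_mul_of_nonneg_right hval (one_div_nonneg.mpr hx.le)
      _ = a t / ((t:ℝ)-1) := by rw [mul_one_div]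
  -- harmonic (log) lower bounds
  have hQlog : Real.log ((n - h2 : ℕ) : ℝ) - Real.log (q : ℝ)
      ≤ ∑ t ∈ Finset.Ioc q (n - h2), 1 / ((t:ℝ)-1) := harm_lower q hq1 (n - h2) ho1
  have hPlog : Real.log (n : ℝ) - Real.log (h2 : ℝ)
      ≤ ∑ t ∈ Finset.Ioc h2 n, 1 / ((t:ℝ)-1) := harm_lower h2 (by omega) n (by omega)
  -- crude lower bound on V
  have hVcard : (q:ℝ) * (1/((n:ℝ)-1)) ≤ ∑ t ∈ Finset.Ioc t2 n, 1 / ((t:ℝ)-1) := by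
    have h1 : ∀ t ∈ Finset.Ioc t2 n, 1/((n:ℝ)-1) ≤ 1/((t:ℝ)-1) := by
      intro t ht
      rw [Finset.mem_Ioc] at ht
      have h2R : (2:ℝ) ≤ (t:ℝ) := by exact_mod_cast (by omega : 2 ≤ t)
      have h3 : (t:ℝ) ≤ (n:ℝ) := by exact_mod_cast ht.2
      apply one_div_le_one_div_of_le <;> linarith
    have h2c := Finset.card_nsmul_le_sum (Finset.Ioc t2 n) _ _ h1
    rw [Nat.card_Ioc, nsmul_eq_mul] at h2c
    have h3 : ((n - t2 : ℕ):ℝ) = (q:ℝ) := by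
      congr 1
      omega
    rw [h3] at h2c
    exact h2c
  -- log estimates
  have hn1R : (0:ℝ) < (n:ℝ) - 1 := by linarith
  have hlogq : Real.log (q:ℝ) ≤ Real.log (n:ℝ) - 1 := by
    have hqpos : (0:ℝ) < (q:ℝ) := by exact_mod_cast hq1
    have hqle : (q:ℝ) ≤ (n:ℝ)/Real.exp 1 := by rw [hqcast]; linarith
    have h1 : Real.log (q:ℝ) ≤ Real.log ((n:ℝ)/Real.exp 1) := Real.log_le_log hqpos hqle
    rw [Real.log_div (by linarith) (by linarith), Real.log_exp] at h1
    linarith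
  have hh2cast1 : 2 * (h2:ℝ) ≤ (n:ℝ) + 1 := by
    have : 2 * h2 ≤ n + 1 := by omega
    exact_mod_cast this
  have hh2cast2 : (n:ℝ) ≤ 2 * (h2:ℝ) := by
    have : n ≤ 2 * h2 := by omega
    exact_mod_cast this
  have hnh2cast : ((n - h2 : ℕ):ℝ) = (n:ℝ) - (h2:ℝ) := by
    rw [Nat.cast_sub (by omega : h2 ≤ n)]
  have hh2pos : (0:ℝ) < (h2:ℝ) := by linarith
  have hlogh2 : Real.log (h2:ℝ) ≤ Real.log ((n:ℝ)+1) - Real.log 2 := by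
    have h1 : Real.log (h2:ℝ) ≤ Real.log (((n:ℝ)+1)/2) :=
      Real.log_le_log hh2pos (by linarith)
    rw [Real.log_div (by linarith) (by norm_num)] at h1
    exact h1
  have hlognh2 : Real.log ((n:ℝ)-1) - Real.log 2 ≤ Real.log ((n - h2 : ℕ):ℝ) := by
    have h1 : Real.log (((n:ℝ)-1)/2) ≤ Real.log ((n - h2 : ℕ):ℝ) := by
      apply Real.log_le_log (by positivity)
      rw [hnh2cast]; linarith
    rw [Real.log_div (by linarith) (by norm_num)] at h1
    exact h1
  have hlogupper : Real.log ((n:ℝ)+1) - Real.log ((n:ℝ)-1) ≤ 2/((n:ℝ)-1) := by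
    have h1 : Real.log (((n:ℝ)+1)/((n:ℝ)-1)) ≤ ((n:ℝ)+1)/((n:ℝ)-1) - 1 :=
      Real.log_le_sub_one_of_pos (by positivity)
    rw [Real.log_div (by linarith) (by linarith)] at h1
    have h2e : ((n:ℝ)+1)/((n:ℝ)-1) - 1 = 2/((n:ℝ)-1) := by field_simp; ring
    linarith [h2e ▸ h1]
  have hlogn1 : Real.log ((n:ℝ)+1) - Real.log (n:ℝ) ≤ 1/(n:ℝ) := by
    have h1 : Real.log (((n:ℝ)+1)/(n:ℝ)) ≤ ((n:ℝ)+1)/(n:ℝ) - 1 :=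
      Real.log_le_sub_one_of_pos (by positivity)
    rw [Real.log_div (by linarith) (by linarith)] at h1
    have h2e : ((n:ℝ)+1)/(n:ℝ) - 1 = 1/(n:ℝ) := by field_simp; ring
    linarith [h2e ▸ h1]
  have h2eps : 2/((n:ℝ)-1) ≤ 2*ε := by
    rw [div_le_iff₀ hn1R]
    have h1 : ε * (1/ε) = 1 := by field_simp
    nlinarith [mul_le_mul_of_nonneg_left hεn (le_of_lt hε)]
  -- E1 : Q + W + V ≥ 1 - 2ε
  have E1 : 1 - 2*ε ≤ (∑ t ∈ Finset.Ioc q (n - h2), 1 / ((t:ℝ)-1))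
      + (∑ t ∈ Finset.Ioc h2 t2, 1 / ((t:ℝ)-1))
      + (∑ t ∈ Finset.Ioc t2 n, 1 / ((t:ℝ)-1)) := by
    linarith only [hQlog, hPlog, hsplitW, hlogq, hlogh2, hlognh2, hlogupper, h2eps]
  -- E2 : W + 2V ≥ 1
  have hVlb : (0.3668:ℝ) ≤ ∑ t ∈ Finset.Ioc t2 n, 1 / ((t:ℝ)-1) := by
    have h1 : (0.3668:ℝ) * ((n:ℝ)-1) ≤ (q:ℝ) := by
      rw [hqcast]; nlinarith
    have h2c : (0.3668:ℝ) ≤ (q:ℝ) * (1/((n:ℝ)-1)) := by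
      rw [mul_one_div, le_div_iff₀ hn1R]; linarith
    linarith only [h2c, hVcard]
  have hWVlb : (0.6921:ℝ) ≤ (∑ t ∈ Finset.Ioc h2 t2, 1 / ((t:ℝ)-1))
      + (∑ t ∈ Finset.Ioc t2 n, 1 / ((t:ℝ)-1)) := by
    have h1n : 1/(n:ℝ) ≤ 0.001 := by
      rw [div_le_iff₀ hnpos]; linarith
    linarith only [h1n, hPlog, hsplitW, hlogh2, hlogn1, Real.log_two_gt_d9]
  have E2 : (1:ℝ) ≤ (∑ t ∈ Finset.Ioc h2 t2, 1 / ((t:ℝ)-1))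
      + 2 * (∑ t ∈ Finset.Ioc t2 n, 1 / ((t:ℝ)-1)) := by
    linarith only [hVlb, hWVlb]
  -- assemble
  have hlower : (a n - a t2) * (∑ t ∈ Finset.Ioc q (n - h2), 1 / ((t:ℝ)-1))
      + (a n / 2) * (∑ t ∈ Finset.Ioc h2 t2, 1 / ((t:ℝ)-1))
      + a t2 * (∑ t ∈ Finset.Ioc t2 n, 1 / ((t:ℝ)-1))
      ≤ ∑ t ∈ Finset.Ioc q n, a t / ((t:ℝ)-1) := by
    linarith only [hS1, hS2, hS3, hS4, hsplit1, hsplit2, hsplit3]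
  have hmain : (1/2 - ε) * a n
      ≤ (a n - a t2) * (∑ t ∈ Finset.Ioc q (n - h2), 1 / ((t:ℝ)-1))
      + (a n / 2) * (∑ t ∈ Finset.Ioc h2 t2, 1 / ((t:ℝ)-1))
      + a t2 * (∑ t ∈ Finset.Ioc t2 n, 1 / ((t:ℝ)-1)) := by
    rcases le_total (∑ t ∈ Finset.Ioc q (n - h2), 1 / ((t:ℝ)-1))
        (∑ t ∈ Finset.Ioc t2 n, 1 / ((t:ℝ)-1)) with hc | hc
    · have t0 : (0:ℝ) ≤ (a t2 - a n / 2) *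
          ((∑ t ∈ Finset.Ioc t2 n, 1 / ((t:ℝ)-1))
            - (∑ t ∈ Finset.Ioc q (n - h2), 1 / ((t:ℝ)-1))) :=
        mul_nonneg (by linarith only [hAB2]) (by linarith only [hc])
      have t1 : (a n / 2) * (1 - 2*ε) ≤ (a n / 2) *
          ((∑ t ∈ Finset.Ioc q (n - h2), 1 / ((t:ℝ)-1))
            + (∑ t ∈ Finset.Ioc h2 t2, 1 / ((t:ℝ)-1))
            + (∑ t ∈ Finset.Ioc t2 n, 1 / ((t:ℝ)-1))) :=
        mul_le_mul_of_nonneg_left E1 (by linarith only [hA0])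
      linarith only [t0, t1]
    · have t0 : (0:ℝ) ≤ (a n - a t2) *
          ((∑ t ∈ Finset.Ioc q (n - h2), 1 / ((t:ℝ)-1))
            - (∑ t ∈ Finset.Ioc t2 n, 1 / ((t:ℝ)-1))) :=
        mul_nonneg (by linarith only [hBA]) (by linarith only [hc])
      have t1 : (a n / 2) * 1 ≤ (a n / 2) *
          ((∑ t ∈ Finset.Ioc h2 t2, 1 / ((t:ℝ)-1))
            + 2 * (∑ t ∈ Finset.Ioc t2 n, 1 / ((t:ℝ)-1))) :=
        mul_le_mul_of_nonneg_left E2 (by linarith only [hA0])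
      have t2' : (0:ℝ) ≤ ε * a n := mul_nonneg hε.le hA0
      linarith only [t0, t1, t2']
  rw [← hqm, Finset.Icc_add_one_left_eq_Ioc]
  linarith only [hlower, hmain]
end

section
/- For every ε > 0 there exists N such that the following holds for all n ≥ N. Let A be a set of n agents, each agent a ∈ A having a fixed signal s̄_a ∈ ℝ≥0 and a valuation function v̄_a : ℝ≥0^A → ℝ≥0 that is monotone and subadditive over signals; for X ⊆ A let s̄_X denote the profile equal to s̄ on X and 0 elsewhere. Let a_1, …, a_n be a uniformly random ordering of A, A_t = {a_1, …, a_t}, t₀ = ⌊n/2⌋ and t₁ = t₀ + ⌊n/(2e)⌋. Fix a linear order on A for tie-breaking and let T be the least t > t₁ such that v̄_{a_t}(s̄_{A_{t₀}∪{a_t}}) is maximal among v̄_{a_i}(s̄_{A_{t₀}∪{a_i}}) over t₀ < i ≤ t (ties broken by the fixed order), with T = ∞ if no such t exists. Then E[1[T ≤ n] · v̄_{a_T}(s̄_{A_T})] ≥ (1/(4e) − ε) · max_{a∈A} v̄_a(s̄). -/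
open Finset
attribute [local instance] Classical.propDecidable

lemma sum_mulRight {n : ℕ} (ζ : Equiv.Perm (Fin n)) (f g : Equiv.Perm (Fin n) → ℝ)
    (h : ∀ π, f π = g (π * ζ)) : ∑ π, f π = ∑ π, g π :=
  Fintype.sum_equiv (Equiv.mulRight ζ) f g h

lemma harmonic_ge (k : ℕ) (hk : 1 ≤ k) (m : ℕ) (hkm : k ≤ m) :
    Real.log m - Real.log k ≤ ∑ j ∈ Finset.Ico k m, ((j : ℝ))⁻¹ := by
  induction m, hkm using Nat.le_induction with
  | base => simp
  | succ m hm ih =>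
      rw [Finset.sum_Ico_succ_top hm]
      have hm0 : (0:ℝ) < m := by
        have : (1:ℕ) ≤ m := le_trans hk hm
        exact_mod_cast Nat.lt_of_lt_of_le Nat.zero_lt_one this
      have h1 : Real.log (((m:ℝ)+1)/m) ≤ ((m:ℝ)+1)/m - 1 :=
        Real.log_le_sub_one_of_pos (by positivity)
      have h2 : Real.log (((m:ℝ)+1)/m) = Real.log ((m:ℝ)+1) - Real.log m :=
        Real.log_div (by positivity) (by positivity)
      have h3 : ((m:ℝ)+1)/m - 1 = ((m:ℝ))⁻¹ := by field_simp; ring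
      have h4 : ((m+1 : ℕ) : ℝ) = (m:ℝ) + 1 := by push_cast; ring
      rw [h4]
      linarith

set_option maxHeartbeats 1000000 in
/-- secretary mechanism, 4e-approximation, asymptotic form: for every
`ε > 0` there is `N` such that for every `n ≥ N`, fixed signals `s̄` and monotone,
subadditive-over-signals valuations `v̄` on `n` agents, an injective tie-breaking rank, and
a uniformly random arrival order `π` (agent `arr π t = π (t-1)` arrives at time `t`,
`A π t` is the set of the first `t` arrivals, `mask X` zeroes out signals outside `X`),
with `t₀ = ⌊n/2⌋` and `t₁ = t₀ + ⌊n/(2e)⌋`, the rule stopping at the least `t > t₁` whose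
arrival's estimate `v̄_{a_t}(s̄_{A_{t₀} ∪ {a_t}})` strictly lexicographically (value, then
rank) dominates the estimate of every other arrival in `(t₀, t]` obtains expected myopic
welfare at least `(1/(4e) - ε) · max_a v̄_a(s̄)`. -/
theorem stmt_10 :
    ∀ ε : ℝ, 0 < ε → ∃ N : ℕ, ∀ n : ℕ, N ≤ n →
    ∀ (sbar : Fin n → NNReal) (vbar : Fin n → (Fin n → NNReal) → NNReal),
      (∀ a, Monotone (vbar a)) →
      (∀ a (σ : Fin n → NNReal) (X : Finset (Fin n)),
        vbar a σ ≤ vbar a (fun j => if j ∈ X then σ j else 0)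
          + vbar a (fun j => if j ∉ X then σ j else 0)) →
    ∀ rank : Fin n → ℕ, Function.Injective rank →
    ∀ mask : Finset (Fin n) → Fin n → NNReal,
      (∀ X j, mask X j = if j ∈ X then sbar j else 0) →
    ∀ A : Equiv.Perm (Fin n) → ℕ → Finset (Fin n),
      (∀ π t, A π t = (Finset.univ.filter fun i : Fin n => (i : ℕ) < t).image π) →
    ∀ arr : Equiv.Perm (Fin n) → ℕ → Fin n,
      (∀ (π : Equiv.Perm (Fin n)) (t : ℕ), 1 ≤ t → t ≤ n →
        ((π.symm (arr π t) : ℕ) = t - 1)) →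
    ∀ est : Equiv.Perm (Fin n) → ℕ → ℕ → NNReal,
      (∀ π t i, est π t i = vbar (arr π i) (mask (A π (n / 2) ∪ {arr π i}))) →
    ∀ stops : Equiv.Perm (Fin n) → ℕ → Prop,
      (∀ π t, stops π t ↔ ∀ i : ℕ, n / 2 < i → i ≤ t → i ≠ t →
        (est π t i < est π t t ∨
          (est π t i = est π t t ∧ rank (arr π t) < rank (arr π i)))) →
    ∀ stopT : Equiv.Perm (Fin n) → ℕ,
      (∀ π, stopT π =
        if h : ((Finset.Ioc (n / 2 + ⌊(n : ℝ) / (2 * Real.exp 1)⌋₊) n).filter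
            fun t => stops π t).Nonempty
        then ((Finset.Ioc (n / 2 + ⌊(n : ℝ) / (2 * Real.exp 1)⌋₊) n).filter
            fun t => stops π t).min' h
        else n + 1) →
    ∀ payoff : Equiv.Perm (Fin n) → ℝ,
      (∀ π, payoff π = if stopT π ≤ n
        then ((vbar (arr π (stopT π)) (mask (A π (stopT π))) : NNReal) : ℝ) else 0) →
      (1 / (4 * Real.exp 1) - ε) * ((Finset.univ.sup fun a => vbar a sbar : NNReal) : ℝ) ≤
        (∑ π : Equiv.Perm (Fin n), payoff π) / (Nat.factorial n : ℝ) := by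
  intro ε hε
  refine ⟨⌈1/ε⌉₊ + 1000, ?_⟩
  intro n hn sbar vbar hmon hsub rank hrank mask hmask A hA arr harr est hest
    stops hstops stopT hstopT payoff hpay
  -- basic numeric setup
  have hexp : (2.7182818283 : ℝ) < Real.exp 1 := Real.exp_one_gt_d9
  have hexp' : Real.exp 1 < 2.7182818286 := Real.exp_one_lt_d9
  have hn1000 : 1000 ≤ n := by omega
  have hnR : (1000 : ℝ) ≤ (n : ℝ) := by exact_mod_cast hn1000
  set t₀ : ℕ := n / 2 with ht₀def
  set k : ℕ := ⌊(n : ℝ) / (2 * Real.exp 1)⌋₊ with hkdef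
  set t₁ : ℕ := t₀ + k with ht₁def
  set m : ℕ := n - t₀ with hmdef
  have hkR : (k : ℝ) ≤ (n : ℝ) / (2 * Real.exp 1) := by
    rw [hkdef]; exact Nat.floor_le (by positivity)
  have hk1 : 1 ≤ k := by
    rw [hkdef]
    refine Nat.le_floor ?_
    rw [Nat.cast_one, le_div_iff₀ (by positivity)]
    nlinarith
  have ht₀R : (t₀ : ℝ) ≤ (n : ℝ) / 2 := by
    rw [ht₀def]; exact_mod_cast Nat.cast_div_le
  have ht₀n : t₀ < n := by omega
  have hmR : (n : ℝ) / 2 ≤ (m : ℝ) := by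
    have : (m : ℝ) = (n : ℝ) - (t₀ : ℝ) := by
      rw [hmdef]; push_cast [Nat.cast_sub (le_of_lt ht₀n)]; ring
    linarith
  have hekm : Real.exp 1 * (k : ℝ) ≤ (m : ℝ) := by
    have h1 : Real.exp 1 * (k : ℝ) ≤ Real.exp 1 * ((n : ℝ) / (2 * Real.exp 1)) := by
      apply mul_le_mul_of_nonneg_left hkR (by positivity)
    have h2 : Real.exp 1 * ((n : ℝ) / (2 * Real.exp 1)) = (n : ℝ) / 2 := by
      field_simp
    linarith
  have hkm : k < m := by
    have hkR' : (k : ℝ) < (m : ℝ) := by nlinarith [(Nat.one_le_cast.mpr hk1 : (1:ℝ) ≤ (k:ℝ))]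
    exact_mod_cast hkR'
  have ht₁n : t₁ < n := by omega
  have hm1t₀ : m - 1 ≤ t₀ := by omega
  -- the benchmark
  obtain ⟨astar, -, hM⟩ :=
    Finset.exists_mem_eq_sup (Finset.univ : Finset (Fin n)) ⟨⟨0, by omega⟩, mem_univ _⟩
      (fun a => vbar a sbar)
  set Mv : NNReal := Finset.univ.sup (fun a => vbar a sbar) with hMv
  -- membership normal form
  have memA : ∀ (π : Equiv.Perm (Fin n)) (t : ℕ) (a : Fin n),
      a ∈ A π t ↔ ((π.symm a : Fin n) : ℕ) < t := by
    intro π t a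
    rw [hA]
    simp only [mem_image, mem_filter, mem_univ, true_and]
    constructor
    · rintro ⟨i, hi, rfl⟩; simpa using hi
    · intro h; exact ⟨π.symm a, h, by simp⟩
  have hAmono : ∀ (π : Equiv.Perm (Fin n)) {t t' : ℕ}, t ≤ t' → A π t ⊆ A π t' := by
    intro π t t' htt' a ha
    rw [memA] at ha ⊢; omega
  have harr' : ∀ (π : Equiv.Perm (Fin n)) (t : ℕ) (h1 : 1 ≤ t) (h2 : t ≤ n),
      arr π t = π ⟨t - 1, by omega⟩ := by
    intro π t h1 h2
    have h3 : π.symm (arr π t) = ⟨t - 1, by omega⟩ := Fin.ext (harr π t h1 h2)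
    calc arr π t = π (π.symm (arr π t)) := (π.apply_symm_apply _).symm
      _ = _ := by rw [h3]
  -- mask monotonicity
  have hfmono : ∀ (a : Fin n) (X Y : Finset (Fin n)), X ⊆ Y →
      vbar a (mask X) ≤ vbar a (mask Y) := by
    intro a X Y hXY
    apply hmon a
    intro j
    rw [hmask, hmask]
    by_cases hj : j ∈ X
    · rw [if_pos hj, if_pos (hXY hj)]
    · rw [if_neg hj]; exact zero_le
  -- lexicographic maximum choice function
  set f : Finset (Fin n) → Fin n → NNReal := fun S a => vbar a (mask (S ∪ {a})) with hf
  have hlexE : ∀ S C : Finset (Fin n), ∃ b : Fin n, C.Nonempty →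
      (b ∈ C ∧ ∀ c ∈ C, c ≠ b → (f S c < f S b ∨ (f S c = f S b ∧ rank b < rank c))) := by
    intro S C
    by_cases hC : C.Nonempty
    · obtain ⟨v0, hv0mem, hv0⟩ := Finset.exists_mem_eq_sup C hC (f S)
      have hC1ne : (C.filter (fun c => f S c = C.sup (f S))).Nonempty :=
        ⟨v0, mem_filter.2 ⟨hv0mem, hv0.symm⟩⟩
      obtain ⟨b, hb1, hbmin⟩ := Finset.exists_min_image _ rank hC1ne
      rw [mem_filter] at hb1
      refine ⟨b, fun _ => ⟨hb1.1, ?_⟩⟩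
      intro c hc hne
      have hfc : f S c ≤ f S b := by
        rw [hb1.2]; exact Finset.le_sup hc
      rcases lt_or_eq_of_le hfc with h | h
      · left; exact h
      · right
        refine ⟨h, ?_⟩
        have hble : rank b ≤ rank c := hbmin c (mem_filter.2 ⟨hc, by rw [h]; exact hb1.2⟩)
        exact lt_of_le_of_ne hble (fun he => hne (hrank he.symm))
    · exact ⟨⟨0, by omega⟩, fun h => absurd h hC⟩
  choose lexm hlexm using hlexE
  -- key definitions
  set ahat : Finset (Fin n) → Fin n := fun S => lexm S (Finset.univ \ S) with hahat
  set Qf : (Equiv.Perm (Fin n)) → ℕ := fun π => ((π.symm (ahat (A π t₀)) : Fin n) : ℕ) with hQf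
  set bf : (Equiv.Perm (Fin n)) → Fin n :=
    fun π => lexm (A π t₀) ((A π (Qf π)) \ (A π t₀)) with hbf
  set Rf : (Equiv.Perm (Fin n)) → ℕ := fun π => ((π.symm (bf π) : Fin n) : ℕ) with hRf
  set w : (Equiv.Perm (Fin n)) → ℝ :=
    fun π => ((vbar astar (mask (A π t₀ ∪ {astar})) : NNReal) : ℝ) with hw
  have hwpos : ∀ π, 0 ≤ w π := fun π => NNReal.coe_nonneg _
  -- facts about ahat, Qf
  have hsdne : ∀ π : Equiv.Perm (Fin n), (Finset.univ \ A π t₀).Nonempty := by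
    intro π
    refine ⟨π ⟨t₀, ht₀n⟩, ?_⟩
    rw [mem_sdiff, memA]
    simp
  have hahatP : ∀ π : Equiv.Perm (Fin n), ahat (A π t₀) ∈ Finset.univ \ A π t₀ ∧
      ∀ c ∈ Finset.univ \ A π t₀, c ≠ ahat (A π t₀) →
        (f (A π t₀) c < f (A π t₀) (ahat (A π t₀)) ∨
          (f (A π t₀) c = f (A π t₀) (ahat (A π t₀)) ∧
            rank (ahat (A π t₀)) < rank c)) := by
    intro π
    exact hlexm (A π t₀) (Finset.univ \ A π t₀) (hsdne π)
  have hQlt : ∀ π : Equiv.Perm (Fin n), Qf π < n := fun π => (π.symm _).isLt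
  have hQge : ∀ π : Equiv.Perm (Fin n), t₀ ≤ Qf π := by
    intro π
    have h1 := (hahatP π).1
    rw [mem_sdiff, memA] at h1
    simp only [hQf]
    omega
  -- facts about bf, Rf
  have hCbne : ∀ π : Equiv.Perm (Fin n), t₁ ≤ Qf π → ((A π (Qf π)) \ (A π t₀)).Nonempty := by
    intro π hq
    refine ⟨π ⟨t₀, ht₀n⟩, ?_⟩
    rw [mem_sdiff, memA, memA]
    simp only [Equiv.symm_apply_apply]
    omega
  have hbfP : ∀ π : Equiv.Perm (Fin n), t₁ ≤ Qf π →
      bf π ∈ (A π (Qf π)) \ (A π t₀) ∧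
      ∀ c ∈ (A π (Qf π)) \ (A π t₀), c ≠ bf π →
        (f (A π t₀) c < f (A π t₀) (bf π) ∨
          (f (A π t₀) c = f (A π t₀) (bf π) ∧ rank (bf π) < rank c)) := by
    intro π hq
    exact hlexm (A π t₀) _ (hCbne π hq)
  have hRrange : ∀ π : Equiv.Perm (Fin n), t₁ ≤ Qf π → t₀ ≤ Rf π ∧ Rf π < Qf π := by
    intro π hq
    have h1 := (hbfP π hq).1
    rw [mem_sdiff, memA, memA] at h1
    simp only [hRf]
    omega
  -- swap machinery
  have hAswap : ∀ (π : Equiv.Perm (Fin n)) (u v : Fin n) (c : ℕ),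
      (((u : ℕ) < c) ↔ ((v : ℕ) < c)) → A (π * Equiv.swap u v) c = A π c := by
    intro π u v c hc
    ext a
    rw [memA, memA]
    have h1 : (π * Equiv.swap u v).symm a = (Equiv.swap u v) (π.symm a) := by
      have : (π * Equiv.swap u v).symm a = (Equiv.swap u v).symm (π.symm a) := rfl
      rw [this, Equiv.symm_swap]
    rw [h1]
    rcases Equiv.swap_apply_def u v (π.symm a) with _
    by_cases hxu : π.symm a = u
    · rw [hxu, Equiv.swap_apply_left]; exact hc.symm
    · by_cases hxv : π.symm a = v
      · rw [hxv, Equiv.swap_apply_right]; exact hc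
      · rw [Equiv.swap_apply_of_ne_of_ne hxu hxv]
  have hQfval : ∀ π : Equiv.Perm (Fin n), ((π.symm (ahat (A π t₀)) : Fin n) : ℕ) = Qf π :=
    fun π => by simp only [hQf]
  have hRfval : ∀ π : Equiv.Perm (Fin n), ((π.symm (bf π) : Fin n) : ℕ) = Rf π :=
    fun π => by simp only [hRf]
  -- L1 : pointwise payoff lower bound
  have hL1 : ∀ π : Equiv.Perm (Fin n),
      (if (astar ∉ A π t₀ ∧ t₁ ≤ Qf π ∧ Rf π < t₁) then w π else 0) ≤ payoff π := by
    intro π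
    have hpay0 : 0 ≤ payoff π := by
      rw [hpay]; split_ifs
      · exact NNReal.coe_nonneg _
      · exact le_refl 0
    by_cases hg : (astar ∉ A π t₀ ∧ t₁ ≤ Qf π ∧ Rf π < t₁)
    swap
    · rw [if_neg hg]; exact hpay0
    rw [if_pos hg]
    obtain ⟨h1, h2, h3⟩ := hg
    have hQn : Qf π < n := hQlt π
    set p : ℕ := Qf π + 1 with hp
    have hpn : p ≤ n := by omega
    have hp1 : 1 ≤ p := by omega
    have hsymm_ahat : π.symm (ahat (A π t₀)) = ⟨Qf π, hQn⟩ := Fin.ext (hQfval π)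
    have harrp : arr π p = ahat (A π t₀) := by
      rw [harr' π p hp1 hpn]
      have hfe : (⟨p - 1, by omega⟩ : Fin n) = ⟨Qf π, hQn⟩ := Fin.ext (by simp [hp])
      rw [hfe, ← hsymm_ahat, Equiv.apply_symm_apply]
    have hstopsp : stops π p := by
      rw [hstops]
      intro i hi1 hi2 hip
      have hsy : ((π.symm (arr π i) : Fin n) : ℕ) = i - 1 := harr π i (by omega) (by omega)
      have hmem : arr π i ∈ Finset.univ \ A π t₀ := by
        rw [mem_sdiff, memA, hsy]
        refine ⟨mem_univ _, by omega⟩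
      have hne : arr π i ≠ ahat (A π t₀) := by
        intro he
        rw [he, hQfval π] at hsy
        omega
      have hdom := (hahatP π).2 (arr π i) hmem hne
      simp only [hest, harrp]
      simp only [hf] at hdom
      exact hdom
    have hnostop : ∀ t : ℕ, t₁ < t → t < p → ¬ stops π t := by
      intro t ht1 htp hst
      have hRlo := (hRrange π h2).1
      have hRhi := (hRrange π h2).2
      set i : ℕ := Rf π + 1 with hidef
      have hsymb : π.symm (bf π) = ⟨Rf π, by omega⟩ := Fin.ext (hRfval π)
      have harri : arr π i = bf π := by
        rw [harr' π i (by omega) (by omega)]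
        have hfe : (⟨i - 1, by omega⟩ : Fin n) = ⟨Rf π, by omega⟩ := Fin.ext (by simp [hidef])
        rw [hfe, ← hsymb, Equiv.apply_symm_apply]
      have hsyt : ((π.symm (arr π t) : Fin n) : ℕ) = t - 1 := harr π t (by omega) (by omega)
      have harrt : arr π t ∈ (A π (Qf π)) \ (A π t₀) := by
        rw [mem_sdiff, memA, memA, hsyt]
        omega
      have hnebt : arr π t ≠ bf π := by
        intro he
        rw [he, hRfval π] at hsyt
        omega
      have hdom := (hbfP π h2).2 (arr π t) harrt hnebt
      have hDD := (hstops π t).1 hst i (by omega) (by omega) (by omega)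
      simp only [hest, harri] at hDD
      simp only [hf] at hdom
      rcases hdom with hlt | ⟨heq, hrk⟩
      · rcases hDD with hlt' | ⟨heq', _⟩
        · exact absurd hlt' (lt_asymm hlt)
        · exact absurd heq' (ne_of_gt hlt)
      · rcases hDD with hlt' | ⟨_, hrk'⟩
        · exact absurd heq (ne_of_gt hlt')
        · omega
    set FS : Finset ℕ := (Finset.Ioc t₁ n).filter (fun t => stops π t) with hFS
    have hpFS : p ∈ FS := by
      rw [hFS, mem_filter, mem_Ioc]
      exact ⟨⟨by omega, hpn⟩, hstopsp⟩
    have hFSne : FS.Nonempty := ⟨p, hpFS⟩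
    have hFSfact : ∀ x ∈ FS, t₁ < x ∧ x ≤ n ∧ stops π x := by
      intro x hx
      rw [hFS, mem_filter, mem_Ioc] at hx
      exact ⟨hx.1.1, hx.1.2, hx.2⟩
    have hstopTp : stopT π = p := by
      rw [hstopT π, ← hFS, dif_pos hFSne]
      apply le_antisymm (Finset.min'_le FS p hpFS)
      by_contra hltc
      push_neg at hltc
      obtain ⟨ha1, ha2, ha3⟩ := hFSfact _ (Finset.min'_mem FS hFSne)
      exact hnostop _ ha1 hltc ha3
    rw [hpay, hstopTp, if_pos hpn, harrp]
    have hsub1 : A π t₀ ∪ {ahat (A π t₀)} ⊆ A π p := by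
      apply Finset.union_subset (hAmono π (by omega))
      simp only [Finset.singleton_subset_iff]
      rw [memA, hQfval π]
      omega
    have hstep1 : vbar astar (mask (A π t₀ ∪ {astar})) ≤
        vbar (ahat (A π t₀)) (mask (A π t₀ ∪ {ahat (A π t₀)})) := by
      have hastar : astar ∈ Finset.univ \ A π t₀ := by
        rw [mem_sdiff]; exact ⟨mem_univ _, h1⟩
      by_cases he : astar = ahat (A π t₀)
      · rw [he]
      · rcases (hahatP π).2 astar hastar he with hlt | ⟨heq, _⟩
        · simp only [hf] at hlt; exact le_of_lt hlt
        · simp only [hf] at heq; exact le_of_eq heq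
    have hstep2 : vbar (ahat (A π t₀)) (mask (A π t₀ ∪ {ahat (A π t₀)})) ≤
        vbar (ahat (A π t₀)) (mask (A π p)) := hfmono _ _ _ hsub1
    simp only [hw]
    exact_mod_cast le_trans hstep1 hstep2
  -- swap value helpers
  have hswapvv : ∀ (r r' : ℕ) (hr : r < n) (hr' : r' < n) (x : Fin n),
      ((((Equiv.swap ⟨r,hr⟩ ⟨r',hr'⟩ : Equiv.Perm (Fin n)) x : Fin n)) : ℕ) = r' ↔
        ((x : ℕ) = r) := by
    intro r r' hr hr' x
    constructor
    · intro h
      have h2 : (Equiv.swap (⟨r,hr⟩ : Fin n) ⟨r',hr'⟩) x = ⟨r',hr'⟩ := Fin.ext h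
      have h3 := congrArg (Equiv.swap (⟨r,hr⟩ : Fin n) ⟨r',hr'⟩) h2
      rw [Equiv.swap_apply_self, Equiv.swap_apply_right] at h3
      rw [h3]
    · intro h
      have h2 : x = ⟨r, hr⟩ := Fin.ext h
      rw [h2, Equiv.swap_apply_left]
  have hswapfix : ∀ (r r' c : ℕ) (hr : r < n) (hr' : r' < n) (x : Fin n), r ≠ c → r' ≠ c →
      (((((Equiv.swap ⟨r,hr⟩ ⟨r',hr'⟩ : Equiv.Perm (Fin n)) x : Fin n)) : ℕ) = c ↔
        ((x : ℕ) = c)) := by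
    intro r r' c hr hr' x h1 h2
    constructor
    · intro h
      by_cases hxr : x = ⟨r,hr⟩
      · rw [hxr, Equiv.swap_apply_left] at h; simp at h; omega
      · by_cases hxr' : x = ⟨r',hr'⟩
        · rw [hxr', Equiv.swap_apply_right] at h; simp at h; omega
        · rw [Equiv.swap_apply_of_ne_of_ne hxr hxr'] at h; exact h
    · intro h
      have hxr : x ≠ ⟨r,hr⟩ := by
        intro he; rw [he] at h; simp at h; omega
      have hxr' : x ≠ ⟨r',hr'⟩ := by
        intro he; rw [he] at h; simp at h; omega
      rw [Equiv.swap_apply_of_ne_of_ne hxr hxr']; exact h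
  have hmulsymm : ∀ (π ζ : Equiv.Perm (Fin n)) (a : Fin n),
      (π * ζ).symm a = ζ.symm (π.symm a) := fun π ζ a => rfl
  -- slice equality in q
  have hE1 : ∀ q q' : ℕ, t₀ ≤ q → q < n → t₀ ≤ q' → q' < n →
      (∑ π : Equiv.Perm (Fin n), if (astar ∉ A π t₀ ∧ Qf π = q) then w π else 0)
        = ∑ π : Equiv.Perm (Fin n), if (astar ∉ A π t₀ ∧ Qf π = q') then w π else 0 := by
    intro q q' hq hqn hq' hq'n
    apply sum_mulRight (Equiv.swap ⟨q, hqn⟩ ⟨q', hq'n⟩)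
    intro π
    have hS : A (π * Equiv.swap ⟨q, hqn⟩ ⟨q', hq'n⟩) t₀ = A π t₀ :=
      hAswap π _ _ t₀ (by simp; omega)
    have hweq : w (π * Equiv.swap ⟨q, hqn⟩ ⟨q', hq'n⟩) = w π := by simp only [hw, hS]
    have hQeq : (Qf (π * Equiv.swap ⟨q, hqn⟩ ⟨q', hq'n⟩) = q') ↔ (Qf π = q) := by
      simp only [hQf, hS]
      rw [hmulsymm, Equiv.symm_swap]
      exact hswapvv q q' hqn hq'n _
    have hiff : (astar ∉ A (π * Equiv.swap ⟨q, hqn⟩ ⟨q', hq'n⟩) t₀ ∧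
        Qf (π * Equiv.swap ⟨q, hqn⟩ ⟨q', hq'n⟩) = q') ↔ (astar ∉ A π t₀ ∧ Qf π = q) := by
      rw [hS]; exact and_congr_right (fun _ => hQeq)
    exact (if_congr hiff hweq rfl).symm
  -- partition over q
  have hpart2 : ∀ π : Equiv.Perm (Fin n),
      (∑ q ∈ Finset.Ico t₀ n, if (astar ∉ A π t₀ ∧ Qf π = q) then w π else 0)
        = if astar ∉ A π t₀ then w π else 0 := by
    intro π
    by_cases hPp : astar ∉ A π t₀
    · rw [if_pos hPp]
      have h1 : ∀ q ∈ Finset.Ico t₀ n, (if (astar ∉ A π t₀ ∧ Qf π = q) then w π else 0)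
          = (if Qf π = q then w π else 0) := by
        intro q _
        by_cases h : Qf π = q
        · simp [h, hPp]
        · simp [h]
      rw [Finset.sum_congr rfl h1, Finset.sum_ite_eq,
        if_pos (Finset.mem_Ico.2 ⟨hQge π, hQlt π⟩)]
    · rw [if_neg hPp]
      apply Finset.sum_eq_zero
      intro q _
      rw [if_neg (by tauto)]
  have hE2comb : ∀ q : ℕ, t₀ ≤ q → q < n →
      (m : ℝ) * (∑ π : Equiv.Perm (Fin n), if (astar ∉ A π t₀ ∧ Qf π = q) then w π else 0)
        = ∑ π : Equiv.Perm (Fin n), (if astar ∉ A π t₀ then w π else 0) := by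
    intro q hq hqn
    have h0 : ∑ q' ∈ Finset.Ico t₀ n,
        (∑ π : Equiv.Perm (Fin n), if (astar ∉ A π t₀ ∧ Qf π = q') then w π else 0)
          = ∑ π : Equiv.Perm (Fin n), (if astar ∉ A π t₀ then w π else 0) := by
      rw [Finset.sum_comm]
      exact Finset.sum_congr rfl (fun π _ => hpart2 π)
    rw [← h0,
      Finset.sum_congr rfl (fun q' hq' => hE1 q' q (Finset.mem_Ico.1 hq').1
        (Finset.mem_Ico.1 hq').2 hq hqn),
      Finset.sum_const, Nat.card_Ico, nsmul_eq_mul, ← hmdef]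
  -- slice equality in r (for fixed q)
  have hE3 : ∀ q : ℕ, t₁ ≤ q → q < n → ∀ r r' : ℕ, t₀ ≤ r → r < q → t₀ ≤ r' → r' < q →
      (∑ π : Equiv.Perm (Fin n), if (astar ∉ A π t₀ ∧ Qf π = q ∧ Rf π = r) then w π else 0)
        = ∑ π : Equiv.Perm (Fin n),
            if (astar ∉ A π t₀ ∧ Qf π = q ∧ Rf π = r') then w π else 0 := by
    intro q hq hqn r r' hr hrq hr' hr'q
    have hrn : r < n := by omega
    have hr'n : r' < n := by omega
    apply sum_mulRight (Equiv.swap ⟨r, hrn⟩ ⟨r', hr'n⟩)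
    intro π
    have hS : A (π * Equiv.swap ⟨r, hrn⟩ ⟨r', hr'n⟩) t₀ = A π t₀ :=
      hAswap π _ _ t₀ (by simp; omega)
    have hAq : A (π * Equiv.swap ⟨r, hrn⟩ ⟨r', hr'n⟩) q = A π q :=
      hAswap π _ _ q (by simp; omega)
    have hweq : w (π * Equiv.swap ⟨r, hrn⟩ ⟨r', hr'n⟩) = w π := by simp only [hw, hS]
    have hQeq : (Qf (π * Equiv.swap ⟨r, hrn⟩ ⟨r', hr'n⟩) = q) ↔ (Qf π = q) := by
      simp only [hQf, hS]
      rw [hmulsymm, Equiv.symm_swap]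
      exact hswapfix r r' q hrn hr'n _ (by omega) (by omega)
    have hbeq : Qf π = q → bf (π * Equiv.swap ⟨r, hrn⟩ ⟨r', hr'n⟩) = bf π := by
      intro hQq
      have hQq' : Qf (π * Equiv.swap ⟨r, hrn⟩ ⟨r', hr'n⟩) = q := hQeq.2 hQq
      simp only [hbf, hS, hQq, hQq', hAq]
    have hiff : (astar ∉ A (π * Equiv.swap ⟨r, hrn⟩ ⟨r', hr'n⟩) t₀ ∧
        Qf (π * Equiv.swap ⟨r, hrn⟩ ⟨r', hr'n⟩) = q ∧
        Rf (π * Equiv.swap ⟨r, hrn⟩ ⟨r', hr'n⟩) = r') ↔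
          (astar ∉ A π t₀ ∧ Qf π = q ∧ Rf π = r) := by
      rw [hS]
      apply and_congr_right
      intro _
      constructor
      · rintro ⟨hq1, hq2⟩
        have hQq : Qf π = q := hQeq.1 hq1
        refine ⟨hQq, ?_⟩
        have e : Rf (π * Equiv.swap ⟨r, hrn⟩ ⟨r', hr'n⟩)
            = (((Equiv.swap ⟨r, hrn⟩ ⟨r', hr'n⟩ : Equiv.Perm (Fin n))
                (π.symm (bf π)) : Fin n) : ℕ) := by
          simp only [hRf, hbeq hQq, hmulsymm, Equiv.symm_swap]
        rw [e] at hq2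
        simp only [hRf]
        exact (hswapvv r r' hrn hr'n _).1 hq2
      · rintro ⟨hQq, hq2⟩
        refine ⟨hQeq.2 hQq, ?_⟩
        simp only [hRf, hbeq hQq]
        rw [hmulsymm, Equiv.symm_swap]
        have h5 : π.symm (bf π) = ⟨r, hrn⟩ := Fin.ext (by simp only [hRfval π]; exact hq2)
        rw [h5, Equiv.swap_apply_left]
    exact (if_congr hiff hweq rfl).symm
  -- partition over r for fixed q
  have hpart3 : ∀ q : ℕ, t₁ ≤ q → q < n → ∀ π : Equiv.Perm (Fin n),
      (∑ r ∈ Finset.Ico t₀ q, if (astar ∉ A π t₀ ∧ Qf π = q ∧ Rf π = r) then w π else 0)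
        = if (astar ∉ A π t₀ ∧ Qf π = q) then w π else 0 := by
    intro q hq hqn π
    by_cases hPp : astar ∉ A π t₀ ∧ Qf π = q
    · rw [if_pos hPp]
      have hR := hRrange π (by omega)
      have h1 : ∀ r ∈ Finset.Ico t₀ q, (if (astar ∉ A π t₀ ∧ Qf π = q ∧ Rf π = r) then w π else 0)
          = (if Rf π = r then w π else 0) := by
        intro r _
        by_cases h : Rf π = r
        · simp [h, hPp.1, hPp.2]
        · simp [h]
      rw [Finset.sum_congr rfl h1, Finset.sum_ite_eq,
        if_pos (Finset.mem_Ico.2 ⟨hR.1, by omega⟩)]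
    · rw [if_neg hPp]
      apply Finset.sum_eq_zero
      intro r _
      rw [if_neg (by tauto)]
  have hE4comb : ∀ q : ℕ, t₁ ≤ q → q < n → ∀ r : ℕ, t₀ ≤ r → r < q →
      ((q - t₀ : ℕ) : ℝ) *
        (∑ π : Equiv.Perm (Fin n), if (astar ∉ A π t₀ ∧ Qf π = q ∧ Rf π = r) then w π else 0)
        = ∑ π : Equiv.Perm (Fin n), if (astar ∉ A π t₀ ∧ Qf π = q) then w π else 0 := by
    intro q hq hqn r hr hrq
    have h0 : ∑ r' ∈ Finset.Ico t₀ q,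
        (∑ π : Equiv.Perm (Fin n), if (astar ∉ A π t₀ ∧ Qf π = q ∧ Rf π = r') then w π else 0)
          = ∑ π : Equiv.Perm (Fin n), (if (astar ∉ A π t₀ ∧ Qf π = q) then w π else 0) := by
      rw [Finset.sum_comm]
      exact Finset.sum_congr rfl (fun π _ => hpart3 q hq hqn π)
    rw [← h0,
      Finset.sum_congr rfl (fun r' hr' => hE3 q hq hqn r' r (Finset.mem_Ico.1 hr').1
        (Finset.mem_Ico.1 hr').2 hr hrq),
      Finset.sum_const, Nat.card_Ico, nsmul_eq_mul]
  -- the double partition identity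
  have hpart5 : ∀ π : Equiv.Perm (Fin n),
      (∑ q ∈ Finset.Ico t₁ n, ∑ r ∈ Finset.Ico t₀ t₁,
        if (astar ∉ A π t₀ ∧ Qf π = q ∧ Rf π = r) then w π else 0)
        = if (astar ∉ A π t₀ ∧ t₁ ≤ Qf π ∧ Rf π < t₁) then w π else 0 := by
    intro π
    by_cases hPp : astar ∉ A π t₀
    · by_cases hq : t₁ ≤ Qf π
      · by_cases hr : Rf π < t₁
        · have hRlo := (hRrange π hq).1
          have hinner : ∀ q ∈ Finset.Ico t₁ n,
              (∑ r ∈ Finset.Ico t₀ t₁, if (astar ∉ A π t₀ ∧ Qf π = q ∧ Rf π = r)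
                then w π else 0) = if Qf π = q then w π else 0 := by
            intro q _
            by_cases hQq : Qf π = q
            · rw [if_pos hQq]
              have h1 : ∀ r ∈ Finset.Ico t₀ t₁,
                  (if (astar ∉ A π t₀ ∧ Qf π = q ∧ Rf π = r) then w π else 0)
                    = if Rf π = r then w π else 0 := by
                intro r _
                by_cases h : Rf π = r
                · simp [h, hPp, hQq]
                · simp [h]
              rw [Finset.sum_congr rfl h1, Finset.sum_ite_eq,
                if_pos (Finset.mem_Ico.2 ⟨hRlo, hr⟩)]
            · rw [if_neg hQq]
              apply Finset.sum_eq_zero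
              intro r _
              rw [if_neg (by tauto)]
          rw [Finset.sum_congr rfl hinner, Finset.sum_ite_eq,
            if_pos (Finset.mem_Ico.2 ⟨hq, hQlt π⟩), if_pos ⟨hPp, hq, hr⟩]
        · rw [if_neg (by tauto)]
          apply Finset.sum_eq_zero
          intro q _
          apply Finset.sum_eq_zero
          intro r hrm
          have := (Finset.mem_Ico.1 hrm).2
          rw [if_neg]
          rintro ⟨-, -, h3⟩
          omega
      · rw [if_neg (by tauto)]
        apply Finset.sum_eq_zero
        intro q hqm
        apply Finset.sum_eq_zero
        intro r _
        have := (Finset.mem_Ico.1 hqm).1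
        rw [if_neg]
        rintro ⟨-, h2, -⟩
        omega
    · rw [if_neg (by tauto)]
      apply Finset.sum_eq_zero
      intro q _
      apply Finset.sum_eq_zero
      intro r _
      rw [if_neg (by tauto)]
  set W : ℝ := ∑ π : Equiv.Perm (Fin n), (if astar ∉ A π t₀ then w π else 0) with hWdef
  have hWnn : 0 ≤ W := by
    rw [hWdef]
    apply Finset.sum_nonneg
    intro π _
    by_cases h : astar ∉ A π t₀
    · rw [if_pos h]; exact hwpos π
    · rw [if_neg h]
  -- good sum as a double sum
  have hgw_eq : (∑ π : Equiv.Perm (Fin n),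
      if (astar ∉ A π t₀ ∧ t₁ ≤ Qf π ∧ Rf π < t₁) then w π else 0)
        = ∑ q ∈ Finset.Ico t₁ n, ∑ r ∈ Finset.Ico t₀ t₁,
            ∑ π : Equiv.Perm (Fin n),
              if (astar ∉ A π t₀ ∧ Qf π = q ∧ Rf π = r) then w π else 0 := by
    rw [show (∑ q ∈ Finset.Ico t₁ n, ∑ r ∈ Finset.Ico t₀ t₁,
        ∑ π : Equiv.Perm (Fin n),
          if (astar ∉ A π t₀ ∧ Qf π = q ∧ Rf π = r) then w π else 0)
        = ∑ q ∈ Finset.Ico t₁ n, ∑ π : Equiv.Perm (Fin n), ∑ r ∈ Finset.Ico t₀ t₁,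
            (if (astar ∉ A π t₀ ∧ Qf π = q ∧ Rf π = r) then w π else 0) from
      Finset.sum_congr rfl (fun q _ => Finset.sum_comm), Finset.sum_comm]
    exact Finset.sum_congr rfl (fun π _ => (hpart5 π).symm)
  -- value of each inner slice
  have hXqr : ∀ q ∈ Finset.Ico t₁ n, ∀ r ∈ Finset.Ico t₀ t₁,
      (∑ π : Equiv.Perm (Fin n), if (astar ∉ A π t₀ ∧ Qf π = q ∧ Rf π = r) then w π else 0)
        = W / ((m : ℝ) * ((q - t₀ : ℕ) : ℝ)) := by
    intro q hqm r hrm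
    obtain ⟨hq1, hq2⟩ := Finset.mem_Ico.1 hqm
    obtain ⟨hr1, hr2⟩ := Finset.mem_Ico.1 hrm
    have hrq : r < q := by omega
    have h4 := hE4comb q hq1 hq2 r hr1 hrq
    have h2 := hE2comb q (by omega) hq2
    have hm0 : (0:ℝ) < (m:ℝ) := by exact_mod_cast (by omega : 0 < m)
    have hqt0 : (0:ℝ) < ((q - t₀ : ℕ) : ℝ) := by exact_mod_cast (by omega : 0 < q - t₀)
    rw [eq_div_iff (by positivity)]
    rw [hWdef] at h2 ⊢
    linear_combination ((m : ℝ)) * h4 + h2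
  -- harmonic bound
  have hH1 : (1:ℝ) ≤ ∑ q ∈ Finset.Ico t₁ n, ((q - t₀ : ℕ) : ℝ)⁻¹ := by
    have him : Finset.Ico t₁ n = Finset.image (fun j => t₀ + j) (Finset.Ico k m) := by
      rw [Finset.image_add_left_Ico]
      congr 1 <;> omega
    have hre : ∑ q ∈ Finset.Ico t₁ n, ((q - t₀ : ℕ) : ℝ)⁻¹
        = ∑ j ∈ Finset.Ico k m, ((j : ℕ) : ℝ)⁻¹ := by
      rw [him, Finset.sum_image (by intro a _ b _ h; simp only at h; omega)]
      exact Finset.sum_congr rfl (fun j _ => by congr 1; norm_cast; omega)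
    rw [hre]
    have hlog := harmonic_ge k hk1 m (le_of_lt hkm)
    have hk0 : (0:ℝ) < (k:ℝ) := by exact_mod_cast hk1
    have hm0 : (0:ℝ) < (m:ℝ) := by exact_mod_cast (by omega : 0 < m)
    have hlogk : (1:ℝ) ≤ Real.log m - Real.log k := by
      rw [← Real.log_div (ne_of_gt hm0) (ne_of_gt hk0),
        Real.le_log_iff_exp_le (by positivity), le_div_iff₀ hk0]
      exact hekm
    linarith
  -- lower bound on the good sum
  have hgwlb : (k : ℝ) * W / m ≤ ∑ π : Equiv.Perm (Fin n),
      (if (astar ∉ A π t₀ ∧ t₁ ≤ Qf π ∧ Rf π < t₁) then w π else 0) := by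
    rw [hgw_eq]
    have hstep : ∀ q ∈ Finset.Ico t₁ n,
        (∑ r ∈ Finset.Ico t₀ t₁, ∑ π : Equiv.Perm (Fin n),
          if (astar ∉ A π t₀ ∧ Qf π = q ∧ Rf π = r) then w π else 0)
          = ((k : ℝ) * W / m) * ((q - t₀ : ℕ) : ℝ)⁻¹ := by
      intro q hqm
      rw [Finset.sum_congr rfl (fun r hrm => hXqr q hqm r hrm), Finset.sum_const,
        Nat.card_Ico, nsmul_eq_mul]
      have hm0 : (0:ℝ) < (m:ℝ) := by exact_mod_cast (by omega : 0 < m)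
      have hq1 := (Finset.mem_Ico.1 hqm).1
      have hqt0 : (0:ℝ) < ((q - t₀ : ℕ) : ℝ) := by exact_mod_cast (by omega : 0 < q - t₀)
      have hcard : ((t₁ - t₀ : ℕ) : ℝ) = (k : ℝ) := by norm_cast; omega
      rw [hcard]
      field_simp
      try ring
    rw [Finset.sum_congr rfl hstep, ← Finset.mul_sum]
    have hkWm : 0 ≤ (k : ℝ) * W / m := by positivity
    nlinarith [hH1, hkWm]
  -- counting permutations with astar in the second half
  have hcnteq : ∀ j j' : ℕ, j < n → j' < n →
      (∑ π : Equiv.Perm (Fin n), if ((π.symm astar : Fin n) : ℕ) = j then (1:ℝ) else 0)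
        = ∑ π : Equiv.Perm (Fin n), if ((π.symm astar : Fin n) : ℕ) = j' then (1:ℝ) else 0 := by
    intro j j' hj hj'
    apply sum_mulRight (Equiv.swap (⟨j,hj⟩ : Fin n) ⟨j',hj'⟩)
    intro π
    have hiff : ((((π * Equiv.swap (⟨j,hj⟩ : Fin n) ⟨j',hj'⟩).symm astar : Fin n)) : ℕ) = j' ↔
        (((π.symm astar : Fin n)) : ℕ) = j := by
      rw [hmulsymm, Equiv.symm_swap]
      exact hswapvv j j' hj hj' _
    exact (if_congr hiff rfl rfl).symm
  have hcnttot : ∑ j ∈ Finset.range n,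
      (∑ π : Equiv.Perm (Fin n), if ((π.symm astar : Fin n) : ℕ) = j then (1:ℝ) else 0)
        = (n.factorial : ℝ) := by
    rw [Finset.sum_comm]
    have h1 : ∀ π : Equiv.Perm (Fin n),
        (∑ j ∈ Finset.range n, if ((π.symm astar : Fin n) : ℕ) = j then (1:ℝ) else 0) = 1 := by
      intro π
      rw [Finset.sum_ite_eq, if_pos (Finset.mem_range.2 (π.symm astar).isLt)]
    rw [Finset.sum_congr rfl (fun π _ => h1 π), Finset.sum_const, nsmul_eq_mul, mul_one]
    simp [Fintype.card_perm]
  have hcntval : ∀ j : ℕ, j < n →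
      (n : ℝ) * (∑ π : Equiv.Perm (Fin n),
        if ((π.symm astar : Fin n) : ℕ) = j then (1:ℝ) else 0) = (n.factorial : ℝ) := by
    intro j hj
    rw [← hcnttot,
      Finset.sum_congr rfl (fun j' hj' => hcnteq j' j (Finset.mem_range.1 hj') hj),
      Finset.sum_const, Finset.card_range, nsmul_eq_mul]
  have hWcnt : (n : ℝ) * (∑ π : Equiv.Perm (Fin n), if astar ∉ A π t₀ then (1:ℝ) else 0)
      = (m : ℝ) * (n.factorial : ℝ) := by
    have hpt : ∀ π : Equiv.Perm (Fin n), (if astar ∉ A π t₀ then (1:ℝ) else 0)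
        = ∑ j ∈ Finset.Ico t₀ n, (if ((π.symm astar : Fin n) : ℕ) = j then (1:ℝ) else 0) := by
      intro π
      rw [Finset.sum_ite_eq]
      have hiff : (astar ∉ A π t₀) ↔ ((π.symm astar : Fin n) : ℕ) ∈ Finset.Ico t₀ n := by
        rw [memA, Finset.mem_Ico]
        constructor
        · intro h; exact ⟨by omega, (π.symm astar).isLt⟩
        · intro h; omega
      exact if_congr hiff rfl rfl
    rw [Finset.sum_congr rfl (fun π _ => hpt π), Finset.sum_comm, Finset.mul_sum,
      Finset.sum_congr rfl (fun j hj => hcntval j (by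
        have := (Finset.mem_Ico.1 hj).2; omega)),
      Finset.sum_const, Nat.card_Ico, nsmul_eq_mul, ← hmdef]
  -- the pairing involution
  have hρex : ∀ j : ℕ, ∃ ρ : Equiv.Perm (Fin n), t₀ ≤ j → j < n →
      ((∀ x : Fin n, (x : ℕ) = j → ρ x = x) ∧
       (∀ x : Fin n, t₀ ≤ (x : ℕ) → (x : ℕ) ≠ j → ((ρ x : Fin n) : ℕ) < t₀) ∧
       (∀ x : Fin n, ρ (ρ x) = x)) := by
    intro j
    by_cases hj : t₀ ≤ j ∧ j < n
    swap
    · exact ⟨1, fun h1 h2 => absurd ⟨h1, h2⟩ hj⟩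
    obtain ⟨hj1, hj2⟩ := hj
    set gval : ℕ → ℕ := fun i =>
      if i < m - 1 then (if t₀ + i < j then t₀ + i else t₀ + i + 1)
      else if t₀ ≤ i ∧ i ≠ j then (if i < j then i - t₀ else i - t₀ - 1)
      else i with hgval
    have hgval_lt : ∀ i : ℕ, i < n → gval i < n := by
      intro i hi
      simp only [hgval]
      split_ifs <;> omega
    have hgval_inv : ∀ i : ℕ, i < n → gval (gval i) = i := by
      intro i hi
      simp only [hgval]
      split_ifs <;> omega
    set g : Fin n → Fin n := fun x => ⟨gval (x : ℕ), hgval_lt _ x.isLt⟩ with hg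
    have hginv : Function.Involutive g := by
      intro x
      simp only [hg]
      exact Fin.ext (hgval_inv (x : ℕ) x.isLt)
    refine ⟨Function.Involutive.toPerm g hginv, fun _ _ => ⟨?_, ?_, ?_⟩⟩
    · intro x hx
      show g x = x
      apply Fin.ext
      simp only [hg, hgval]
      split_ifs <;> omega
    · intro x hx1 hx2
      show ((g x : Fin n) : ℕ) < t₀
      simp only [hg, hgval]
      split_ifs <;> omega
    · intro x
      exact hginv x
  choose ρ hρ using hρex
  set Ψ : Equiv.Perm (Fin n) → Equiv.Perm (Fin n) := fun π =>
    if t₀ ≤ ((π.symm astar : Fin n) : ℕ) then π * ρ ((π.symm astar : Fin n) : ℕ) else π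
    with hΨ
  have hρρ : ∀ j : ℕ, t₀ ≤ j → j < n → ρ j * ρ j = 1 := by
    intro j h1 h2
    ext x
    rw [Equiv.Perm.mul_apply]
    have h5 := (hρ j h1 h2).2.2 x
    simp [h5]
  have hρsymm : ∀ j : ℕ, t₀ ≤ j → j < n → ∀ x : Fin n, (ρ j).symm x = ρ j x := by
    intro j h1 h2 x
    conv_lhs => rw [← (hρ j h1 h2).2.2 x]
    rw [Equiv.symm_apply_apply]
  have hΨapp : ∀ σ : Equiv.Perm (Fin n), t₀ ≤ ((σ.symm astar : Fin n) : ℕ) →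
      Ψ σ = σ * ρ ((σ.symm astar : Fin n) : ℕ) := by
    intro σ h
    simp only [hΨ, if_pos h]
  have hΨfix : ∀ π : Equiv.Perm (Fin n), t₀ ≤ ((π.symm astar : Fin n) : ℕ) →
      (Ψ π).symm astar = π.symm astar := by
    intro π hj
    have hjlt : ((π.symm astar : Fin n) : ℕ) < n := (π.symm astar).isLt
    rw [hΨapp π hj, hmulsymm, hρsymm _ hj hjlt, (hρ _ hj hjlt).1 _ rfl]
  have hΨinv : Function.Involutive Ψ := by
    intro π
    by_cases hj : t₀ ≤ ((π.symm astar : Fin n) : ℕ)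
    · have hjlt : ((π.symm astar : Fin n) : ℕ) < n := (π.symm astar).isLt
      have hfix := hΨfix π hj
      have e2 := hΨapp (Ψ π) (by rw [hfix]; exact hj)
      rw [e2, hfix, hΨapp π hj, mul_assoc, hρρ _ hj hjlt, mul_one]
    · have e1 : Ψ π = π := by simp only [hΨ, if_neg hj]
      rw [e1, e1]
  have hpair : ∀ π : Equiv.Perm (Fin n), astar ∉ A π t₀ →
      (astar ∉ A (Ψ π) t₀ ∧ ((Mv : NNReal) : ℝ) ≤ w π + w (Ψ π)) := by
    intro π hP
    have hj : t₀ ≤ ((π.symm astar : Fin n) : ℕ) := by rw [memA] at hP; omega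
    have hjlt : ((π.symm astar : Fin n) : ℕ) < n := (π.symm astar).isLt
    obtain ⟨hρ1, hρ2, hρ3⟩ := hρ _ hj hjlt
    have hsymmΨ : ∀ a : Fin n, (Ψ π).symm a = ρ ((π.symm astar : Fin n) : ℕ) (π.symm a) := by
      intro a
      rw [hΨapp π hj, hmulsymm, hρsymm _ hj hjlt]
    constructor
    · rw [memA, hΨfix π hj]; omega
    · have hXmask1 : (fun j' => if j' ∈ (A π t₀ ∪ {astar}) then sbar j' else 0)
          = mask (A π t₀ ∪ {astar}) := by
        funext j'; rw [hmask]
      have hXmask2 : (fun j' => if j' ∉ (A π t₀ ∪ {astar}) then sbar j' else 0)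
          = mask (Finset.univ \ (A π t₀ ∪ {astar})) := by
        funext j'
        rw [hmask]
        refine if_congr ?_ rfl rfl
        simp [Finset.mem_sdiff]
      have hsub1 := hsub astar sbar (A π t₀ ∪ {astar})
      rw [hXmask1, hXmask2] at hsub1
      have hsub2 : vbar astar (mask (Finset.univ \ (A π t₀ ∪ {astar})))
          ≤ vbar astar (mask (A (Ψ π) t₀ ∪ {astar})) := by
        apply hfmono
        intro a ha
        rw [Finset.mem_sdiff, Finset.mem_union, Finset.mem_singleton] at ha
        obtain ⟨-, ha2⟩ := ha
        push_neg at ha2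
        obtain ⟨hnA, hnas⟩ := ha2
        rw [Finset.mem_union]
        left
        rw [memA, hsymmΨ]
        apply hρ2
        · rw [memA] at hnA; omega
        · intro he
          apply hnas
          have h6 : π.symm a = π.symm astar := Fin.ext he
          rw [← π.apply_symm_apply a, h6, π.apply_symm_apply]
      have hfin : Mv ≤ vbar astar (mask (A π t₀ ∪ {astar}))
          + vbar astar (mask (A (Ψ π) t₀ ∪ {astar})) := by
        rw [hM]
        exact le_trans hsub1 (add_le_add_right hsub2 _)
      simp only [hw]
      exact_mod_cast hfin
  -- lower bound on W via the pairing
  have hsumΨ : (∑ π : Equiv.Perm (Fin n), (if astar ∉ A (Ψ π) t₀ then w (Ψ π) else 0)) = W := by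
    rw [hWdef]
    exact Fintype.sum_equiv (Function.Involutive.toPerm Ψ hΨinv) _ _ (fun x => rfl)
  have hn0 : (0:ℝ) < (n:ℝ) := by linarith
  have hWlb : ((Mv : NNReal) : ℝ) * ((m:ℝ) * (n.factorial : ℝ)) ≤ 2 * W * n := by
    have hpoint : ∀ π : Equiv.Perm (Fin n), (if astar ∉ A π t₀ then ((Mv:NNReal):ℝ) else 0)
        ≤ (if astar ∉ A π t₀ then w π else 0)
          + (if astar ∉ A (Ψ π) t₀ then w (Ψ π) else 0) := by
      intro π
      by_cases hP : astar ∉ A π t₀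
      · obtain ⟨hP2, hle⟩ := hpair π hP
        rw [if_pos hP, if_pos hP, if_pos hP2]
        exact hle
      · rw [if_neg hP, if_neg hP]
        rw [zero_add]
        by_cases h2 : astar ∉ A (Ψ π) t₀
        · rw [if_pos h2]; exact hwpos _
        · rw [if_neg h2]
    have hs : ∑ π : Equiv.Perm (Fin n),
        (if astar ∉ A π t₀ then ((Mv:NNReal):ℝ) else 0) ≤ 2 * W := by
      calc ∑ π : Equiv.Perm (Fin n), (if astar ∉ A π t₀ then ((Mv:NNReal):ℝ) else 0)
          ≤ ∑ π : Equiv.Perm (Fin n), ((if astar ∉ A π t₀ then w π else 0)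
            + (if astar ∉ A (Ψ π) t₀ then w (Ψ π) else 0)) :=
              Finset.sum_le_sum (fun π _ => hpoint π)
        _ = W + W := by rw [Finset.sum_add_distrib, ← hWdef, hsumΨ]
        _ = 2 * W := by ring
    have hMsum : ∑ π : Equiv.Perm (Fin n), (if astar ∉ A π t₀ then ((Mv:NNReal):ℝ) else 0)
        = ((Mv:NNReal):ℝ) * ∑ π : Equiv.Perm (Fin n),
            (if astar ∉ A π t₀ then (1:ℝ) else 0) := by
      rw [Finset.mul_sum]
      refine Finset.sum_congr rfl (fun π _ => ?_)
      by_cases h : astar ∉ A π t₀ <;> simp [h]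
    calc ((Mv:NNReal):ℝ) * ((m:ℝ) * (n.factorial:ℝ))
        = (n:ℝ) * (((Mv:NNReal):ℝ) * ∑ π : Equiv.Perm (Fin n),
            (if astar ∉ A π t₀ then (1:ℝ) else 0)) := by rw [← hWcnt]; ring
      _ = (n:ℝ) * (∑ π : Equiv.Perm (Fin n),
            (if astar ∉ A π t₀ then ((Mv:NNReal):ℝ) else 0)) := by rw [hMsum]
      _ ≤ (n:ℝ) * (2 * W) := mul_le_mul_of_nonneg_left hs (le_of_lt hn0)
      _ = 2 * W * n := by ring
  -- final assembly
  have hfact0 : (0:ℝ) < (n.factorial : ℝ) := by exact_mod_cast n.factorial_pos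
  have hpayLB : (k:ℝ) * W / m ≤ ∑ π : Equiv.Perm (Fin n), payoff π :=
    le_trans hgwlb (Finset.sum_le_sum (fun π _ => hL1 π))
  have hklb : 1/(4*Real.exp 1) - ε ≤ (k:ℝ)/(2*(n:ℝ)) := by
    have hεn : 1/(n:ℝ) ≤ ε := by
      have h7 : 1/ε ≤ (n:ℝ) :=
        le_trans (Nat.le_ceil _) (by exact_mod_cast (by omega : ⌈1/ε⌉₊ ≤ n))
      calc 1/(n:ℝ) ≤ 1/(1/ε) := one_div_le_one_div_of_le (by positivity) h7
        _ = ε := one_div_one_div ε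
    have h1 : (n:ℝ)/(2*Real.exp 1) - 1 < (k:ℝ) := by
      have := Nat.sub_one_lt_floor ((n:ℝ)/(2*Real.exp 1))
      rw [hkdef]
      exact_mod_cast this
    have h2n : (0:ℝ) < 2*(n:ℝ) := by positivity
    have heq : 1/(4*Real.exp 1) - 1/(2*(n:ℝ)) = ((n:ℝ)/(2*Real.exp 1) - 1)/(2*(n:ℝ)) := by
      field_simp
      ring
    have hA1 : 1/(4*Real.exp 1) - 1/(2*(n:ℝ)) ≤ (k:ℝ)/(2*(n:ℝ)) := by
      rw [heq, div_le_div_iff₀ h2n h2n]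
      nlinarith [h1, h2n]
    have hA2 : 1/(2*(n:ℝ)) ≤ ε := by
      have h8 : 1/(2*(n:ℝ)) ≤ 1/(n:ℝ) := by
        apply one_div_le_one_div_of_le hn0
        linarith
      linarith
    linarith
  have hnfinal : ((1/(4*Real.exp 1) - ε) * ((Mv:NNReal):ℝ)) * (n.factorial:ℝ)
      ≤ ∑ π : Equiv.Perm (Fin n), payoff π := by
    have hMnn : (0:ℝ) ≤ ((Mv:NNReal):ℝ) := NNReal.coe_nonneg _
    have hm0 : (0:ℝ) < (m:ℝ) := by exact_mod_cast (by omega : 0 < m)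
    have hstep2 : (k:ℝ)/(2*(n:ℝ)) * ((Mv:NNReal):ℝ) * (n.factorial:ℝ) ≤ (k:ℝ) * W / m := by
      rw [div_mul_eq_mul_div, div_mul_eq_mul_div, div_le_div_iff₀ (by positivity) hm0]
      have hk0 : (0:ℝ) ≤ (k:ℝ) := Nat.cast_nonneg k
      nlinarith [hWlb, mul_nonneg hk0 (sub_nonneg.2 hWlb)]
    calc ((1/(4*Real.exp 1) - ε) * ((Mv:NNReal):ℝ)) * (n.factorial:ℝ)
        ≤ ((k:ℝ)/(2*(n:ℝ)) * ((Mv:NNReal):ℝ)) * (n.factorial:ℝ) :=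
          mul_le_mul_of_nonneg_right (mul_le_mul_of_nonneg_right hklb hMnn) (le_of_lt hfact0)
      _ ≤ (k:ℝ) * W / m := hstep2
      _ ≤ ∑ π : Equiv.Perm (Fin n), payoff π := hpayLB
  rw [le_div_iff₀ hfact0]
  exact hnfinal
end

section
/- Let A be a finite set with |A| = n even, let a* ∈ A, and let f : 2^A → ℝ≥0 be a set function that is monotone (f(X) ≤ f(Y) whenever X ⊆ Y) and satisfies f(A) ≤ f(X) + f(A∖X) for every X ⊆ A. Let R be a uniformly random subset of A of size n/2. Then f(A) ≤ 2·E[f(R ∪ {a*})]. -/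
open Finset

/-!
Pair each half-size set `R` with its complement, which is again a half-size set. Subadditivity
and monotonicity give `f A ≤ f (R ∪ {a⋆}) + f (Rᶜ ∪ {a⋆})`, and averaging over all `R`
counts every set once as `R` and once as `Rᶜ`, so `f A` is at most twice the average.
-/

section

variable {α : Type*} [Fintype α] [DecidableEq α]

lemma sum_powersetCard_compl {M : Type*} [AddCommMonoid M] {k m : ℕ}
    (hkm : k + m = Fintype.card α) (g : Finset α → M) :
    ∑ R ∈ powersetCard k univ, g Rᶜ = ∑ R ∈ powersetCard m univ, g R := by
  refine sum_nbij' compl compl (fun R hR ↦ ?_) (fun R hR ↦ ?_) (by simp) (by simp) (by simp) <;>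
  · simp only [mem_powersetCard_univ, card_compl] at hR ⊢
    omega

lemma le_add_union_singleton_compl {f : Finset α → NNReal} (hmono : Monotone f)
    (hsub : ∀ X : Finset α, f univ ≤ f X + f Xᶜ) (a : α) (R : Finset α) :
    f univ ≤ f (R ∪ {a}) + f (Rᶜ ∪ {a}) :=
  (hsub R).trans (add_le_add (hmono subset_union_left) (hmono subset_union_left))

lemma card_mul_le_two_mul_sum_powersetCard_half {f : Finset α → NNReal} (hmono : Monotone f)
    (hsub : ∀ X : Finset α, f univ ≤ f X + f Xᶜ) (a : α) {k : ℕ}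
    (hk : Fintype.card α = k + k) :
    (#(powersetCard k (univ : Finset α)) : ℝ) * f univ ≤
      2 * ∑ R ∈ powersetCard k univ, (f (R ∪ {a}) : ℝ) :=
  calc (#(powersetCard k (univ : Finset α)) : ℝ) * f univ
      = ∑ _R ∈ powersetCard k univ, (f univ : ℝ) := by rw [sum_const, nsmul_eq_mul]
    _ ≤ ∑ R ∈ powersetCard k univ, ((f (R ∪ {a}) : ℝ) + f (Rᶜ ∪ {a})) :=
        sum_le_sum fun R _ ↦ by exact_mod_cast le_add_union_singleton_compl hmono hsub a R
    _ = 2 * ∑ R ∈ powersetCard k univ, (f (R ∪ {a}) : ℝ) := by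
        rw [sum_add_distrib, sum_powersetCard_compl hk.symm (fun R ↦ (f (R ∪ {a}) : ℝ))]
        ring

end

/-- for a monotone, partition-subadditive set function `f` on a finite set `A`
with `n` elements (`n` even) and a distinguished element `a⋆`, if `R` is a uniformly random
subset of `A` of size `n/2` then `f(A) ≤ 2 · E[f(R ∪ {a⋆})]`. -/
theorem stmt_11 {α : Type*} [Fintype α] [DecidableEq α] (n : ℕ)
    (hcard : Fintype.card α = n) (hn : Even n)
    (astar : α) (f : Finset α → NNReal)
    (hmono : Monotone f)
    (hsub : ∀ X : Finset α, f Finset.univ ≤ f X + f Xᶜ) :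
    (f Finset.univ : ℝ) ≤
      2 * ((∑ R ∈ Finset.powersetCard (n / 2) (Finset.univ : Finset α),
              (f (R ∪ {astar}) : ℝ)) /
            ((Finset.powersetCard (n / 2) (Finset.univ : Finset α)).card : ℝ)) := by
  have hhalf : Fintype.card α = n / 2 + n / 2 := by
    obtain ⟨k, rfl⟩ := hn
    omega
  have hpos : (0 : ℝ) < #(powersetCard (n / 2) (univ : Finset α)) := by
    exact_mod_cast card_pos.mpr (powersetCard_nonempty.mpr (by simp [hhalf]))
  rw [mul_div_assoc', le_div_iff₀ hpos, mul_comm]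
  exact card_mul_le_two_mul_sum_powersetCard_half hmono hsub astar hhalf
end

section
/- Let v : ℝ≥0ⁿ → ℝ≥0 be monotone and submodular over signals, let s ∈ ℝ≥0ⁿ be a fixed signal profile, and let 0 ≤ k ≤ n. If A is a uniformly random subset of [n] of size k, then E[v(s_A)] ≥ (k/n) · v(s), where s_A denotes the profile obtained from s by replacing s_i with 0 for every i ∉ A. -/
open Finset

noncomputable def sAfun {n : ℕ} (s : Fin n → NNReal) (A : Finset (Fin n)) : Fin n → NNReal :=
  fun i => if i ∈ A then s i else 0

lemma key_lemma {n : ℕ} (v : (Fin n → NNReal) → NNReal)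
    (hsubmod : ∀ (i : Fin n) (s s' : Fin n → NNReal), s' ≤ s →
      (v s : ℝ) - (v (Function.update s i (s' i)) : ℝ) ≤
        (v (Function.update s' i (s i)) : ℝ) - (v s' : ℝ))
    (s : Fin n → NNReal) (B C : Finset (Fin n)) (hBC : B ⊆ C) (j : Fin n) (hj : j ∉ C) :
    (v (sAfun s (insert j C)) : ℝ) - v (sAfun s C)
      ≤ (v (sAfun s (insert j B)) : ℝ) - v (sAfun s B) := by
  have hjB : j ∉ B := fun h => hj (hBC h)
  have hle : sAfun s B ≤ sAfun s (insert j C) := by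
    intro i
    unfold sAfun
    by_cases h : i ∈ B
    · rw [if_pos h, if_pos (mem_insert_of_mem (hBC h))]
    · rw [if_neg h]; exact zero_le
  have h := hsubmod j (sAfun s (insert j C)) (sAfun s B) hle
  have e1 : Function.update (sAfun s (insert j C)) j (sAfun s B j) = sAfun s C := by
    funext i
    by_cases hij : i = j
    · subst hij
      rw [Function.update_self]
      unfold sAfun
      rw [if_neg hjB, if_neg hj]
    · rw [Function.update_of_ne hij]
      unfold sAfun
      by_cases hiC : i ∈ C
      · rw [if_pos (mem_insert_of_mem hiC), if_pos hiC]
      · rw [if_neg (by simp [hij, hiC]), if_neg hiC]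
  have e2 : Function.update (sAfun s B) j (sAfun s (insert j C) j) = sAfun s (insert j B) := by
    funext i
    by_cases hij : i = j
    · subst hij
      rw [Function.update_self]
      unfold sAfun
      rw [if_pos (mem_insert_self _ _), if_pos (mem_insert_self _ _)]
    · rw [Function.update_of_ne hij]
      unfold sAfun
      by_cases hiB : i ∈ B
      · rw [if_pos hiB, if_pos (mem_insert_of_mem hiB)]
      · rw [if_neg hiB, if_neg (by simp [hij, hiB])]
  rw [e1, e2] at h
  exact h

lemma tele_lemma {n : ℕ} (v : (Fin n → NNReal) → NNReal)
    (hsubmod : ∀ (i : Fin n) (s s' : Fin n → NNReal), s' ≤ s →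
      (v s : ℝ) - (v (Function.update s i (s' i)) : ℝ) ≤
        (v (Function.update s' i (s i)) : ℝ) - (v s' : ℝ))
    (s : Fin n → NNReal) (A : Finset (Fin n)) (m : ℕ) (hm : m ≤ n) :
    (v (sAfun s ∅) : ℝ) + ∑ i ∈ A.filter (fun i => i.val < m),
        ((v (sAfun s (univ.filter (fun j => j.val < i.val+1))) : ℝ)
          - (v (sAfun s (univ.filter (fun j => j.val < i.val))) : ℝ))
      ≤ (v (sAfun s (A.filter (fun i => i.val < m))) : ℝ) := by
  induction m with
  | zero =>
    simp only [Nat.not_lt_zero, Finset.filter_false, Finset.sum_empty, add_zero, le_refl]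
  | succ m ih =>
    have hm' : m < n := hm
    have ihm := ih (Nat.le_of_lt hm')
    set j : Fin n := ⟨m, hm'⟩ with hj
    have hjval : (j : ℕ) = m := rfl
    by_cases hjA : j ∈ A
    · have hP : A.filter (fun i => i.val < m+1) = insert j (A.filter (fun i => i.val < m)) := by
        ext i
        simp only [mem_filter, mem_insert]
        constructor
        · rintro ⟨hiA, hilt⟩
          rcases Nat.lt_succ_iff_lt_or_eq.1 hilt with h | h
          · exact Or.inr ⟨hiA, h⟩
          · exact Or.inl (Fin.ext h)
        · rintro (rfl | ⟨hiA, h⟩)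
          · exact ⟨hjA, Nat.lt_succ_self m⟩
          · exact ⟨hiA, Nat.lt_succ_of_lt h⟩
      have hPu : (univ : Finset (Fin n)).filter (fun i => i.val < m+1)
          = insert j (univ.filter (fun i => i.val < m)) := by
        ext i
        simp only [mem_filter, mem_insert, mem_univ, true_and]
        constructor
        · intro hilt
          rcases Nat.lt_succ_iff_lt_or_eq.1 hilt with h | h
          · exact Or.inr h
          · exact Or.inl (Fin.ext h)
        · rintro (rfl | h)
          · exact Nat.lt_succ_self m
          · exact Nat.lt_succ_of_lt h
      have hjPA : j ∉ A.filter (fun i => i.val < m) := by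
        simp [hjval]
      have hjPu : j ∉ (univ : Finset (Fin n)).filter (fun i => i.val < m) := by
        simp [hjval]
      have hkey := key_lemma v hsubmod s (A.filter (fun i => i.val < m))
        (univ.filter (fun i => i.val < m))
        (Finset.filter_subset_filter _ (Finset.subset_univ A)) j hjPu
      rw [hP, Finset.sum_insert hjPA]
      have hstep : ((univ : Finset (Fin n)).filter (fun i => i.val < j.val+1))
          = insert j (univ.filter (fun i => i.val < m)) := by
        rw [hjval]; exact hPu
      have hstep2 : ((univ : Finset (Fin n)).filter (fun i => i.val < j.val))
          = univ.filter (fun i => i.val < m) := by rw [hjval]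
      rw [hstep, hstep2]
      linarith
    · have hP : A.filter (fun i => i.val < m+1) = A.filter (fun i => i.val < m) := by
        ext i
        simp only [mem_filter]
        constructor
        · rintro ⟨hiA, hilt⟩
          rcases Nat.lt_succ_iff_lt_or_eq.1 hilt with h | h
          · exact ⟨hiA, h⟩
          · exact absurd hiA (by rw [show i = j from Fin.ext h]; exact hjA)
        · rintro ⟨hiA, h⟩
          exact ⟨hiA, Nat.lt_succ_of_lt h⟩
      rw [hP]
      exact ihm

lemma count_lemma (n k : ℕ) (hk : 0 < k) (i : Fin n) :
    ((powersetCard k (univ : Finset (Fin n))).filter (fun A => i ∈ A)).card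
      = Nat.choose (n-1) (k-1) := by
  have : ((powersetCard k (univ : Finset (Fin n))).filter (fun A => i ∈ A)).card
      = (powersetCard (k-1) ((univ : Finset (Fin n)).erase i)).card := by
    apply Finset.card_bij (fun A _ => A.erase i)
    · intro A hA
      simp only [mem_filter, mem_powersetCard] at hA
      simp only [mem_powersetCard]
      refine ⟨fun x hx => ?_, ?_⟩
      · simp only [mem_erase] at hx ⊢; exact ⟨hx.1, mem_univ _⟩
      · rw [Finset.card_erase_of_mem hA.2, hA.1.2]
    · intro A hA B hB h
      simp only [mem_filter] at hA hB
      rw [← Finset.insert_erase hA.2, ← Finset.insert_erase hB.2, h]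
    · intro B hB
      simp only [mem_powersetCard] at hB
      have hiB : i ∉ B := fun h => (Finset.mem_erase.1 (hB.1 h)).1 rfl
      refine ⟨insert i B, ?_, by rw [Finset.erase_insert hiB]⟩
      simp only [mem_filter, mem_powersetCard]
      exact ⟨⟨fun x _ => mem_univ _,
        by rw [Finset.card_insert_of_notMem hiB, hB.2, Nat.sub_add_cancel hk]⟩,
        mem_insert_self _ _⟩
  rw [this, card_powersetCard, card_erase_of_mem (mem_univ _), card_univ, Fintype.card_fin]

/-- key sampling lemma: if `v` is monotone and submodular over signals and
`A` is a uniformly random subset of `[n]` of size `k`, then `E[v(s_A)] ≥ (k/n) · v(s)`. -/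
theorem stmt_12 (n : ℕ) (v : (Fin n → NNReal) → NNReal)
    (hmono : Monotone v)
    (hsubmod : ∀ (i : Fin n) (s s' : Fin n → NNReal), s' ≤ s →
      (v s : ℝ) - (v (Function.update s i (s' i)) : ℝ) ≤
        (v (Function.update s' i (s i)) : ℝ) - (v s' : ℝ))
    (s : Fin n → NNReal) (k : ℕ) (hk : k ≤ n) :
    ((k : ℝ) / (n : ℝ)) * (v s : ℝ) ≤
      (∑ A ∈ Finset.powersetCard k (Finset.univ : Finset (Fin n)),
          (v (fun i => if i ∈ A then s i else 0) : ℝ)) /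
        ((Finset.powersetCard k (Finset.univ : Finset (Fin n))).card : ℝ) := by
  classical
  rcases Nat.eq_zero_or_pos k with hk0 | hkpos
  · subst hk0
    simp only [Nat.cast_zero, zero_div, zero_mul]
    apply div_nonneg
    · exact Finset.sum_nonneg fun A _ => (v _).coe_nonneg
    · exact Nat.cast_nonneg _
  -- k ≥ 1, hence n ≥ 1
  have hnpos : 0 < n := lt_of_lt_of_le hkpos hk
  obtain ⟨k', rfl⟩ : ∃ k', k = k' + 1 := ⟨k - 1, (Nat.succ_pred_eq_of_pos hkpos).symm⟩
  obtain ⟨n', rfl⟩ : ∃ n', n = n' + 1 := ⟨n - 1, (Nat.succ_pred_eq_of_pos hnpos).symm⟩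
  set pk := Finset.powersetCard (k'+1) (Finset.univ : Finset (Fin (n'+1))) with hpk
  have hMcard : pk.card = Nat.choose (n'+1) (k'+1) := by
    rw [hpk, card_powersetCard, card_univ, Fintype.card_fin]
  set d : Fin (n'+1) → ℝ := fun i =>
    (v (sAfun s (univ.filter (fun j => j.val < i.val+1))) : ℝ)
      - (v (sAfun s (univ.filter (fun j => j.val < i.val))) : ℝ) with hd
  -- each d i is nonnegative
  have hd_nonneg : ∀ i, 0 ≤ d i := by
    intro i
    have : sAfun s (univ.filter (fun j => j.val < i.val))
        ≤ sAfun s (univ.filter (fun j => j.val < i.val+1)) := by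
      intro x
      unfold sAfun
      by_cases hx : x ∈ univ.filter (fun j => j.val < i.val)
      · rw [if_pos hx, if_pos ?_]
        simp only [mem_filter, mem_univ, true_and] at hx ⊢
        exact Nat.lt_succ_of_lt hx
      · rw [if_neg hx]; exact zero_le
    have := hmono this
    rw [hd]
    simp only [sub_nonneg]
    exact_mod_cast this
  -- sum of d over univ
  set g : ℕ → ℝ := fun t => (v (sAfun s (univ.filter (fun j => j.val < t))) : ℝ) with hg
  have hd_sum : ∑ i : Fin (n'+1), d i = (v s : ℝ) - (v (sAfun s ∅) : ℝ) := by
    have e0 : (univ : Finset (Fin (n'+1))).filter (fun j => j.val < 0) = ∅ := by simp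
    have en : (univ : Finset (Fin (n'+1))).filter (fun j => j.val < n'+1) = univ := by
      ext i; simp [i.is_lt, Nat.le_of_lt_succ i.is_lt]
    have es : sAfun s (univ : Finset (Fin (n'+1))) = s := by
      funext i; unfold sAfun; rw [if_pos (mem_univ i)]
    calc ∑ i : Fin (n'+1), d i
        = ∑ m ∈ Finset.range (n'+1), (g (m+1) - g m) :=
          Fin.sum_univ_eq_sum_range (fun m => g (m+1) - g m) (n'+1)
      _ = g (n'+1) - g 0 := Finset.sum_range_sub g (n'+1)
      _ = (v s : ℝ) - (v (sAfun s ∅) : ℝ) := by rw [hg]; simp only [e0, en, es]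
  -- pointwise lower bound for each subset A
  have hpoint : ∀ A ∈ pk,
      (v (sAfun s ∅) : ℝ) + ∑ i ∈ A, d i ≤ (v (sAfun s A) : ℝ) := by
    intro A _
    have := tele_lemma v hsubmod s A (n'+1) le_rfl
    have hfA : A.filter (fun i => i.val < n'+1) = A := by
      apply Finset.filter_true_of_mem
      intro i _
      exact i.is_lt
    rw [hfA] at this
    exact this
  -- sum over all A in pk
  have hsum : (pk.card : ℝ) * (v (sAfun s ∅) : ℝ)
        + ∑ A ∈ pk, ∑ i ∈ A, d i
      ≤ ∑ A ∈ pk, (v (sAfun s A) : ℝ) := by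
    have := Finset.sum_le_sum hpoint
    rw [Finset.sum_add_distrib, Finset.sum_const, nsmul_eq_mul] at this
    exact this
  -- compute the double sum
  have hswap : ∑ A ∈ pk, ∑ i ∈ A, d i
      = (Nat.choose n' k' : ℝ) * ∑ i : Fin (n'+1), d i := by
    have h1 : ∀ A ∈ pk, ∑ i ∈ A, d i = ∑ i : Fin (n'+1), if i ∈ A then d i else 0 := by
      intro A _
      rw [Finset.sum_ite_mem, Finset.univ_inter]
    rw [Finset.sum_congr rfl h1, Finset.sum_comm]
    rw [Finset.mul_sum]
    apply Finset.sum_congr rfl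
    intro i _
    rw [Finset.sum_ite, Finset.sum_const_zero, add_zero, Finset.sum_const, nsmul_eq_mul]
    congr 1
    have := count_lemma (n'+1) (k'+1) (Nat.succ_pos k') i
    simp only [Nat.add_sub_cancel] at this
    rw [this]
  -- choose identities
  have hchoose_le : (Nat.choose n' k' : ℝ) ≤ (pk.card : ℝ) := by
    rw [hMcard]
    exact_mod_cast (by rw [Nat.choose_succ_succ]; exact Nat.le_add_right _ _ :
      Nat.choose n' k' ≤ Nat.choose (n'+1) (k'+1))
  have hMpos : (0:ℝ) < (pk.card : ℝ) := by
    rw [hMcard]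
    exact_mod_cast Nat.choose_pos hk
  have hid : ((n':ℝ)+1) * (Nat.choose n' k' : ℝ) = (pk.card : ℝ) * ((k':ℝ)+1) := by
    rw [hMcard]
    exact_mod_cast Nat.add_one_mul_choose_eq n' k'
  -- final lower bound on the sum
  have hfinal : (Nat.choose n' k' : ℝ) * (v s : ℝ) ≤ ∑ A ∈ pk, (v (sAfun s A) : ℝ) := by
    have h0 : (0:ℝ) ≤ (v (sAfun s ∅) : ℝ) := (v _).coe_nonneg
    rw [hswap, hd_sum] at hsum
    nlinarith [hsum, hchoose_le, h0]
  -- conclude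
  have hrw : ∀ A : Finset (Fin (n'+1)),
      (fun i => if i ∈ A then s i else 0) = sAfun s A := fun A => rfl
  simp only [hrw]
  rw [le_div_iff₀ hMpos]
  calc ((k'+1 : ℕ) : ℝ) / ((n'+1 : ℕ) : ℝ) * (v s : ℝ) * (pk.card : ℝ)
      = (Nat.choose n' k' : ℝ) * (v s : ℝ) := by
        have hn1 : ((n':ℝ)+1) ≠ 0 := by positivity
        push_cast
        field_simp
        linear_combination -(v s : ℝ) * hid
    _ ≤ ∑ A ∈ pk, (v (sAfun s A) : ℝ) := hfinal
end
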